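/- arXiv:1906.00860 — 10 statements merged into one kernel-verified Lean document; each statement's English description precedes it below -/
import Mathlib

section
/- Let m0 > 0 and μ(r) = 1 − 2m0/r for r ∈ (2m0, ∞). Consider the ordinary differential equation (μΦ′)′ = (2m0/r³)·Φ on (2m0, ∞). Then: (i) Φ₁(r) := r and Φ₂(r) := (r/(2m0))·log(1 − 2m0/r) are solutions; (ii) every twice-differentiable solution Φ : (2m0, ∞) → ℂ can be written uniquely as Φ = c₁Φ₁ + c₂Φ₂ with c₁, c₂ ∈ ℂ; and (iii) if a solution Φ is bounded on some interval (2m0, 2m0 + δ) with δ > 0, then Φ = c₁Φ₁ for some c₁ ∈ ℂ, i.e. Φ(r) = c₁·r. -/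
open Set

namespace ZFAux

lemma const_of_deriv0 {a : ℝ} {f : ℝ → ℂ}
    (hf : ∀ x ∈ Set.Ioi a, HasDerivAt f 0 x) {x y : ℝ}
    (hx : x ∈ Set.Ioi a) (hy : y ∈ Set.Ioi a) : f x = f y := by
  apply (convex_Ioi a).is_const_of_fderivWithin_eq_zero
    (fun z hz => (hf z hz).differentiableAt.differentiableWithinAt) _ hx hy
  intro z hz
  rw [fderivWithin_of_isOpen isOpen_Ioi hz, (hf z hz).hasFDerivAt.fderiv]
  ext; simp

lemma hasDerivAt_ofReal (r : ℝ) : HasDerivAt (fun s : ℝ => (s:ℂ)) 1 r :=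
  (hasDerivAt_id r).ofReal_comp

variable {m0 : ℝ} (hm0 : 0 < m0) {r : ℝ} (hr : r ∈ Set.Ioi (2 * m0))

include hm0 hr

lemma hr0 : (0:ℝ) < r := lt_trans (by linarith) hr

lemma hμpos : (0:ℝ) < 1 - 2 * m0 / r := by
  have h0 := hr0 hm0 hr
  have : 2 * m0 / r < 1 := (div_lt_one h0).2 hr
  linarith

lemma hrC : (r:ℂ) ≠ 0 := by
  exact_mod_cast (hr0 hm0 hr).ne'

lemma hμC : (1 : ℂ) - 2 * (m0:ℂ) / (r:ℂ) ≠ 0 := by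
  have := (hμpos hm0 hr).ne'
  have h : ((1 - 2*m0/r : ℝ) : ℂ) ≠ 0 := by exact_mod_cast this
  convert h using 1; push_cast; ring

lemma hasDerivAt_μ : HasDerivAt (fun s : ℝ => (1 : ℂ) - 2 * (m0:ℂ) / (s:ℂ))
    (2 * (m0:ℂ) / (r:ℂ)^2) r := by
  have h1 := hasDerivAt_ofReal r
  have h2 := ((hasDerivAt_const r (2 * (m0:ℂ))).div h1 (hrC hm0 hr)).const_sub 1
  refine h2.congr_deriv ?_
  have := hrC hm0 hr
  ring

lemma hasDerivAt_μR : HasDerivAt (fun s : ℝ => 1 - 2 * m0 / s) (2 * m0 / r^2) r := by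
  have h2 : HasDerivAt (fun s : ℝ => 1 - 2 * m0 / s) (-(2 * m0 * (-(r^2)⁻¹))) r := by
    simp only [div_eq_mul_inv]
    exact ((hasDerivAt_inv (hr0 hm0 hr).ne').const_mul (2*m0)).const_sub 1
  convert h2 using 1
  have := (hr0 hm0 hr).ne'
  field_simp

lemma hasDerivAt_logterm : HasDerivAt (fun s : ℝ => Real.log (1 - 2 * m0 / s))
    ((1 - 2*m0/r)⁻¹ * (2 * m0 / r^2)) r :=
  by have := (Real.hasDerivAt_log (hμpos hm0 hr).ne').comp r (hasDerivAt_μR hm0 hr); exact this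

lemma hasDerivAt_logC : HasDerivAt (fun s : ℝ => ((Real.log (1 - 2 * m0 / s) : ℝ) : ℂ))
    ((((1 - 2*m0/r)⁻¹ * (2 * m0 / r^2) : ℝ)) : ℂ) r :=
  (hasDerivAt_logterm hm0 hr).ofReal_comp

lemma cast_id : (((1 - 2*m0/r)⁻¹ * (2 * m0 / r^2) : ℝ) : ℂ)
    = 2*(m0:ℂ) / ((r:ℂ) * ((r:ℂ) - 2*(m0:ℂ))) := by
  have h1 := (hr0 hm0 hr).ne'
  have h2 : r - 2*m0 ≠ 0 := by
    have := hr; simp only [Set.mem_Ioi] at this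
    have : (0:ℝ) < r - 2*m0 := by linarith
    exact this.ne'
  have h3 := (hμpos hm0 hr).ne'
  have h4 : (1 - 2*m0/r)⁻¹ * (2 * m0 / r^2) = 2*m0/(r*(r-2*m0)) := by
    field_simp
  rw [h4]; push_cast; ring

lemma hasDerivAt_phi2 :
    HasDerivAt (fun s : ℝ => (s:ℂ) / (2 * (m0:ℂ)) * (Real.log (1 - 2 * m0 / s) : ℂ))
      (1 / (2 * (m0:ℂ)) * (Real.log (1 - 2 * m0 / r) : ℂ)
        + (r:ℂ) / (2 * (m0:ℂ)) * (((1 - 2*m0/r)⁻¹ * (2 * m0 / r^2) : ℝ) : ℂ)) r := by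
  have hA : HasDerivAt (fun s : ℝ => (s:ℂ) / (2 * (m0:ℂ))) (1 / (2 * (m0:ℂ))) r :=
    (hasDerivAt_ofReal r).div_const _
  exact hA.mul (hasDerivAt_logC hm0 hr)

end ZFAux

namespace ZFAux2
open ZFAux

variable {m0 : ℝ}

/-- existence of the representation -/
lemma exists_rep (hm0 : 0 < m0) (Φ : ℝ → ℂ)
    (hd1 : ∀ r ∈ Set.Ioi (2 * m0), DifferentiableAt ℝ Φ r)
    (hd2 : ∀ r ∈ Set.Ioi (2 * m0), DifferentiableAt ℝ (deriv Φ) r)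
    (hode : ∀ r ∈ Set.Ioi (2 * m0),
      deriv (fun s : ℝ => (1 - 2 * (m0 : ℂ) / (s : ℂ)) * deriv Φ s) r
        = 2 * (m0 : ℂ) / (r : ℂ) ^ 3 * Φ r) :
    ∃ c₁ c₂ : ℂ, ∀ r ∈ Set.Ioi (2 * m0),
      Φ r = c₁ * (r:ℂ) + c₂ * ((r:ℂ) / (2 * (m0:ℂ)) * (Real.log (1 - 2 * m0 / r) : ℂ)) := by
  have hr0mem : (4 * m0) ∈ Set.Ioi (2 * m0) := by simp [Set.mem_Ioi]; linarith
  set W : ℝ → ℂ := fun s => (s:ℂ) * ((1 - 2 * (m0:ℂ) / (s:ℂ)) * deriv Φ s)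
      - (1 - 2 * (m0:ℂ) / (s:ℂ)) * Φ s with hW
  have hW0 : ∀ x ∈ Set.Ioi (2 * m0), HasDerivAt W 0 x := by
    intro x hx
    have hg : HasDerivAt (fun s : ℝ => (1 - 2 * (m0:ℂ) / (s:ℂ)) * deriv Φ s)
        (2 * (m0:ℂ) / (x:ℂ)^3 * Φ x) x := by
      have hdg : DifferentiableAt ℝ (fun s : ℝ => (1 - 2 * (m0:ℂ) / (s:ℂ)) * deriv Φ s) x :=
        ((hasDerivAt_μ hm0 hx).differentiableAt).mul (hd2 x hx)
      have := hdg.hasDerivAt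
      rwa [hode x hx] at this
    have h1 := (hasDerivAt_ofReal x).mul hg
    have h2 := (hasDerivAt_μ hm0 hx).mul ((hd1 x hx).hasDerivAt)
    have h3 := h1.sub h2
    refine h3.congr_deriv (Eq.symm ?_)
    have hx0 := hrC hm0 hx
    field_simp
    ring
  obtain ⟨k, hWk⟩ : ∃ k : ℂ, ∀ x ∈ Set.Ioi (2 * m0), W x = k :=
    ⟨W (4 * m0), fun x hx => const_of_deriv0 hW0 hx hr0mem⟩
  set h : ℝ → ℂ := fun s => Φ s / (s:ℂ)
      - k * ((2 * (m0:ℂ))⁻¹ * (Real.log (1 - 2 * m0 / s) : ℂ)) with hh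
  have hm0C : (m0:ℂ) ≠ 0 := by exact_mod_cast hm0.ne'
  have hh0 : ∀ x ∈ Set.Ioi (2 * m0), HasDerivAt h 0 x := by
    intro x hx
    have h1 := ((hd1 x hx).hasDerivAt).div (hasDerivAt_ofReal x) (hrC hm0 hx)
    have h2 := ((hasDerivAt_logC hm0 hx).const_mul ((2 * (m0:ℂ))⁻¹)).const_mul k
    have h3 := h1.sub h2
    refine h3.congr_deriv (Eq.symm ?_)
    have hx0 := hrC hm0 hx
    have hμx := hμC hm0 hx
    have hWx := hWk x hx
    rw [hW] at hWx
    have hxm : (x:ℂ) - 2 * (m0:ℂ) ≠ 0 := by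
      have : (0:ℝ) < x - 2 * m0 := by have := hx; simp [Set.mem_Ioi] at this; linarith
      exact_mod_cast this.ne'
    have hkx : k = (x:ℂ) * ((1 - 2 * (m0:ℂ) / (x:ℂ)) * deriv Φ x)
        - (1 - 2 * (m0:ℂ) / (x:ℂ)) * Φ x := by
      rw [← hWk x hx, hW]
    rw [hkx]
    push_cast
    field_simp
    ring
  obtain ⟨c₁, hhc⟩ : ∃ c₁ : ℂ, ∀ x ∈ Set.Ioi (2 * m0), h x = c₁ :=
    ⟨h (4 * m0), fun x hx => const_of_deriv0 hh0 hx hr0mem⟩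
  refine ⟨c₁, k, fun x hx => ?_⟩
  have hx0 := hrC hm0 hx
  have hcx := hhc x hx
  rw [hh] at hcx
  field_simp at hcx ⊢
  linear_combination hcx

end ZFAux2

/-- A twice-differentiable solution of the zero-frequency scalar `l = 1` master equation
`(μ Φ')' = (2 m0 / r³) Φ` on the Schwarzschild exterior `(2 m0, ∞)`,
where `μ(r) = 1 - 2 m0 / r`. -/
def IsZeroFreqSol (m0 : ℝ) (Φ : ℝ → ℂ) : Prop :=
  (∀ r ∈ Set.Ioi (2 * m0), DifferentiableAt ℝ Φ r) ∧
  (∀ r ∈ Set.Ioi (2 * m0), DifferentiableAt ℝ (deriv Φ) r) ∧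
  (∀ r ∈ Set.Ioi (2 * m0),
    deriv (fun s : ℝ => (1 - 2 * (m0 : ℂ) / (s : ℂ)) * deriv Φ s) r
      = 2 * (m0 : ℂ) / (r : ℂ) ^ 3 * Φ r)

namespace ZFSol
open ZFAux

variable {m0 : ℝ}

lemma sol1 (hm0 : 0 < m0) : IsZeroFreqSol m0 (fun s : ℝ => (s:ℂ)) := by
  have hd : deriv (fun s : ℝ => (s:ℂ)) = fun _ => 1 :=
    funext fun s => (hasDerivAt_ofReal s).deriv
  refine ⟨fun r _ => (hasDerivAt_ofReal r).differentiableAt, ?_, ?_⟩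
  · intro r _; rw [hd]; exact differentiableAt_const _
  · intro r hr
    have h1 : (fun s : ℝ => (1 - 2 * (m0:ℂ) / (s:ℂ)) * deriv (fun t : ℝ => (t:ℂ)) s)
        = fun s : ℝ => (1 - 2 * (m0:ℂ) / (s:ℂ)) := by
      funext s; rw [hd]; ring
    rw [h1, (hasDerivAt_μ hm0 hr).deriv]
    have := hrC hm0 hr
    field_simp

lemma sol2 (hm0 : 0 < m0) :
    IsZeroFreqSol m0 (fun s : ℝ => (s:ℂ) / (2 * (m0:ℂ)) * (Real.log (1 - 2 * m0 / s) : ℂ)) := by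
  set φ₂ : ℝ → ℂ := fun s : ℝ => (s:ℂ) / (2 * (m0:ℂ)) * (Real.log (1 - 2 * m0 / s) : ℂ) with hφ₂
  have hm0C : (m0:ℂ) ≠ 0 := by exact_mod_cast hm0.ne'
  have hdφ : ∀ s ∈ Set.Ioi (2 * m0), deriv φ₂ s
      = 1 / (2 * (m0:ℂ)) * (Real.log (1 - 2 * m0 / s) : ℂ)
        + (s:ℂ) / (2 * (m0:ℂ)) * (((1 - 2*m0/s)⁻¹ * (2 * m0 / s^2) : ℝ) : ℂ) :=
    fun s hs => (hasDerivAt_phi2 hm0 hs).deriv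
  refine ⟨fun r hr => (hasDerivAt_phi2 hm0 hr).differentiableAt, ?_, ?_⟩
  · intro r hr
    have hEdiff : DifferentiableAt ℝ (fun s : ℝ =>
        1 / (2 * (m0:ℂ)) * (Real.log (1 - 2 * m0 / s) : ℂ)
          + (s:ℂ) / (2 * (m0:ℂ)) * (((1 - 2*m0/s)⁻¹ * (2 * m0 / s^2) : ℝ) : ℂ)) r := by
      have hg : DifferentiableAt ℝ (fun s : ℝ => (1 - 2*m0/s)⁻¹ * (2 * m0 / s^2)) r := by
        have h1 : DifferentiableAt ℝ (fun s : ℝ => (1 - 2*m0/s)⁻¹) r :=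
          ((hasDerivAt_μR hm0 hr).differentiableAt).inv (hμpos hm0 hr).ne'
        have h2 : DifferentiableAt ℝ (fun s : ℝ => 2 * m0 / s^2) r :=
          (differentiableAt_const _).div (differentiableAt_pow 2)
            (pow_ne_zero 2 (hr0 hm0 hr).ne')
        exact h1.mul h2
      have hgC : DifferentiableAt ℝ (fun s : ℝ => (((1 - 2*m0/s)⁻¹ * (2 * m0 / s^2) : ℝ) : ℂ)) r :=
        Complex.ofRealCLM.differentiableAt.comp r hg
      exact (((hasDerivAt_logC hm0 hr).differentiableAt).const_mul _).add
        ((((hasDerivAt_ofReal r).differentiableAt).div_const _).mul hgC)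
    refine hEdiff.congr_of_eventuallyEq ?_
    exact Filter.eventuallyEq_of_mem (isOpen_Ioi.mem_nhds hr) hdφ
  · intro r hr
    have hPeq : ∀ s ∈ Set.Ioi (2 * m0),
        (1 - 2 * (m0:ℂ) / (s:ℂ)) * deriv φ₂ s
          = (1 - 2 * (m0:ℂ) / (s:ℂ)) * (Real.log (1 - 2 * m0 / s) : ℂ) / (2 * (m0:ℂ))
            + 1 / (s:ℂ) := by
      intro s hs
      rw [hdφ s hs, cast_id hm0 hs]
      have hs0 := hrC hm0 hs
      have hμs := hμC hm0 hs
      have hsm : (s:ℂ) - 2 * (m0:ℂ) ≠ 0 := by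
        have : (0:ℝ) < s - 2 * m0 := by have := hs; simp [Set.mem_Ioi] at this; linarith
        exact_mod_cast this.ne'
      push_cast
      field_simp
    have hEv : (fun s : ℝ => (1 - 2 * (m0:ℂ) / (s:ℂ)) * deriv φ₂ s) =ᶠ[nhds r]
        (fun s : ℝ => (1 - 2 * (m0:ℂ) / (s:ℂ)) * (Real.log (1 - 2 * m0 / s) : ℂ) / (2 * (m0:ℂ))
          + 1 / (s:ℂ)) :=
      Filter.eventuallyEq_of_mem (isOpen_Ioi.mem_nhds hr) hPeq
    rw [hEv.deriv_eq]
    have hP : HasDerivAt (fun s : ℝ =>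
        (1 - 2 * (m0:ℂ) / (s:ℂ)) * (Real.log (1 - 2 * m0 / s) : ℂ) / (2 * (m0:ℂ)) + 1 / (s:ℂ))
        ((2 * (m0:ℂ) / (r:ℂ)^2 * (Real.log (1 - 2 * m0 / r) : ℂ)
          + (1 - 2 * (m0:ℂ) / (r:ℂ)) * (((1 - 2*m0/r)⁻¹ * (2 * m0 / r^2) : ℝ) : ℂ)) / (2 * (m0:ℂ))
          + (0 * (r:ℂ) - 1 * 1) / (r:ℂ)^2) r := by
      exact (((hasDerivAt_μ hm0 hr).mul (hasDerivAt_logC hm0 hr)).div_const _).add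
        ((hasDerivAt_const r (1:ℂ)).div (hasDerivAt_ofReal r) (hrC hm0 hr))
    have hr0' := hrC hm0 hr
    have hμr := hμC hm0 hr
    have hrm : (r:ℂ) - 2 * (m0:ℂ) ≠ 0 := by
      have : (0:ℝ) < r - 2 * m0 := by have := hr; simp [Set.mem_Ioi] at this; linarith
      exact_mod_cast this.ne'
    have hsub : (1 - 2 * (m0:ℂ) / (r:ℂ)) * (2*(m0:ℂ) / ((r:ℂ) * ((r:ℂ) - 2*(m0:ℂ))))
        = 2*(m0:ℂ)/(r:ℂ)^2 := by
      field_simp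
    rw [hP.deriv, hφ₂, cast_id hm0 hr, hsub]
    field_simp
    ring

end ZFSol

/-- Classification of the solutions of the zero-frequency scalar `l = 1`
master equation `(μ Φ')' = (2 m0 / r³) Φ` on `(2 m0, ∞)`: (i) `Φ₁ = r` and
`Φ₂ = (r / 2 m0) log(1 - 2 m0 / r)` are solutions; (ii) every twice-differentiable solution
is a unique linear combination `c₁ Φ₁ + c₂ Φ₂`; (iii) a solution bounded near the horizon
is a multiple of `r`. -/
theorem l1_zero_frequency_classification (m0 : ℝ) (hm0 : 0 < m0)
    (Φ₁ Φ₂ : ℝ → ℂ)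
    (hΦ₁ : ∀ r : ℝ, Φ₁ r = (r : ℂ))
    (hΦ₂ : ∀ r : ℝ, Φ₂ r = (r : ℂ) / (2 * (m0 : ℂ)) * (Real.log (1 - 2 * m0 / r) : ℂ)) :
    IsZeroFreqSol m0 Φ₁ ∧ IsZeroFreqSol m0 Φ₂ ∧
    (∀ Φ : ℝ → ℂ, IsZeroFreqSol m0 Φ →
      ∃! c : ℂ × ℂ, ∀ r ∈ Ioi (2 * m0), Φ r = c.1 * Φ₁ r + c.2 * Φ₂ r) ∧
    (∀ Φ : ℝ → ℂ, IsZeroFreqSol m0 Φ →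
      (∃ δ > (0 : ℝ), ∃ M : ℝ, ∀ r ∈ Ioo (2 * m0) (2 * m0 + δ), ‖Φ r‖ ≤ M) →
      ∃ c₁ : ℂ, ∀ r ∈ Ioi (2 * m0), Φ r = c₁ * (r : ℂ)) := by
  have hf1 : Φ₁ = fun s : ℝ => (s:ℂ) := funext hΦ₁
  have hf2 : Φ₂ = fun s : ℝ => (s:ℂ) / (2 * (m0:ℂ)) * (Real.log (1 - 2 * m0 / s) : ℂ) :=
    funext hΦ₂
  subst hf1 hf2
  have hm0' : m0 ≠ 0 := hm0.ne'
  have hm0C : (m0:ℂ) ≠ 0 := by exact_mod_cast hm0'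
  have hmem1 : (4*m0) ∈ Set.Ioi (2*m0) := by simp only [Set.mem_Ioi]; linarith
  have hmem2 : (8*m0/3) ∈ Set.Ioi (2*m0) := by simp only [Set.mem_Ioi]; linarith
  have ha1 : Real.log (1 - 2*m0/(4*m0)) = -Real.log 2 := by
    rw [show (1 : ℝ) - 2*m0/(4*m0) = 2⁻¹ by field_simp; ring]
    exact Real.log_inv 2
  have ha2 : Real.log (1 - 2*m0/(8*m0/3)) = -(2 * Real.log 2) := by
    rw [show (1 : ℝ) - 2*m0/(8*m0/3) = 4⁻¹ by field_simp; ring, Real.log_inv]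
    rw [show (4:ℝ) = 2^2 by norm_num, Real.log_pow]
    push_cast; ring
  have hlg : (Real.log 2 : ℂ) ≠ 0 := by
    exact_mod_cast (Real.log_pos (by norm_num)).ne'
  have hlgC : Complex.log 2 ≠ 0 := by
    rw [show (2:ℂ) = ((2:ℝ):ℂ) by norm_num,
      ← Complex.ofReal_log (by norm_num : (0:ℝ) ≤ 2)]
    exact hlg
  refine ⟨ZFSol.sol1 hm0, ZFSol.sol2 hm0, ?_, ?_⟩
  · -- uniqueness of the representation
    intro Φ hsol
    obtain ⟨hd1, hd2, hode⟩ := hsol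
    obtain ⟨c₁, c₂, hrep⟩ := ZFAux2.exists_rep hm0 Φ hd1 hd2 hode
    refine ⟨(c₁, c₂), fun r hrmem => by simpa using hrep r hrmem, ?_⟩
    rintro ⟨d₁, d₂⟩ hd
    have e1 := (hd _ hmem1).symm.trans (hrep _ hmem1)
    have e2 := (hd _ hmem2).symm.trans (hrep _ hmem2)
    simp only [ha1, ha2] at e1 e2
    push_cast at e1 e2
    field_simp at e1 e2
    have hc2 : d₂ = c₂ := by
      have key : d₂ * ((m0:ℂ) * Complex.log 2) = c₂ * ((m0:ℂ) * Complex.log 2) := by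
        have hlog : ((Real.log 2 : ℝ) : ℂ) = Complex.log 2 := by
          rw [show (2:ℂ) = ((2:ℝ):ℂ) by norm_num, ← Complex.ofReal_log (by norm_num : (0:ℝ) ≤ 2)]
        linear_combination (m0:ℂ) * (e1 - 2 * e2) + (c₂ - d₂) * (m0:ℂ) * hlog
      exact mul_right_cancel₀ (mul_ne_zero hm0C hlgC) key
    have hc1 : d₁ = c₁ := by
      have h8 : (8*(m0:ℂ)^2) ≠ 0 := by
        have := pow_ne_zero 2 hm0C
        intro h; apply this; linear_combination (1/8 : ℂ) * h
      have key : d₁ * (8*(m0:ℂ)^2) = c₁ * (8*(m0:ℂ)^2) := by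
        rw [hc2] at e1
        linear_combination 4 * (m0:ℂ) * e1
      exact mul_right_cancel₀ h8 key
    simp [Prod.ext_iff, hc1, hc2]
  · -- boundedness near the horizon
    rintro Φ hsol ⟨δ, hδ, M, hM⟩
    obtain ⟨hd1, hd2, hode⟩ := hsol
    obtain ⟨c₁, c₂, hrep⟩ := ZFAux2.exists_rep hm0 Φ hd1 hd2 hode
    have hc2 : c₂ = 0 := by
      by_contra hne
      have hc2pos : 0 < ‖c₂‖ := norm_pos_iff.2 hne
      set C : ℝ := (M + ‖c₁‖*(2*m0+δ))/‖c₂‖ with hC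
      set ε : ℝ := min (δ/2) (2*m0 * Real.exp (-(C+1))) with hε
      have hε0 : 0 < ε := lt_min (by linarith) (by positivity)
      have hεδ : ε ≤ δ/2 := min_le_left _ _
      have hεe : ε ≤ 2*m0 * Real.exp (-(C+1)) := min_le_right _ _
      set r : ℝ := 2*m0 + ε with hrdef
      have hrIoo : r ∈ Set.Ioo (2*m0) (2*m0+δ) := by
        constructor
        · rw [hrdef]; linarith
        · rw [hrdef]; linarith
      have hrIoi : r ∈ Set.Ioi (2*m0) := hrIoo.1
      have hrpos : (0:ℝ) < r := by rw [hrdef]; linarith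
      have hb := hM r hrIoo
      have heq := hrep r hrIoi
      have hrle : r ≤ 2*m0 + δ := by rw [hrdef]; linarith
      have hbound : ‖c₂‖ * ‖(r:ℂ)/(2*(m0:ℂ)) * (Real.log (1-2*m0/r):ℂ)‖
          ≤ M + ‖c₁‖*(2*m0+δ) := by
        have hsplit : c₂ * ((r:ℂ)/(2*(m0:ℂ)) * (Real.log (1-2*m0/r):ℂ))
            = Φ r - c₁*(r:ℂ) := by rw [heq]; ring
        calc ‖c₂‖ * ‖(r:ℂ)/(2*(m0:ℂ)) * (Real.log (1-2*m0/r):ℂ)‖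
            = ‖c₂ * ((r:ℂ)/(2*(m0:ℂ)) * (Real.log (1-2*m0/r):ℂ))‖ := (norm_mul _ _).symm
          _ = ‖Φ r - c₁*(r:ℂ)‖ := by rw [hsplit]
          _ ≤ ‖Φ r‖ + ‖c₁*(r:ℂ)‖ := norm_sub_le _ _
          _ ≤ M + ‖c₁‖*(2*m0+δ) := by
              have h1 : ‖c₁*(r:ℂ)‖ = ‖c₁‖ * r := by
                rw [norm_mul, Complex.norm_real, Real.norm_eq_abs, abs_of_pos hrpos]
              rw [h1]
              have h2 : ‖c₁‖ * r ≤ ‖c₁‖*(2*m0+δ) :=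
                mul_le_mul_of_nonneg_left hrle (norm_nonneg _)
              linarith
      have hargpos : (0:ℝ) < 1 - 2*m0/r := ZFAux.hμpos hm0 hrIoi
      have hL : Real.log (1-2*m0/r) ≤ -(C+1) := by
        rw [Real.log_le_iff_le_exp hargpos]
        have harg : 1 - 2*m0/r = ε/(2*m0+ε) := by
          rw [hrdef]; field_simp; ring
        rw [harg]
        have h1 : ε/(2*m0+ε) ≤ ε/(2*m0) :=
          div_le_div_of_nonneg_left hε0.le (by linarith) (by linarith)
        have h2 : ε/(2*m0) ≤ Real.exp (-(C+1)) := by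
          rw [div_le_iff₀ (by linarith : (0:ℝ) < 2*m0)]
          calc ε ≤ 2*m0 * Real.exp (-(C+1)) := hεe
            _ = Real.exp (-(C+1)) * (2*m0) := by ring
        linarith
      have hnorm : ‖(r:ℂ)/(2*(m0:ℂ)) * (Real.log (1-2*m0/r):ℂ)‖
          = r/(2*m0) * |Real.log (1-2*m0/r)| := by
        rw [show (r:ℂ)/(2*(m0:ℂ)) * (Real.log (1-2*m0/r):ℂ)
            = ((r/(2*m0) * Real.log (1-2*m0/r) : ℝ) : ℂ) by push_cast; ring,
          Complex.norm_real, Real.norm_eq_abs, abs_mul,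
          abs_of_pos (by positivity : (0:ℝ) < r/(2*m0))]
      have h2 : C + 1 ≤ r/(2*m0) * |Real.log (1-2*m0/r)| := by
        have hge1 : 1 ≤ r/(2*m0) := by
          rw [le_div_iff₀ (by linarith : (0:ℝ) < 2*m0)]
          rw [hrdef]; linarith
        have habs : C + 1 ≤ |Real.log (1-2*m0/r)| := by
          have hna := neg_le_abs (Real.log (1-2*m0/r))
          linarith
        calc C + 1 ≤ 1 * |Real.log (1-2*m0/r)| := by rw [one_mul]; exact habs
          _ ≤ r/(2*m0) * |Real.log (1-2*m0/r)| :=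
            mul_le_mul_of_nonneg_right hge1 (abs_nonneg _)
      have final : ‖c₂‖ * (C+1) ≤ ‖c₂‖ * C := by
        calc ‖c₂‖ * (C+1) ≤ ‖c₂‖ * (r/(2*m0) * |Real.log (1-2*m0/r)|) :=
              mul_le_mul_of_nonneg_left h2 (norm_nonneg _)
          _ = ‖c₂‖ * ‖(r:ℂ)/(2*(m0:ℂ)) * (Real.log (1-2*m0/r):ℂ)‖ := by rw [hnorm]
          _ ≤ M + ‖c₁‖*(2*m0+δ) := hbound
          _ = ‖c₂‖ * C := by rw [hC, ← mul_div_assoc, mul_div_cancel_left₀ _ hc2pos.ne']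
      have := (mul_le_mul_iff_of_pos_left hc2pos).1 final
      linarith
    refine ⟨c₁, fun r hrmem => ?_⟩
    rw [hrep r hrmem, hc2]
    ring
end

section
/- Let V : ℝ → ℝ be continuous, bounded, and nonnegative (V ≥ 0). Let σ ∈ ℂ with Im σ > 0. Suppose u : ℝ → ℂ is twice differentiable, satisfies u″(x) = (V(x) − σ²)·u(x) for all x ∈ ℝ, and there are constants C > 0 and δ > 0 with |u(x)| + |u′(x)| ≤ C·e^{−δ|x|} for all x ∈ ℝ. Then u ≡ 0. -/
open Filter Topology Complex

/-- If `P` has nonnegative derivative `g` everywhere and tends to `0` at both ends,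
then `g ≡ 0`. -/
lemma key_monotone_zero (P g : ℝ → ℝ) (hP : ∀ x, HasDerivAt P (g x) x)
    (hg : ∀ x, 0 ≤ g x)
    (htop : Tendsto P atTop (𝓝 0)) (hbot : Tendsto P atBot (𝓝 0)) :
    ∀ x, g x = 0 := by
  have hmono : Monotone P :=
    monotone_of_deriv_nonneg (fun x => (hP x).differentiableAt) fun x => by
      rw [(hP x).deriv]; exact hg x
  have hle : ∀ x, P x ≤ 0 := fun x =>
    ge_of_tendsto htop (Filter.eventually_atTop.2 ⟨x, fun y hy => hmono hy⟩)
  have hge : ∀ x, 0 ≤ P x := fun x =>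
    le_of_tendsto hbot (Filter.eventually_atBot.2 ⟨x, fun y hy => hmono hy⟩)
  have hP0 : P = fun _ => (0 : ℝ) := funext fun x => le_antisymm (hle x) (hge x)
  intro x
  have : deriv P x = g x := (hP x).deriv
  rw [hP0] at this
  simpa using this.symm

/-- A Schrödinger operator `d²/dx² - V` on the real line with continuous,
bounded, nonnegative potential has no exponentially decaying (together with its derivative)
mode solutions `u'' = (V - σ²) u` with frequency `σ` in the open upper half-plane. -/
theorem no_modes_in_upper_half_plane
    (V : ℝ → ℝ) (hVcont : Continuous V) (hVbdd : ∃ M : ℝ, ∀ x : ℝ, |V x| ≤ M)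
    (hVnonneg : ∀ x : ℝ, 0 ≤ V x)
    (σ : ℂ) (hσ : 0 < σ.im)
    (u : ℝ → ℂ)
    (hu : ∀ x : ℝ, DifferentiableAt ℝ u x)
    (hu' : ∀ x : ℝ, DifferentiableAt ℝ (deriv u) x)
    (heq : ∀ x : ℝ, deriv (deriv u) x = ((V x : ℂ) - σ ^ 2) * u x)
    (C δ : ℝ) (hC : 0 < C) (hδ : 0 < δ)
    (hdecay : ∀ x : ℝ, ‖u x‖ + ‖deriv u x‖ ≤ C * Real.exp (-δ * |x|)) :
    ∀ x : ℝ, u x = 0 := by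
  -- the pairing f = conj u * u'
  set f : ℝ → ℂ := fun x => (starRingEnd ℂ) (u x) * deriv u x with hf_def
  have hf : ∀ x, HasDerivAt f
      (((‖deriv u x‖ ^ 2 : ℝ) : ℂ) + ((V x : ℂ) - σ ^ 2) * ((‖u x‖ ^ 2 : ℝ) : ℂ)) x := by
    intro x
    have h1 : HasDerivAt (fun y => (starRingEnd ℂ) (u y)) ((starRingEnd ℂ) (deriv u x)) x :=
      (hu x).hasDerivAt.star
    have h2 : HasDerivAt (deriv u) (deriv (deriv u) x) x := (hu' x).hasDerivAt
    have := h1.mul h2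
    refine this.congr_deriv ?_
    rw [heq x]
    have ekey : ∀ z : ℂ, (starRingEnd ℂ) z * z = ((‖z‖ ^ 2 : ℝ) : ℂ) := by
      intro z
      rw [← Complex.normSq_eq_conj_mul_self]
      norm_cast
      simp [Complex.normSq_eq_norm_sq]
    have e2 : (starRingEnd ℂ) (u x) * (((V x : ℂ) - σ ^ 2) * u x)
        = ((V x : ℂ) - σ ^ 2) * ((‖u x‖ ^ 2 : ℝ) : ℂ) := by
      rw [mul_comm ((starRingEnd ℂ) (u x)), mul_assoc,
        mul_comm (u x) ((starRingEnd ℂ) (u x)), ekey]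
    rw [ekey, e2]
  -- decay of u and u'
  have hu0 : Tendsto u atTop (𝓝 0) ∧ Tendsto u atBot (𝓝 0) ∧
      Tendsto (deriv u) atTop (𝓝 0) ∧ Tendsto (deriv u) atBot (𝓝 0) := by
    have hbound : ∀ x : ℝ, ‖u x‖ ≤ C * Real.exp (-δ * |x|) ∧
        ‖deriv u x‖ ≤ C * Real.exp (-δ * |x|) := by
      intro x
      constructor
      · exact le_trans (le_add_of_nonneg_right (norm_nonneg _)) (hdecay x)
      · exact le_trans (le_add_of_nonneg_left (norm_nonneg _)) (hdecay x)
    have hexp_top : Tendsto (fun x : ℝ => C * Real.exp (-δ * |x|)) atTop (𝓝 0) := by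
      have : Tendsto (fun x : ℝ => -δ * |x|) atTop atBot := by
        have h1 : Tendsto (fun x : ℝ => |x|) atTop atTop :=
          tendsto_abs_atTop_atTop
        exact Tendsto.const_mul_atTop_of_neg (neg_neg_iff_pos.2 hδ) h1
      have := (Real.tendsto_exp_atBot.comp this).const_mul C
      simpa using this
    have hexp_bot : Tendsto (fun x : ℝ => C * Real.exp (-δ * |x|)) atBot (𝓝 0) := by
      have : Tendsto (fun x : ℝ => -δ * |x|) atBot atBot := by
        have h1 : Tendsto (fun x : ℝ => |x|) atBot atTop := tendsto_abs_atBot_atTop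
        exact Tendsto.const_mul_atTop_of_neg (neg_neg_iff_pos.2 hδ) h1
      have := (Real.tendsto_exp_atBot.comp this).const_mul C
      simpa using this
    refine ⟨?_, ?_, ?_, ?_⟩
    · exact squeeze_zero_norm (fun x => (hbound x).1) hexp_top
    · exact squeeze_zero_norm (fun x => (hbound x).1) hexp_bot
    · exact squeeze_zero_norm (fun x => (hbound x).2) hexp_top
    · exact squeeze_zero_norm (fun x => (hbound x).2) hexp_bot
  obtain ⟨ht1, hb1, ht2, hb2⟩ := hu0
  have hftop : Tendsto f atTop (𝓝 0) := by
    have := ((Complex.continuous_conj.tendsto 0).comp ht1).mul ht2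
    simpa using this
  have hfbot : Tendsto f atBot (𝓝 0) := by
    have := ((Complex.continuous_conj.tendsto 0).comp hb1).mul hb2
    simpa using this
  -- norm-squared vanishing suffices
  have main : ∀ x, ‖u x‖ = 0 := by
    by_cases ha : σ.re = 0
    · -- purely imaginary σ: use real part
      set P : ℝ → ℝ := fun x => (f x).re with hP_def
      set g : ℝ → ℝ := fun x => ‖deriv u x‖ ^ 2 + (V x + σ.im ^ 2) * ‖u x‖ ^ 2 with hg_def
      have hPd : ∀ x, HasDerivAt P (g x) x := by
        intro x
        have := Complex.reCLM.hasFDerivAt.comp_hasDerivAt x (hf x)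
        refine this.congr_deriv ?_
        simp only [hg_def, Complex.reCLM_apply, Complex.add_re, Complex.mul_re, Complex.sub_re,
          Complex.sub_im, Complex.ofReal_re, Complex.ofReal_im, sq, Complex.mul_re,
          Complex.mul_im, ha]
        ring
      have hg0 : ∀ x, 0 ≤ g x := fun x => by
        have h1 : 0 ≤ V x + σ.im ^ 2 := add_nonneg (hVnonneg x) (sq_nonneg _)
        positivity
      have hk := key_monotone_zero P g hPd hg0
        (by simpa [hP_def, Function.comp_def] using (Complex.continuous_re.tendsto 0).comp hftop)
        (by simpa [hP_def, Function.comp_def] using (Complex.continuous_re.tendsto 0).comp hfbot)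
      intro x
      have hgx := hk x
      simp only [hg_def] at hgx
      have h1 : 0 ≤ ‖deriv u x‖ ^ 2 := sq_nonneg _
      have h2 : 0 ≤ V x * ‖u x‖ ^ 2 := mul_nonneg (hVnonneg x) (sq_nonneg _)
      have h4 : (0:ℝ) < σ.im ^ 2 := pow_pos hσ 2
      have h5 : ‖u x‖ ^ 2 = 0 := by nlinarith [sq_nonneg ‖u x‖]
      exact sq_eq_zero_iff.mp h5
    · -- Re σ ≠ 0: use imaginary part scaled
      set c : ℝ := (σ ^ 2).im with hc_def
      have hc : c ≠ 0 := by
        have : (σ ^ 2).im = 2 * σ.re * σ.im := by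
          rw [sq]; simp [Complex.mul_im]; ring
        rw [hc_def, this]
        exact mul_ne_zero (mul_ne_zero two_ne_zero ha) (ne_of_gt hσ)
      set P : ℝ → ℝ := fun x => -c * (f x).im with hP_def
      set g : ℝ → ℝ := fun x => c ^ 2 * ‖u x‖ ^ 2 with hg_def
      have hPd : ∀ x, HasDerivAt P (g x) x := by
        intro x
        have := (Complex.imCLM.hasFDerivAt.comp_hasDerivAt x (hf x)).const_mul (-c)
        refine this.congr_deriv ?_
        simp only [hg_def, hc_def, Complex.imCLM_apply, Complex.add_im, Complex.neg_im,
          Complex.mul_im, Complex.ofReal_re, Complex.ofReal_im, Complex.sub_im, Complex.sub_re]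
        ring
      have hg0 : ∀ x, 0 ≤ g x := fun x => by positivity
      have hk := key_monotone_zero P g hPd hg0
        (by have := ((Complex.continuous_im.tendsto 0).comp hftop).const_mul (-c)
            simpa [hP_def, Function.comp] using this)
        (by have := ((Complex.continuous_im.tendsto 0).comp hfbot).const_mul (-c)
            simpa [hP_def, Function.comp] using this)
      intro x
      have hgx := hk x
      simp only [hg_def] at hgx
      have hc2 : (0:ℝ) < c ^ 2 := by positivity
      have h5 : ‖u x‖ ^ 2 = 0 := by nlinarith [sq_nonneg ‖u x‖]
      exact sq_eq_zero_iff.mp h5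
  intro x
  exact norm_eq_zero.mp (main x)
end

section
/- Let V : ℝ → ℝ be continuous and let σ ∈ ℝ, σ ≠ 0. Suppose u : ℝ → ℂ is twice differentiable and satisfies u″(x) = (V(x) − σ²)·u(x) for all x ∈ ℝ. Suppose moreover that there are a₊, a₋ ∈ ℂ such that e^{−iσx}·u(x) → a₊ and e^{−iσx}·u′(x) → iσ·a₊ as x → +∞, and e^{iσx}·u(x) → a₋ and e^{iσx}·u′(x) → −iσ·a₋ as x → −∞. Then a₊ = 0 and a₋ = 0. -/
open Filter
open scoped Topology

/-- Boundary pairing (Wronskian) argument at real nonzero frequencies: an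
outgoing mode solution of `u'' = (V - σ²) u` on the real line, asymptotic to `a₊ e^{iσx}` at
`+∞` and to `a₋ e^{-iσx}` at `-∞`, has vanishing asymptotic amplitudes. -/
theorem no_real_modes_boundary_pairing
    (V : ℝ → ℝ) (hVcont : Continuous V)
    (σ : ℝ) (hσ : σ ≠ 0)
    (u : ℝ → ℂ)
    (hu : ∀ x : ℝ, DifferentiableAt ℝ u x)
    (hu' : ∀ x : ℝ, DifferentiableAt ℝ (deriv u) x)
    (heq : ∀ x : ℝ, deriv (deriv u) x = ((V x : ℂ) - (σ : ℂ) ^ 2) * u x)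
    (aPlus aMinus : ℂ)
    (huTop : Tendsto (fun x : ℝ => Complex.exp (-(Complex.I * (σ : ℂ) * (x : ℂ))) * u x)
      atTop (𝓝 aPlus))
    (hu'Top : Tendsto (fun x : ℝ => Complex.exp (-(Complex.I * (σ : ℂ) * (x : ℂ))) * deriv u x)
      atTop (𝓝 (Complex.I * (σ : ℂ) * aPlus)))
    (huBot : Tendsto (fun x : ℝ => Complex.exp (Complex.I * (σ : ℂ) * (x : ℂ)) * u x)
      atBot (𝓝 aMinus))
    (hu'Bot : Tendsto (fun x : ℝ => Complex.exp (Complex.I * (σ : ℂ) * (x : ℂ)) * deriv u x)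
      atBot (𝓝 (-(Complex.I * (σ : ℂ) * aMinus)))) :
    aPlus = 0 ∧ aMinus = 0 := by
  set C := starRingEnd ℂ with hC
  set W : ℝ → ℂ := fun x => C (u x) * deriv u x - u x * C (deriv u x) with hWdef
  have hW : ∀ x : ℝ, HasDerivAt W 0 x := by
    intro x
    have h1 : HasDerivAt u (deriv u x) x := (hu x).hasDerivAt
    have h2 : HasDerivAt (deriv u) (deriv (deriv u) x) x := (hu' x).hasDerivAt
    have h1c : HasDerivAt (fun y => C (u y)) (C (deriv u x)) x := by
      have := (Complex.conjCLE.toContinuousLinearMap.hasFDerivAt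
        (x := u x)).comp_hasDerivAt x h1
      exact this
    have h2c : HasDerivAt (fun y => C (deriv u y)) (C (deriv (deriv u) x)) x := by
      have := (Complex.conjCLE.toContinuousLinearMap.hasFDerivAt
        (x := deriv u x)).comp_hasDerivAt x h2
      exact this
    have h := (h1c.mul h2).sub (h1.mul h2c)
    convert h using 1
    · rfl
    · rfl
    rw [heq x]
    simp only [hC, map_mul, map_sub, map_pow, Complex.conj_ofReal]
    ring
  have hconst : ∀ x : ℝ, W x = W 0 := fun x =>
    is_const_of_deriv_eq_zero (fun z => (hW z).differentiableAt)
      (fun z => (hW z).deriv) x 0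
  have hconj : Continuous (C : ℂ → ℂ) := Complex.continuous_conj
  -- exponential facts
  have hEtop : ∀ x : ℝ, C (Complex.exp (-(Complex.I * (σ:ℂ) * x))) *
      Complex.exp (-(Complex.I * (σ:ℂ) * x)) = 1 := by
    intro x
    rw [← Complex.exp_conj, ← Complex.exp_add]
    simp only [map_neg, map_mul, Complex.conj_I, Complex.conj_ofReal]
    ring_nf
    exact Complex.exp_zero
  have hEbot : ∀ x : ℝ, C (Complex.exp (Complex.I * (σ:ℂ) * x)) *
      Complex.exp (Complex.I * (σ:ℂ) * x) = 1 := by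
    intro x
    rw [← Complex.exp_conj, ← Complex.exp_add]
    simp only [map_mul, Complex.conj_I, Complex.conj_ofReal]
    ring_nf
    exact Complex.exp_zero
  -- limit at +∞
  have hTopW : Tendsto W atTop
      (𝓝 (C aPlus * (Complex.I * σ * aPlus) - aPlus * C (Complex.I * σ * aPlus))) := by
    have h := (((hconj.tendsto _).comp huTop).mul hu'Top).sub
      (huTop.mul ((hconj.tendsto _).comp hu'Top))
    refine h.congr fun x => ?_
    simp only [Function.comp, map_mul]
    linear_combination (C (u x) * deriv u x - u x * C (deriv u x)) * hEtop x
  have hBotW : Tendsto W atBot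
      (𝓝 (C aMinus * (-(Complex.I * σ * aMinus)) -
        aMinus * C (-(Complex.I * σ * aMinus)))) := by
    have h := (((hconj.tendsto _).comp huBot).mul hu'Bot).sub
      (huBot.mul ((hconj.tendsto _).comp hu'Bot))
    refine h.congr fun x => ?_
    simp only [Function.comp, map_mul]
    linear_combination (C (u x) * deriv u x - u x * C (deriv u x)) * hEbot x
  have hWc : Tendsto W atTop (𝓝 (W 0)) := by
    refine Tendsto.congr (fun x => (hconst x).symm) tendsto_const_nhds
  have hWc' : Tendsto W atBot (𝓝 (W 0)) := by
    refine Tendsto.congr (fun x => (hconst x).symm) tendsto_const_nhds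
  have e1 : C aPlus * (Complex.I * σ * aPlus) - aPlus * C (Complex.I * σ * aPlus) = W 0 :=
    tendsto_nhds_unique hTopW hWc
  have e2 : C aMinus * (-(Complex.I * σ * aMinus)) -
      aMinus * C (-(Complex.I * σ * aMinus)) = W 0 :=
    tendsto_nhds_unique hBotW hWc'
  have key : (Complex.normSq aPlus : ℂ) + (Complex.normSq aMinus : ℂ) = 0 := by
    have h := e1.trans e2.symm
    simp only [hC, map_mul, map_neg, Complex.conj_I, Complex.conj_ofReal] at h
    have hiσ : (Complex.I * σ : ℂ) ≠ 0 := by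
      simp [Complex.I_ne_zero, hσ, Complex.ofReal_eq_zero]
    have h2 : (Complex.I * σ) * ((aPlus * C aPlus) + (aMinus * C aMinus)) = 0 := by
      simp only [hC]
      linear_combination h / 2
    rw [← Complex.mul_conj, ← Complex.mul_conj]
    have := mul_eq_zero.mp h2
    rcases this with h3 | h3
    · exact absurd h3 hiσ
    · simpa [hC] using h3
  have key' : Complex.normSq aPlus + Complex.normSq aMinus = 0 := by
    exact_mod_cast key
  have h1 : Complex.normSq aPlus = 0 := by
    nlinarith [Complex.normSq_nonneg aPlus, Complex.normSq_nonneg aMinus]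
  have h2 : Complex.normSq aMinus = 0 := by
    nlinarith [Complex.normSq_nonneg aPlus, Complex.normSq_nonneg aMinus]
  exact ⟨Complex.normSq_eq_zero.mp h1, Complex.normSq_eq_zero.mp h2⟩
end

section
/- Let a ∈ ℝ. Let w : [a, ∞) → ℝ be continuous, continuously differentiable on (a, ∞), with w(a) = 0 and w(r) > 0 for all r > a. Let q : (a, ∞) → ℝ be continuous with q ≥ 0. Suppose u : [a, ∞) → ℂ is continuously differentiable on [a, ∞), twice differentiable on (a, ∞), satisfies (w·u′)′(r) = q(r)·u(r) for all r > a, and satisfies u(r) → 0 and w(r)·u′(r)·conj(u(r)) → 0 as r → ∞. Then u ≡ 0 on [a, ∞). -/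
open Set Filter

/-- Uniqueness for divergence-form operators `(w u')' = q u` on `[a, ∞)`
with weight `w` vanishing at the endpoint `a` (the event horizon), positive in the interior,
and nonnegative potential `q`: a solution decaying at infinity together with its flux
`w u' conj(u)` vanishes identically. -/
theorem divergence_form_zero_energy_uniqueness
    (a : ℝ) (w q : ℝ → ℝ) (u u' : ℝ → ℂ)
    (hw_cont : ContinuousOn w (Ici a))
    (hw_diff : ∀ r ∈ Ioi a, DifferentiableAt ℝ w r)
    (hw'_cont : ContinuousOn (deriv w) (Ioi a))
    (hwa : w a = 0)
    (hw_pos : ∀ r ∈ Ioi a, 0 < w r)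
    (hq_cont : ContinuousOn q (Ioi a))
    (hq_nonneg : ∀ r ∈ Ioi a, 0 ≤ q r)
    (hu_deriv : ∀ r ∈ Ici a, HasDerivWithinAt u (u' r) (Ici a) r)
    (hu'_cont : ContinuousOn u' (Ici a))
    (hu'_diff : ∀ r ∈ Ioi a, DifferentiableAt ℝ u' r)
    (heq : ∀ r ∈ Ioi a,
      HasDerivAt (fun s : ℝ => (w s : ℂ) * u' s) ((q r : ℂ) * u r) r)
    (hu_decay : Tendsto u atTop (nhds 0))
    (hflux : Tendsto (fun r : ℝ => (w r : ℂ) * u' r * (starRingEnd ℂ) (u r))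
      atTop (nhds 0)) :
    ∀ r ∈ Ici a, u r = 0 := by
  -- continuity of u
  have hu_cont : ContinuousOn u (Ici a) := fun x hx => (hu_deriv x hx).continuousWithinAt
  -- the flux function F and its real part g
  set F : ℝ → ℂ := fun r => (w r : ℂ) * u' r * (starRingEnd ℂ) (u r) with hF
  set g : ℝ → ℝ := fun r => (F r).re with hg
  -- derivative of F at interior points
  have hF_deriv : ∀ r ∈ Ioi a,
      HasDerivAt F ((q r : ℂ) * u r * (starRingEnd ℂ) (u r)
        + (w r : ℂ) * u' r * (starRingEnd ℂ) (u' r)) r := by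
    intro r hr
    have hrI : Ici a ∈ nhds r := Ici_mem_nhds hr
    have hu : HasDerivAt u (u' r) r := (hu_deriv r (Ioi_subset_Ici_self hr)).hasDerivAt hrI
    have hcu : HasDerivAt (fun s => (starRingEnd ℂ) (u s)) ((starRingEnd ℂ) (u' r)) r := by
      have := (Complex.conjCLE.hasFDerivAt).comp_hasDerivAt r hu
      exact this
    exact (heq r hr).mul hcu
  -- real part of derivative
  have hg_deriv : ∀ r ∈ Ioi a,
      HasDerivAt g (q r * Complex.normSq (u r) + w r * Complex.normSq (u' r)) r := by
    intro r hr
    have := (Complex.reCLM.hasFDerivAt).comp_hasDerivAt r (hF_deriv r hr)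
    have hre : (((q r : ℂ) * u r * (starRingEnd ℂ) (u r)
        + (w r : ℂ) * u' r * (starRingEnd ℂ) (u' r))).re
        = q r * Complex.normSq (u r) + w r * Complex.normSq (u' r) := by
      rw [mul_assoc, mul_assoc, Complex.mul_conj, Complex.mul_conj]
      simp
    have h' : HasDerivAt (Complex.re ∘ F) (q r * Complex.normSq (u r) + w r * Complex.normSq (u' r)) r := by
      exact this.congr_deriv (by simpa using hre)
    exact h'
  -- continuity of F, g on Ici a
  have hF_cont : ContinuousOn F (Ici a) := by
    exact ((Complex.continuous_ofReal.comp_continuousOn hw_cont).mul hu'_cont).mul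
      (Complex.continuous_conj.comp_continuousOn hu_cont)
  have hg_cont : ContinuousOn g (Ici a) := Complex.continuous_re.comp_continuousOn hF_cont
  -- g is monotone on Ici a
  have hg_mono : MonotoneOn g (Ici a) := by
    apply monotoneOn_of_deriv_nonneg (convex_Ici a) hg_cont
    · intro x hx
      rw [interior_Ici] at hx
      exact (hg_deriv x hx).differentiableAt.differentiableWithinAt
    · intro x hx
      rw [interior_Ici] at hx
      rw [(hg_deriv x hx).deriv]
      exact add_nonneg (mul_nonneg (hq_nonneg x hx) (Complex.normSq_nonneg _))
        (mul_nonneg (hw_pos x hx).le (Complex.normSq_nonneg _))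
  -- g tends to 0 at infinity
  have hg_lim : Tendsto g atTop (nhds 0) := by
    have := (Complex.continuous_re.tendsto 0).comp hflux
    have h' : Tendsto (Complex.re ∘ F) atTop (nhds 0) := by simpa using this
    exact h'
  -- g a = 0
  have hga : g a = 0 := by simp [hg, hF, hwa]
  -- g = 0 on Ici a
  have hg_zero : ∀ r ∈ Ici a, g r = 0 := by
    intro r hr
    have h1 : g r ≤ 0 := by
      refine ge_of_tendsto hg_lim ?_
      filter_upwards [eventually_ge_atTop r] with s hs
      exact hg_mono hr (le_trans hr hs) hs
    have h2 : 0 ≤ g r := hga ▸ hg_mono (self_mem_Ici) hr hr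
    linarith
  -- hence the derivative of g vanishes on Ioi a, giving u' = 0 there
  have hu'_zero : ∀ r ∈ Ioi a, u' r = 0 := by
    intro r hr
    have hzero : HasDerivAt g 0 r := by
      refine (hasDerivAt_const r (0 : ℝ)).congr_of_eventuallyEq ?_
      filter_upwards [isOpen_Ioi.mem_nhds hr] with s hs
      exact hg_zero s (Ioi_subset_Ici_self hs)
    have heqd : q r * Complex.normSq (u r) + w r * Complex.normSq (u' r) = 0 :=
      (hg_deriv r hr).unique hzero
    have h1 : 0 ≤ q r * Complex.normSq (u r) :=
      mul_nonneg (hq_nonneg r hr) (Complex.normSq_nonneg _)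
    have h2 : 0 ≤ w r * Complex.normSq (u' r) :=
      mul_nonneg (hw_pos r hr).le (Complex.normSq_nonneg _)
    have h3 : w r * Complex.normSq (u' r) = 0 := by linarith
    have h4 : Complex.normSq (u' r) = 0 :=
      (mul_eq_zero.mp h3).resolve_left (hw_pos r hr).ne'
    exact Complex.normSq_eq_zero.mp h4
  -- u' a = 0 by continuity
  have hu'a : u' a = 0 := by
    have hcw : Tendsto u' (nhdsWithin a (Ioi a)) (nhds (u' a)) :=
      ((hu'_cont a self_mem_Ici).mono Ioi_subset_Ici_self)
    have hcz : Tendsto u' (nhdsWithin a (Ioi a)) (nhds 0) := by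
      refine Tendsto.congr' ?_ tendsto_const_nhds
      filter_upwards [self_mem_nhdsWithin] with s hs
      exact (hu'_zero s hs).symm
    exact tendsto_nhds_unique hcw hcz
  have hu'_all : ∀ r ∈ Ici a, u' r = 0 := by
    intro r hr
    rcases eq_or_lt_of_le (show a ≤ r from hr) with h | h
    · rw [← h]; exact hu'a
    · exact hu'_zero r h
  -- u is constant on Ici a
  have hconst : ∀ r ∈ Ici a, ∀ s, r ≤ s → u s = u r := by
    intro r hr s hrs
    have hcont' : ContinuousOn u (Icc r s) :=
      hu_cont.mono (Icc_subset_Ici_self.trans (Ici_subset_Ici.mpr hr))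
    have hder : ∀ x ∈ Ico r s, HasDerivWithinAt u 0 (Ici x) x := by
      intro x hx
      have hxa : x ∈ Ici a := le_trans hr hx.1
      have := (hu_deriv x hxa).mono (Ici_subset_Ici.mpr hxa)
      rwa [hu'_all x hxa] at this
    exact constant_of_has_deriv_right_zero hcont' hder s (right_mem_Icc.mpr hrs)
  intro r hr
  have hev : u =ᶠ[atTop] fun _ => u r := by
    filter_upwards [eventually_ge_atTop r] with s hs
    exact hconst r hr s hs
  have : Tendsto (fun _ : ℝ => u r) atTop (nhds 0) := hu_decay.congr' hev
  exact tendsto_nhds_unique tendsto_const_nhds this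
end

section
/- Let κ > 0, δ > 0, C₀ > 0, and set λ₋ = (1 − √(1 + 4κ))/2 and λ₊ = (1 + √(1 + 4κ))/2. Let W : [1, ∞) → ℂ be continuous with |W(x)| ≤ C₀·x^{−2−δ} for all x ≥ 1. Suppose u : [1, ∞) → ℂ is twice differentiable with u″(x) = (κ·x^{−2} + W(x))·u(x) for all x ≥ 1, and u(x) = o(x^{λ₊}) as x → ∞. Then there is a constant C such that |u(x)| ≤ C·x^{λ₋} for all x ≥ 1. -/
open Set Filter Asymptotics MeasureTheory intervalIntegral Topology

lemma aux_wronskian_hasDeriv (κ lam : ℝ) (hlam : lam * (lam - 1) = κ)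
    (W u u' : ℝ → ℂ)
    (hu : ∀ x ∈ Ici (1:ℝ), HasDerivWithinAt u (u' x) (Ici 1) x)
    (hu' : ∀ x ∈ Ici (1:ℝ), HasDerivWithinAt u'
      (((κ : ℂ) / (x:ℂ)^2 + W x) * u x) (Ici 1) x)
    {x : ℝ} (hx : x ∈ Ici (1:ℝ)) :
    HasDerivWithinAt (fun t => ((t ^ lam : ℝ) : ℂ) * u' t - ((lam * t ^ (lam - 1) : ℝ) : ℂ) * u t)
      (((x ^ lam : ℝ) : ℂ) * (W x * u x)) (Ici 1) x := by
  have hx0 : (0:ℝ) < x := lt_of_lt_of_le one_pos hx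
  have h1 : HasDerivAt (fun t : ℝ => ((t ^ lam : ℝ) : ℂ)) ((lam * x ^ (lam - 1) : ℝ) : ℂ) x :=
    (Real.hasDerivAt_rpow_const (Or.inl hx0.ne')).ofReal_comp
  have h2 : HasDerivAt (fun t : ℝ => ((lam * t ^ (lam - 1) : ℝ) : ℂ))
      ((lam * ((lam - 1) * x ^ (lam - 1 - 1)) : ℝ) : ℂ) x :=
    (((Real.hasDerivAt_rpow_const (p := lam - 1) (Or.inl hx0.ne')).const_mul lam)).ofReal_comp
  have hd := ((h1.hasDerivWithinAt.mul (hu' x hx)).sub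
    (h2.hasDerivWithinAt.mul (hu x hx)))
  convert hd using 1
  · rfl
  · rfl
  have hxC : ((x:ℂ))^2 ≠ 0 := pow_ne_zero _ (by exact_mod_cast hx0.ne')
  have hkey : (x : ℝ) ^ (lam - 1 - 1) * x ^ 2 = x ^ lam := by
    rw [← Real.rpow_natCast x 2, ← Real.rpow_add hx0]
    congr 1
    ring
  have hkeyC : ((x ^ (lam - 1 - 1) : ℝ) : ℂ) * ((x:ℂ))^2 = ((x ^ lam : ℝ) : ℂ) := by
    push_cast [← hkey]
    ring
  have hmain : ((x ^ lam : ℝ) : ℂ) * ((κ:ℂ)/((x:ℂ))^2)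
      = ((lam * ((lam - 1) * x ^ (lam - 1 - 1)) : ℝ) : ℂ) := by
    subst hlam
    rw [← hkeyC, mul_assoc, mul_div_assoc', mul_div_cancel_left₀ _ hxC]
    push_cast
    ring
  push_cast at hmain ⊢
  linear_combination (-(u x)) * hmain

lemma aux_ftc (F g : ℝ → ℂ)
    (hF : ∀ x ∈ Ici (1:ℝ), HasDerivWithinAt F (g x) (Ici 1) x)
    (hg : ContinuousOn g (Ici 1)) {a x : ℝ} (ha : 1 ≤ a) (hx : a ≤ x) :
    ∫ t in a..x, g t = F x - F a := by
  have hsub : Icc a x ⊆ Ici (1:ℝ) := fun t ht => le_trans ha ht.1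
  apply intervalIntegral.integral_eq_sub_of_hasDeriv_right_of_le hx
  · exact fun t ht => ((hF t (hsub ht)).continuousWithinAt).mono hsub
  · intro t ht
    exact (hF t (mem_Ici.mpr (le_trans ha (le_of_lt ht.1)))).mono
      (fun s hs => le_trans (le_trans ha (le_of_lt ht.1)) (le_of_lt hs))
  · exact (hg.mono (by rw [uIcc_of_le hx]; exact hsub)).intervalIntegrable

lemma aux_tail (h : ℝ → ℂ) (hc : ContinuousOn h (Ici 1)) (A e : ℝ) (hA : 0 ≤ A) (he : e < -1)
    (hb : ∀ t ∈ Ici (1:ℝ), ‖h t‖ ≤ A * t ^ e) {x : ℝ} (hx : 1 ≤ x) :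
    ‖∫ t in Ioi x, h t‖ ≤ A / (-(e+1)) * x ^ (e+1) := by
  have hx0 : (0:ℝ) < x := lt_of_lt_of_le one_pos hx
  have hint : Integrable (fun t : ℝ => A * t ^ e) (volume.restrict (Ioi x)) :=
    (integrableOn_Ioi_rpow_of_lt he hx0).const_mul A
  have hae : ∀ᵐ t ∂(volume.restrict (Ioi x)), ‖h t‖ ≤ A * t ^ e :=
    (ae_restrict_iff' measurableSet_Ioi).mpr
      (ae_of_all _ fun t ht => hb t (le_trans hx (le_of_lt ht)))
  calc ‖∫ t in Ioi x, h t‖ ≤ ∫ t in Ioi x, A * t ^ e :=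
        MeasureTheory.norm_integral_le_of_norm_le hint hae
    _ = A * (-x ^ (e+1) / (e+1)) := by
        rw [MeasureTheory.integral_const_mul, integral_Ioi_rpow_of_lt he hx0]
    _ = A / (-(e+1)) * x ^ (e+1) := by
        rw [div_neg]
        ring

lemma aux_ival (h : ℝ → ℂ) (A e : ℝ) (hA : 0 ≤ A) (he : (-1:ℝ) < e)
    (hb : ∀ t ∈ Ici (1:ℝ), ‖h t‖ ≤ A * t ^ e) {x : ℝ} (hx : 1 ≤ x) :
    ‖∫ t in (1:ℝ)..x, h t‖ ≤ A / (e+1) * x ^ (e+1) := by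
  have hx0 : (0:ℝ) < x := lt_of_lt_of_le one_pos hx
  have he1 : (0:ℝ) < e + 1 := by linarith
  have hgi : IntervalIntegrable (fun t : ℝ => A * t ^ e) volume 1 x := by
    apply ContinuousOn.intervalIntegrable
    apply ContinuousOn.mul continuousOn_const
    apply ContinuousOn.rpow_const continuousOn_id
    intro t ht
    rw [uIcc_of_le hx] at ht
    exact Or.inl (ne_of_gt (lt_of_lt_of_le one_pos ht.1))
  have hae : ∀ᵐ t ∂(volume.restrict (Set.uIoc 1 x)), ‖h t‖ ≤ A * t ^ e := by
    refine (ae_restrict_iff' measurableSet_uIoc).mpr (ae_of_all _ fun t ht => ?_)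
    rw [uIoc_of_le hx] at ht
    exact hb t (le_of_lt ht.1)
  have hx1 : (1:ℝ) ≤ x ^ (e+1) := by
    calc (1:ℝ) = 1 ^ (e+1) := (Real.one_rpow _).symm
      _ ≤ x ^ (e+1) := Real.rpow_le_rpow zero_le_one hx (le_of_lt he1)
  calc ‖∫ t in (1:ℝ)..x, h t‖ ≤ |∫ t in (1:ℝ)..x, A * t ^ e| :=
        intervalIntegral.norm_integral_le_abs_of_norm_le hae hgi
    _ = |A * ((x ^ (e+1) - 1 ^ (e+1)) / (e+1))| := by
        rw [intervalIntegral.integral_const_mul, integral_rpow (Or.inl he)]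
    _ ≤ A / (e+1) * x ^ (e+1) := by
        rw [Real.one_rpow, abs_of_nonneg
          (mul_nonneg hA (div_nonneg (by linarith) (le_of_lt he1)))]
        rw [div_mul_eq_mul_div, mul_div_assoc]
        gcongr
        linarith

lemma aux_ival' (h : ℝ → ℂ) (A e : ℝ) (hA : 0 ≤ A) (he : e < (-1:ℝ))
    (hb : ∀ t ∈ Ici (1:ℝ), ‖h t‖ ≤ A * t ^ e) {x : ℝ} (hx : 1 ≤ x) :
    ‖∫ t in (1:ℝ)..x, h t‖ ≤ A / (-(e+1)) := by
  have hx0 : (0:ℝ) < x := lt_of_lt_of_le one_pos hx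
  have he1 : e + 1 < 0 := by linarith
  have hgi : IntervalIntegrable (fun t : ℝ => A * t ^ e) volume 1 x := by
    apply ContinuousOn.intervalIntegrable
    apply ContinuousOn.mul continuousOn_const
    apply ContinuousOn.rpow_const continuousOn_id
    intro t ht
    rw [uIcc_of_le hx] at ht
    exact Or.inl (ne_of_gt (lt_of_lt_of_le one_pos ht.1))
  have hae : ∀ᵐ t ∂(volume.restrict (Set.uIoc 1 x)), ‖h t‖ ≤ A * t ^ e := by
    refine (ae_restrict_iff' measurableSet_uIoc).mpr (ae_of_all _ fun t ht => ?_)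
    rw [uIoc_of_le hx] at ht
    exact hb t (le_of_lt ht.1)
  have hx1 : x ^ (e+1) ≤ 1 := Real.rpow_le_one_of_one_le_of_nonpos hx (le_of_lt he1)
  have hx2 : (0:ℝ) < x ^ (e+1) := Real.rpow_pos_of_pos hx0 _
  calc ‖∫ t in (1:ℝ)..x, h t‖ ≤ |∫ t in (1:ℝ)..x, A * t ^ e| :=
        intervalIntegral.norm_integral_le_abs_of_norm_le hae hgi
    _ = |A * ((x ^ (e+1) - 1 ^ (e+1)) / (e+1))| := by
        rw [intervalIntegral.integral_const_mul, integral_rpow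
          (Or.inr ⟨by linarith, by rw [uIcc_of_le hx]; exact fun hmem => by linarith [hmem.1]⟩)]
    _ = A * ((1 - x ^ (e+1)) / (-(e+1))) := by
        rw [Real.one_rpow, abs_of_nonneg]
        · rw [div_neg]; ring
        · apply mul_nonneg hA
          rw [div_nonneg_iff]
          right
          constructor <;> linarith
    _ ≤ A / (-(e+1)) := by
        rw [mul_div_assoc']
        apply div_le_div_of_nonneg_right ?_ (by linarith) |>.trans_eq rfl
        nlinarith

example : True := trivial

set_option maxHeartbeats 1000000 in
/-- Indicial root argument: a solution of `u'' = (κ x⁻² + W) u` on `[1, ∞)`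
with `|W(x)| ≤ C₀ x^{-2-δ}` which grows more slowly than the large indicial rate `x^{λ₊}`
must decay at the small indicial rate `x^{λ₋}`, where `λ± = (1 ± √(1+4κ))/2`. -/
theorem indicial_root_decay
    (κ δ C₀ : ℝ) (hκ : 0 < κ) (hδ : 0 < δ) (hC₀ : 0 < C₀)
    (lamNeg lamPos : ℝ)
    (hlamNeg : lamNeg = (1 - Real.sqrt (1 + 4 * κ)) / 2)
    (hlamPos : lamPos = (1 + Real.sqrt (1 + 4 * κ)) / 2)
    (W : ℝ → ℂ) (hWcont : ContinuousOn W (Ici 1))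
    (hWbd : ∀ x ∈ Ici (1 : ℝ), ‖W x‖ ≤ C₀ * x ^ (-2 - δ))
    (u u' : ℝ → ℂ)
    (hu : ∀ x ∈ Ici (1 : ℝ), HasDerivWithinAt u (u' x) (Ici 1) x)
    (hu' : ∀ x ∈ Ici (1 : ℝ), HasDerivWithinAt u'
      (((κ : ℂ) / (x : ℂ) ^ 2 + W x) * u x) (Ici 1) x)
    (hgrowth : u =o[atTop] fun x : ℝ => x ^ lamPos) :
    ∃ C : ℝ, ∀ x ∈ Ici (1 : ℝ), ‖u x‖ ≤ C * x ^ lamNeg := by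
  have hs0 : (0:ℝ) < Real.sqrt (1 + 4 * κ) := Real.sqrt_pos.mpr (by linarith)
  set s : ℝ := Real.sqrt (1 + 4 * κ) with hsdef
  have hs2 : s ^ 2 = 1 + 4 * κ := Real.sq_sqrt (by linarith)
  have hs1 : 1 < s := by nlinarith
  have hsum : lamNeg + lamPos = 1 := by rw [hlamNeg, hlamPos]; ring
  have hdiff : lamPos - lamNeg = s := by rw [hlamNeg, hlamPos]; ring
  have hprodNeg : lamNeg * (lamNeg - 1) = κ := by rw [hlamNeg]; nlinarith
  have hprodPos : lamPos * (lamPos - 1) = κ := by rw [hlamPos]; nlinarith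
  have hlamPos1 : 1 < lamPos := by rw [hlamPos]; linarith
  have hlamNeg0 : lamNeg < 0 := by rw [hlamNeg]; linarith
  -- the small exponent δ'
  set n : ℕ := ⌈s / min δ 1⌉₊ with hndef
  set δ' : ℝ := s / ((n : ℝ) + 1/2) with hd'def
  have hmin : (0:ℝ) < min δ 1 := lt_min hδ one_pos
  have hn : s / min δ 1 ≤ (n : ℝ) := Nat.le_ceil _
  have hn2 : (0:ℝ) < (n:ℝ) + 1/2 := by positivity
  have hδ'0 : 0 < δ' := div_pos (by linarith) hn2
  have hδ'min : δ' ≤ min δ 1 := by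
    rw [hd'def, div_le_iff₀ hn2]
    have h1 : s ≤ min δ 1 * (n:ℝ) := by
      rw [mul_comm, ← div_le_iff₀ hmin]; exact hn
    nlinarith
  have hδ'δ : δ' ≤ δ := hδ'min.trans (min_le_left _ _)
  have hδ'1 : δ' ≤ 1 := hδ'min.trans (min_le_right _ _)
  have hsn : s = ((n:ℝ) + 1/2) * δ' := by rw [hd'def]; field_simp
  -- continuity
  have hu_cont : ContinuousOn u (Ici 1) := fun x hx => (hu x hx).continuousWithinAt
  have hu'_cont : ContinuousOn u' (Ici 1) := fun x hx => (hu' x hx).continuousWithinAt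
  have hWδ' : ∀ t ∈ Ici (1:ℝ), ‖W t‖ ≤ C₀ * t ^ (-2 - δ') := by
    intro t ht
    refine (hWbd t ht).trans (mul_le_mul_of_nonneg_left ?_ (le_of_lt hC₀))
    exact Real.rpow_le_rpow_of_exponent_le ht (by linarith)
  -- Wronskian-type quantities
  set P : ℝ → ℂ := fun t => ((t ^ lamNeg : ℝ) : ℂ) * u' t
      - ((lamNeg * t ^ (lamNeg - 1) : ℝ) : ℂ) * u t with hPdef
  set Q : ℝ → ℂ := fun t => ((t ^ lamPos : ℝ) : ℂ) * u' t
      - ((lamPos * t ^ (lamPos - 1) : ℝ) : ℂ) * u t with hQdef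
  set gN : ℝ → ℂ := fun t => ((t ^ lamNeg : ℝ) : ℂ) * (W t * u t) with hgNdef
  set gP : ℝ → ℂ := fun t => ((t ^ lamPos : ℝ) : ℂ) * (W t * u t) with hgPdef
  have hgcont : ∀ lam : ℝ, ContinuousOn (fun t => ((t ^ lam : ℝ) : ℂ) * (W t * u t)) (Ici 1) := by
    intro lam
    apply ContinuousOn.mul ?_ (hWcont.mul hu_cont)
    apply Complex.continuous_ofReal.comp_continuousOn
    exact ContinuousOn.rpow_const continuousOn_id
      (fun t ht => Or.inl (ne_of_gt (lt_of_lt_of_le one_pos ht)))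
  have hPftc : ∀ a x : ℝ, 1 ≤ a → a ≤ x → ∫ t in a..x, gN t = P x - P a :=
    fun a x ha hx => aux_ftc P gN
      (fun y hy => aux_wronskian_hasDeriv κ lamNeg hprodNeg W u u' hu hu' hy)
      (hgcont lamNeg) ha hx
  have hQftc : ∀ a x : ℝ, 1 ≤ a → a ≤ x → ∫ t in a..x, gP t = Q x - Q a :=
    fun a x ha hx => aux_ftc Q gP
      (fun y hy => aux_wronskian_hasDeriv κ lamPos hprodPos W u u' hu hu' hy)
      (hgcont lamPos) ha hx
  -- a priori bound
  obtain ⟨M₀, hM₀0, hM₀⟩ : ∃ M₀ : ℝ, 0 ≤ M₀ ∧ ∀ t ∈ Ici (1:ℝ), ‖u t‖ ≤ M₀ * t ^ lamPos := by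
    have h1 := (hgrowth.def one_pos)
    rw [eventually_atTop] at h1
    obtain ⟨X, hX⟩ := h1
    obtain ⟨C, hC⟩ := isCompact_Icc.exists_bound_of_continuousOn
      (hu_cont.mono (fun t ht => ht.1) : ContinuousOn u (Icc 1 (max X 1)))
    refine ⟨max C 1, le_trans zero_le_one (le_max_right _ _), fun t ht => ?_⟩
    have ht0 : (0:ℝ) < t := lt_of_lt_of_le one_pos ht
    have h1t : (1:ℝ) ≤ t ^ lamPos := by
      calc (1:ℝ) = 1 ^ lamPos := (Real.one_rpow _).symm
        _ ≤ t ^ lamPos := Real.rpow_le_rpow zero_le_one ht (by linarith)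
    by_cases htX : t ≤ max X 1
    · calc ‖u t‖ ≤ C := hC t ⟨ht, htX⟩
        _ ≤ max C 1 := le_max_left _ _
        _ = max C 1 * 1 := (mul_one _).symm
        _ ≤ max C 1 * t ^ lamPos := by
            apply mul_le_mul_of_nonneg_left h1t
            exact le_trans zero_le_one (le_max_right _ _)
    · have hXt : X ≤ t := le_trans (le_max_left X 1) (le_of_lt (not_le.mp htX))
      calc ‖u t‖ ≤ 1 * ‖t ^ lamPos‖ := hX t hXt
        _ = t ^ lamPos := by
            rw [one_mul, Real.norm_eq_abs, abs_of_pos (Real.rpow_pos_of_pos ht0 _)]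
        _ ≤ max C 1 * t ^ lamPos := by
            apply le_mul_of_one_le_left (by positivity) (le_max_right _ _)
  -- generic bound for the integrands
  have gbound : ∀ lam μ M : ℝ, 0 ≤ M → (∀ t ∈ Ici (1:ℝ), ‖u t‖ ≤ M * t ^ μ) →
      ∀ t ∈ Ici (1:ℝ), ‖((t ^ lam : ℝ) : ℂ) * (W t * u t)‖
        ≤ (C₀ * M) * t ^ (lam + μ - 2 - δ') := by
    intro lam μ M hM hb t ht
    have ht0 : (0:ℝ) < t := lt_of_lt_of_le one_pos ht
    rw [norm_mul, norm_mul, Complex.norm_real, Real.norm_eq_abs,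
      abs_of_pos (Real.rpow_pos_of_pos ht0 _)]
    calc t ^ lam * (‖W t‖ * ‖u t‖)
        ≤ t ^ lam * ((C₀ * t ^ (-2 - δ')) * (M * t ^ μ)) := by
          apply mul_le_mul_of_nonneg_left ?_ (le_of_lt (Real.rpow_pos_of_pos ht0 _))
          exact mul_le_mul (hWδ' t ht) (hb t ht) (norm_nonneg _)
            (by positivity)
      _ = (C₀ * M) * t ^ (lam + μ - 2 - δ') := by
          rw [show lam + μ - 2 - δ' = lam + ((-2 - δ') + μ) by ring,
            Real.rpow_add ht0, Real.rpow_add ht0]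
          ring
  -- integrability of gN on tails
  have hgNint : ∀ x : ℝ, 1 ≤ x → IntegrableOn gN (Ioi x) := by
    intro x hx
    have hx0 : (0:ℝ) < x := lt_of_lt_of_le one_pos hx
    apply Integrable.mono' (g := fun t : ℝ => (C₀ * M₀) * t ^ (-1 - δ'))
    · exact (integrableOn_Ioi_rpow_of_lt (by linarith) hx0).const_mul _
    · exact ((hgcont lamNeg).mono (fun t ht => le_trans hx (le_of_lt ht))).aestronglyMeasurable
        measurableSet_Ioi
    · refine (ae_restrict_iff' measurableSet_Ioi).mpr (ae_of_all _ fun t ht => ?_)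
      have ht1 : t ∈ Ici (1:ℝ) := le_trans hx (le_of_lt ht)
      have := gbound lamNeg lamPos M₀ hM₀0 hM₀ t ht1
      rw [show lamNeg + lamPos - 2 - δ' = -1 - δ' by linarith] at this
      exact this
  -- the basic identity
  have hident : ∀ x ∈ Ici (1:ℝ),
      (s:ℂ) * u x = ((x ^ lamPos : ℝ) : ℂ) * P x - ((x ^ lamNeg : ℝ) : ℂ) * Q x := by
    intro x hx
    have hx0 : (0:ℝ) < x := lt_of_lt_of_le one_pos hx
    have e2 : x ^ lamPos * (lamNeg * x ^ (lamNeg - 1)) = lamNeg := by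
      calc x ^ lamPos * (lamNeg * x ^ (lamNeg - 1))
          = lamNeg * (x ^ (lamPos + (lamNeg - 1))) := by rw [Real.rpow_add hx0]; ring
        _ = lamNeg := by
            rw [show lamPos + (lamNeg - 1) = 0 by linarith, Real.rpow_zero, mul_one]
    have e3 : x ^ lamNeg * (lamPos * x ^ (lamPos - 1)) = lamPos := by
      calc x ^ lamNeg * (lamPos * x ^ (lamPos - 1))
          = lamPos * (x ^ (lamNeg + (lamPos - 1))) := by rw [Real.rpow_add hx0]; ring
        _ = lamPos := by
            rw [show lamNeg + (lamPos - 1) = 0 by linarith, Real.rpow_zero, mul_one]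
    have e2C : ((x ^ lamPos : ℝ) : ℂ) * ((lamNeg * x ^ (lamNeg - 1) : ℝ) : ℂ) = (lamNeg : ℂ) := by
      exact_mod_cast congrArg (fun r : ℝ => (r : ℂ)) e2
    have e3C : ((x ^ lamNeg : ℝ) : ℂ) * ((lamPos * x ^ (lamPos - 1) : ℝ) : ℂ) = (lamPos : ℂ) := by
      exact_mod_cast congrArg (fun r : ℝ => (r : ℂ)) e3
    have hsC : (lamPos : ℂ) - (lamNeg : ℂ) = (s : ℂ) := by exact_mod_cast hdiff
    simp only [hPdef, hQdef]
    linear_combination (u x) * e2C - (u x) * e3C - (u x) * hsC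
  -- growth bound for Q
  have hQgrow : ∀ x ∈ Ici (1:ℝ), ‖Q x‖ ≤ ‖Q 1‖ + (C₀ * M₀) / (s - δ') * x ^ (s - δ') := by
    intro x hx
    have h2 : Q x = Q 1 + ∫ t in (1:ℝ)..x, gP t := by rw [hQftc 1 x le_rfl hx]; ring
    rw [h2]
    refine (norm_add_le _ _).trans ?_
    have he : (-1:ℝ) < lamPos + lamPos - 2 - δ' := by linarith
    have hi := aux_ival gP (C₀*M₀) (lamPos + lamPos - 2 - δ') (by positivity) he
      (gbound lamPos lamPos M₀ hM₀0 hM₀) hx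
    rw [show lamPos + lamPos - 2 - δ' + 1 = s - δ' by linarith] at hi
    linarith
  -- x^{λ₋ - λ₊} Q x → 0
  have hq_tend : Tendsto (fun x : ℝ => ((x ^ (lamNeg - lamPos) : ℝ) : ℂ) * Q x) atTop (𝓝 0) := by
    apply squeeze_zero_norm'
      (a := fun x : ℝ => ‖Q 1‖ * x ^ (-s) + ((C₀ * M₀) / (s - δ')) * x ^ (-δ'))
    · filter_upwards [eventually_ge_atTop (1:ℝ)] with x hx
      have hx0 : (0:ℝ) < x := lt_of_lt_of_le one_pos hx
      rw [norm_mul, Complex.norm_real, Real.norm_eq_abs,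
        abs_of_pos (Real.rpow_pos_of_pos hx0 _)]
      calc x ^ (lamNeg - lamPos) * ‖Q x‖
          ≤ x ^ (lamNeg - lamPos) * (‖Q 1‖ + (C₀ * M₀) / (s - δ') * x ^ (s - δ')) := by
            exact mul_le_mul_of_nonneg_left (hQgrow x hx)
              (le_of_lt (Real.rpow_pos_of_pos hx0 _))
        _ = ‖Q 1‖ * x ^ (lamNeg - lamPos)
            + ((C₀ * M₀) / (s - δ')) * (x ^ (lamNeg - lamPos) * x ^ (s - δ')) := by ring
        _ = ‖Q 1‖ * x ^ (-s) + ((C₀ * M₀) / (s - δ')) * x ^ (-δ') := by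
            rw [← Real.rpow_add hx0, show lamNeg - lamPos = -s by linarith,
              show -s + (s - δ') = -δ' by ring]
    · have h1 : Tendsto (fun x : ℝ => x ^ (-s)) atTop (𝓝 0) := tendsto_rpow_neg_atTop (by linarith)
      have h2 : Tendsto (fun x : ℝ => x ^ (-δ')) atTop (𝓝 0) := tendsto_rpow_neg_atTop hδ'0
      have := (h1.const_mul (‖Q 1‖)).add (h2.const_mul ((C₀ * M₀) / (s - δ')))
      simpa using this
  -- s u x x^{-λ₊} → 0
  have hulim0 : Tendsto (fun x : ℝ => ‖u x‖ * x ^ (-lamPos)) atTop (𝓝 0) := by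
    rw [Metric.tendsto_atTop]
    intro ε hε
    have h2 := hgrowth.def (half_pos hε)
    rw [eventually_atTop] at h2
    obtain ⟨X, hX⟩ := h2
    refine ⟨max X 1, fun x hx => ?_⟩
    have hx1 : (1:ℝ) ≤ x := le_trans (le_max_right X 1) hx
    have hx0 : (0:ℝ) < x := lt_of_lt_of_le one_pos hx1
    rw [Real.dist_eq, sub_zero, abs_of_nonneg (by positivity)]
    calc ‖u x‖ * x ^ (-lamPos)
        ≤ (ε/2 * ‖x ^ lamPos‖) * x ^ (-lamPos) := by
          exact mul_le_mul_of_nonneg_right (hX x (le_trans (le_max_left X 1) hx))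
            (le_of_lt (Real.rpow_pos_of_pos hx0 _))
      _ = ε/2 * (x ^ lamPos * x ^ (-lamPos)) := by
          rw [Real.norm_eq_abs, abs_of_pos (Real.rpow_pos_of_pos hx0 _)]; ring
      _ = ε/2 := by rw [← Real.rpow_add hx0]; simp
      _ < ε := by linarith
  have hulim : Tendsto (fun x : ℝ => (s:ℂ) * u x * ((x ^ (-lamPos) : ℝ) : ℂ)) atTop (𝓝 0) := by
    apply squeeze_zero_norm' (a := fun x : ℝ => s * (‖u x‖ * x ^ (-lamPos)))
    · filter_upwards [eventually_ge_atTop (1:ℝ)] with x hx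
      have hx0 : (0:ℝ) < x := lt_of_lt_of_le one_pos hx
      rw [norm_mul, norm_mul, Complex.norm_real, Complex.norm_real, Real.norm_eq_abs,
        Real.norm_eq_abs, abs_of_pos hs0, abs_of_pos (Real.rpow_pos_of_pos hx0 _), mul_assoc]
    · have := hulim0.const_mul s
      simpa using this
  -- P → 0
  have hPlim : Tendsto P atTop (𝓝 0) := by
    have hFlim : Tendsto (fun x : ℝ => P x - ((x ^ (lamNeg - lamPos) : ℝ) : ℂ) * Q x)
        atTop (𝓝 0) := by
      apply Tendsto.congr' ?_ hulim
      filter_upwards [eventually_ge_atTop (1:ℝ)] with x hx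
      have hx0 : (0:ℝ) < x := lt_of_lt_of_le one_pos hx
      have hid := hident x hx
      have c1 : ((x ^ (-lamPos) : ℝ) : ℂ) * ((x ^ lamPos : ℝ) : ℂ) = 1 := by
        rw [← Complex.ofReal_mul, ← Real.rpow_add hx0]
        norm_num
      have c2 : ((x ^ (-lamPos) : ℝ) : ℂ) * ((x ^ lamNeg : ℝ) : ℂ)
          = ((x ^ (lamNeg - lamPos) : ℝ) : ℂ) := by
        rw [← Complex.ofReal_mul, ← Real.rpow_add hx0, add_comm,
          show lamNeg + -lamPos = lamNeg - lamPos by ring]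
      calc (s:ℂ) * u x * ((x ^ (-lamPos) : ℝ) : ℂ)
          = (((x ^ lamPos : ℝ) : ℂ) * P x - ((x ^ lamNeg : ℝ) : ℂ) * Q x)
            * ((x ^ (-lamPos) : ℝ) : ℂ) := by rw [← hid]
        _ = (((x ^ (-lamPos) : ℝ) : ℂ) * ((x ^ lamPos : ℝ) : ℂ)) * P x
            - (((x ^ (-lamPos) : ℝ) : ℂ) * ((x ^ lamNeg : ℝ) : ℂ)) * Q x := by ring
        _ = P x - ((x ^ (lamNeg - lamPos) : ℝ) : ℂ) * Q x := by rw [c1, c2]; ring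
    have := hFlim.add hq_tend
    simp only [sub_add_cancel] at this
    simpa using this
  -- representation of P as a tail integral
  have hPrep : ∀ x ∈ Ici (1:ℝ), P x = -∫ t in Ioi x, gN t := by
    intro x hx
    have h1 : Tendsto (fun y => P x + ∫ t in x..y, gN t) atTop
        (𝓝 (P x + ∫ t in Ioi x, gN t)) :=
      tendsto_const_nhds.add (intervalIntegral_tendsto_integral_Ioi x (hgNint x hx) tendsto_id)
    have h2 : Tendsto P atTop (𝓝 (P x + ∫ t in Ioi x, gN t)) := by
      apply Tendsto.congr' ?_ h1
      filter_upwards [eventually_ge_atTop x] with y hy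
      rw [hPftc x y hx hy]; ring
    have h3 := tendsto_nhds_unique h2 hPlim
    exact eq_neg_of_add_eq_zero_left h3
  -- the contraction step
  have step : ∀ μ M : ℝ, 0 ≤ M → μ ≤ lamPos → lamNeg < μ → μ - lamNeg ≠ δ' →
      (∀ t ∈ Ici (1:ℝ), ‖u t‖ ≤ M * t ^ μ) →
      ∃ M' : ℝ, 0 ≤ M' ∧ ∀ t ∈ Ici (1:ℝ), ‖u t‖ ≤ M' * t ^ (max (μ - δ') lamNeg) := by
    intro μ M hM hμP hμN hne hb
    have hbN : ∀ t ∈ Ici (1:ℝ), ‖gN t‖ ≤ (C₀*M) * t ^ (lamNeg + μ - 2 - δ') :=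
      fun t ht => gbound lamNeg μ M hM hb t ht
    have hbP : ∀ t ∈ Ici (1:ℝ), ‖gP t‖ ≤ (C₀*M) * t ^ (lamPos + μ - 2 - δ') :=
      fun t ht => gbound lamPos μ M hM hb t ht
    have heN : lamNeg + μ - 2 - δ' < -1 := by linarith
    have htail : ∀ x ∈ Ici (1:ℝ), ‖∫ t in Ioi x, gN t‖
        ≤ (C₀*M) / (-(lamNeg + μ - 1 - δ')) * x ^ (lamNeg + μ - 1 - δ') := by
      intro x hx
      have := aux_tail gN (hgcont lamNeg) (C₀*M) _ (by positivity) heN hbN hx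
      rw [show lamNeg + μ - 2 - δ' + 1 = lamNeg + μ - 1 - δ' by ring] at this
      exact this
    set c1 : ℝ := (C₀*M) / (-(lamNeg + μ - 1 - δ')) with hc1
    have hc10 : 0 ≤ c1 := div_nonneg (by positivity) (by linarith)
    have main : ∀ x ∈ Ici (1:ℝ), s * ‖u x‖ ≤ c1 * x ^ (μ - δ') + x ^ lamNeg * ‖Q x‖ := by
      intro x hx
      have hx0 : (0:ℝ) < x := lt_of_lt_of_le one_pos hx
      have h1 : s * ‖u x‖ = ‖(s:ℂ) * u x‖ := by
        rw [norm_mul, Complex.norm_real, Real.norm_eq_abs, abs_of_pos hs0]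
      rw [h1, hident x hx]
      refine (norm_sub_le _ _).trans ?_
      rw [norm_mul, norm_mul, Complex.norm_real, Complex.norm_real, Real.norm_eq_abs,
        Real.norm_eq_abs, abs_of_pos (Real.rpow_pos_of_pos hx0 _),
        abs_of_pos (Real.rpow_pos_of_pos hx0 _)]
      have h2 : ‖P x‖ ≤ c1 * x ^ (lamNeg + μ - 1 - δ') := by
        rw [hPrep x hx, norm_neg]; exact htail x hx
      have h3 : x ^ lamPos * ‖P x‖ ≤ c1 * x ^ (μ - δ') := by
        calc x ^ lamPos * ‖P x‖ ≤ x ^ lamPos * (c1 * x ^ (lamNeg + μ - 1 - δ')) :=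
              mul_le_mul_of_nonneg_left h2 (le_of_lt (Real.rpow_pos_of_pos hx0 _))
          _ = c1 * (x ^ lamPos * x ^ (lamNeg + μ - 1 - δ')) := by ring
          _ = c1 * x ^ (μ - δ') := by
              rw [← Real.rpow_add hx0,
                show lamPos + (lamNeg + μ - 1 - δ') = μ - δ' by linarith]
      linarith [h3]
    rcases lt_or_gt_of_ne hne with hlt | hgt
    · -- μ - lamNeg < δ' : decay at rate lamNeg
      have hePlt : lamPos + μ - 2 - δ' < -1 := by linarith
      set c2 : ℝ := ‖Q 1‖ + (C₀*M) / (-(lamPos + μ - 2 - δ' + 1)) with hc2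
      have hc20 : 0 ≤ c2 := by
        rw [hc2]
        have h0 : (0:ℝ) ≤ (C₀*M) / (-(lamPos + μ - 2 - δ' + 1)) :=
          div_nonneg (by positivity) (by linarith)
        exact add_nonneg (norm_nonneg _) h0
      have hQb : ∀ x ∈ Ici (1:ℝ), ‖Q x‖ ≤ c2 := by
        intro x hx
        have h2 : Q x = Q 1 + ∫ t in (1:ℝ)..x, gP t := by rw [hQftc 1 x le_rfl hx]; ring
        rw [h2]
        refine (norm_add_le _ _).trans ?_
        have := aux_ival' gP (C₀*M) _ (by positivity) hePlt hbP hx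
        rw [hc2]; linarith
      refine ⟨(c1 + c2)/s, div_nonneg (by linarith) (le_of_lt hs0), fun t ht => ?_⟩
      have ht0 : (0:ℝ) < t := lt_of_lt_of_le one_pos ht
      have hmax : max (μ - δ') lamNeg = lamNeg := max_eq_right (by linarith)
      rw [hmax]
      have hmm := main t ht
      have h4 : t ^ (μ - δ') ≤ t ^ lamNeg :=
        Real.rpow_le_rpow_of_exponent_le ht (by linarith)
      have h5 : s * ‖u t‖ ≤ c1 * t ^ lamNeg + c2 * t ^ lamNeg := by
        have h6 : t ^ lamNeg * ‖Q t‖ ≤ t ^ lamNeg * c2 :=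
          mul_le_mul_of_nonneg_left (hQb t ht) (le_of_lt (Real.rpow_pos_of_pos ht0 _))
        have h7 : c1 * t ^ (μ - δ') ≤ c1 * t ^ lamNeg := mul_le_mul_of_nonneg_left h4 hc10
        linarith
      rw [div_mul_eq_mul_div, le_div_iff₀ hs0]
      linarith
    · -- δ' < μ - lamNeg : gain δ'
      have hePgt : (-1:ℝ) < lamPos + μ - 2 - δ' := by linarith
      set c2 : ℝ := (C₀*M) / (lamPos + μ - 1 - δ') with hc2
      have hc20 : 0 ≤ c2 := div_nonneg (by positivity) (by linarith)
      have hQb : ∀ x ∈ Ici (1:ℝ), ‖Q x‖ ≤ ‖Q 1‖ + c2 * x ^ (lamPos + μ - 1 - δ') := by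
        intro x hx
        have h2 : Q x = Q 1 + ∫ t in (1:ℝ)..x, gP t := by rw [hQftc 1 x le_rfl hx]; ring
        rw [h2]
        refine (norm_add_le _ _).trans ?_
        have := aux_ival gP (C₀*M) _ (by positivity) hePgt hbP hx
        rw [show lamPos + μ - 2 - δ' + 1 = lamPos + μ - 1 - δ' by ring] at this
        linarith
      refine ⟨(c1 + (‖Q 1‖ + c2))/s,
        div_nonneg (by positivity) (le_of_lt hs0), fun t ht => ?_⟩
      have ht0 : (0:ℝ) < t := lt_of_lt_of_le one_pos ht
      have hmax : max (μ - δ') lamNeg = μ - δ' := max_eq_left (by linarith)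
      rw [hmax]
      have hmm := main t ht
      have h6 : t ^ lamNeg * ‖Q t‖ ≤ (‖Q 1‖ + c2) * t ^ (μ - δ') := by
        calc t ^ lamNeg * ‖Q t‖
            ≤ t ^ lamNeg * (‖Q 1‖ + c2 * t ^ (lamPos + μ - 1 - δ')) :=
              mul_le_mul_of_nonneg_left (hQb t ht) (le_of_lt (Real.rpow_pos_of_pos ht0 _))
          _ = ‖Q 1‖ * t ^ lamNeg + c2 * (t ^ lamNeg * t ^ (lamPos + μ - 1 - δ')) := by ring
          _ ≤ ‖Q 1‖ * t ^ (μ - δ') + c2 * t ^ (μ - δ') := by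
              have ha : t ^ lamNeg ≤ t ^ (μ - δ') :=
                Real.rpow_le_rpow_of_exponent_le ht (by linarith)
              have hbq : t ^ lamNeg * t ^ (lamPos + μ - 1 - δ') = t ^ (μ - δ') := by
                rw [← Real.rpow_add ht0,
                  show lamNeg + (lamPos + μ - 1 - δ') = μ - δ' by linarith]
              rw [hbq]
              have := mul_le_mul_of_nonneg_left ha (norm_nonneg (Q 1))
              linarith
          _ = (‖Q 1‖ + c2) * t ^ (μ - δ') := by ring
      rw [div_mul_eq_mul_div, le_div_iff₀ hs0]
      linarith
  -- iterate
  have hind : ∀ k : ℕ, ∃ M : ℝ, 0 ≤ M ∧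
      ∀ t ∈ Ici (1:ℝ), ‖u t‖ ≤ M * t ^ (max (lamPos - (k:ℝ) * δ') lamNeg) := by
    intro k
    induction k with
    | zero =>
      refine ⟨M₀, hM₀0, fun t ht => ?_⟩
      have hz : max (lamPos - ((0:ℕ):ℝ) * δ') lamNeg = lamPos := by
        simp only [Nat.cast_zero, zero_mul, sub_zero]
        exact max_eq_left (by linarith)
      rw [hz]; exact hM₀ t ht
    | succ k ih =>
      obtain ⟨M, hM0, hMk⟩ := ih
      by_cases hcase : lamNeg < lamPos - (k:ℝ) * δ'
      · have hmaxk : max (lamPos - (k:ℝ) * δ') lamNeg = lamPos - (k:ℝ) * δ' :=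
          max_eq_left (le_of_lt hcase)
        have hknn : (0:ℝ) ≤ (k:ℝ) * δ' := mul_nonneg (Nat.cast_nonneg k) (le_of_lt hδ'0)
        have hne2 : (lamPos - (k:ℝ) * δ') - lamNeg ≠ δ' := by
          intro hcontra
          have h1 : ((n:ℝ) + 1/2) * δ' - (k:ℝ) * δ' = δ' := by
            rw [← hsn]; linarith
          have h2 : ((n:ℝ) - (k:ℝ) - 1/2) * δ' = 0 := by linarith
          have h3 : (n:ℝ) = (k:ℝ) + 1/2 := by
            rcases mul_eq_zero.mp h2 with h | h
            · linarith
            · exact absurd h (ne_of_gt hδ'0)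
          rcases le_or_gt n k with h | h
          · have : (n:ℝ) ≤ (k:ℝ) := Nat.cast_le.mpr h
            linarith
          · have : (k:ℝ) + 1 ≤ (n:ℝ) := by exact_mod_cast Nat.succ_le_of_lt h
            linarith
        obtain ⟨M', hM'0, hM'⟩ := step (lamPos - (k:ℝ) * δ') M hM0 (by linarith) hcase hne2
          (fun t ht => by rw [← hmaxk]; exact hMk t ht)
        refine ⟨M', hM'0, fun t ht => ?_⟩
        have hexp : lamPos - ((k+1:ℕ):ℝ) * δ' = (lamPos - (k:ℝ) * δ') - δ' := by
          push_cast; ring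
        rw [hexp]
        exact hM' t ht
      · push_neg at hcase
        refine ⟨M, hM0, fun t ht => ?_⟩
        have h1 : max (lamPos - (k:ℝ) * δ') lamNeg = lamNeg := max_eq_right hcase
        have h2 : max (lamPos - ((k+1:ℕ):ℝ) * δ') lamNeg = lamNeg := by
          apply max_eq_right
          have : ((k+1:ℕ):ℝ) * δ' = (k:ℝ) * δ' + δ' := by push_cast; ring
          rw [this]; linarith
        rw [h2]
        have := hMk t ht
        rwa [h1] at this
  -- conclude with k = n + 1
  obtain ⟨C, hC0, hC⟩ := hind (n+1)
  refine ⟨C, fun x hx => ?_⟩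
  have h1 : lamPos - ((n:ℝ)+1) * δ' < lamNeg := by
    have : lamPos - lamNeg = ((n:ℝ) + 1/2) * δ' := by rw [← hsn]; exact hdiff
    nlinarith [hδ'0]
  have h2 := hC x hx
  rwa [show ((n+1 : ℕ):ℝ) = (n:ℝ)+1 by push_cast; ring,
    max_eq_right (le_of_lt h1)] at h2
end

section
/- Let X and Y be complex Banach spaces, let σ₀ > 0, C > 0, and ε ∈ (0, 1), and set S = {σ ∈ ℂ : 0 < |σ| < σ₀ and Im σ ≥ 0}. Let L₀ : X → Y be a bounded linear bijection (hence with bounded inverse), let L₁ : X → Y be bounded with ‖L₁‖ ≤ C, and let L₂ : S → B(X, Y) be twice differentiable within S with ‖L₂(σ)‖ ≤ C, ‖L₂′(σ)‖ ≤ C·|σ|^{−ε}, and ‖L₂″(σ)‖ ≤ C·|σ|^{−1−ε} for all σ ∈ S. Define L(σ) := L₀ + σ·L₁ + σ²·L₂(σ). Then there exist σ₁ ∈ (0, σ₀] and C′ > 0 such that for all σ ∈ S with |σ| < σ₁ the operator L(σ) : X → Y is a bijection, and L(σ)^{-1} = L₀^{-1} − σ·L₀^{-1}L₁L₀^{-1}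 + σ²·R₂(σ), where R₂ : {σ ∈ S : |σ| < σ₁} → B(Y, X) is twice differentiable within this set with ‖R₂(σ)‖ ≤ C′, ‖R₂′(σ)‖ ≤ C′·|σ|^{−ε}, and ‖R₂″(σ)‖ ≤ C′·|σ|^{−1−ε}. -/
open Set ContinuousLinearMap

set_option maxHeartbeats 4000000 in
/-- Neumann-series inversion of an ε-regular expansion up to order two:
if `L(σ) = L₀ + σ L₁ + σ² L₂(σ)` with `L₀` invertible and `L₂` ε-regular at zero on
`S = {0 < |σ| < σ₀, Im σ ≥ 0}`, then for small `σ ∈ S` the operator `L(σ)` is invertible and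
`L(σ)⁻¹ = L₀⁻¹ - σ L₀⁻¹ L₁ L₀⁻¹ + σ² R₂(σ)` with `R₂` ε-regular. -/
theorem eps_regular_inverse_expansion
    {X Y : Type*} [NormedAddCommGroup X] [NormedSpace ℂ X] [CompleteSpace X]
    [NormedAddCommGroup Y] [NormedSpace ℂ Y] [CompleteSpace Y]
    (σ₀ C ε : ℝ) (hσ₀ : 0 < σ₀) (hC : 0 < C) (hε : 0 < ε) (hε1 : ε < 1)
    (S : Set ℂ) (hS : S = {σ : ℂ | 0 < ‖σ‖ ∧ ‖σ‖ < σ₀ ∧ 0 ≤ σ.im})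
    (L₀ : X →L[ℂ] Y) (hL₀ : Function.Bijective L₀)
    (L₁ : X →L[ℂ] Y) (hL₁ : ‖L₁‖ ≤ C)
    (L₂ L₂' L₂'' : ℂ → X →L[ℂ] Y)
    (hL₂der : ∀ σ ∈ S, HasDerivWithinAt L₂ (L₂' σ) S σ)
    (hL₂der2 : ∀ σ ∈ S, HasDerivWithinAt L₂' (L₂'' σ) S σ)
    (hL₂bd : ∀ σ ∈ S, ‖L₂ σ‖ ≤ C)
    (hL₂bd1 : ∀ σ ∈ S, ‖L₂' σ‖ ≤ C * ‖σ‖ ^ (-ε))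
    (hL₂bd2 : ∀ σ ∈ S, ‖L₂'' σ‖ ≤ C * ‖σ‖ ^ (-1 - ε))
    (L : ℂ → X →L[ℂ] Y) (hL : ∀ σ : ℂ, L σ = L₀ + σ • L₁ + σ ^ 2 • L₂ σ) :
    ∃ M₀ : Y →L[ℂ] X, (∀ x : X, M₀ (L₀ x) = x) ∧ (∀ y : Y, L₀ (M₀ y) = y) ∧
    ∃ σ₁ : ℝ, 0 < σ₁ ∧ σ₁ ≤ σ₀ ∧ ∃ C' : ℝ, 0 < C' ∧
    ∃ S₁ : Set ℂ, S₁ = {σ ∈ S | ‖σ‖ < σ₁} ∧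
    ∃ R₂ R₂' R₂'' : ℂ → Y →L[ℂ] X,
      ∀ σ ∈ S₁,
        Function.Bijective (L σ) ∧
        (∀ y : Y, L σ ((M₀ - σ • (M₀.comp (L₁.comp M₀)) + σ ^ 2 • R₂ σ) y) = y) ∧
        (∀ z : X, (M₀ - σ • (M₀.comp (L₁.comp M₀)) + σ ^ 2 • R₂ σ) (L σ z) = z) ∧
        HasDerivWithinAt R₂ (R₂' σ) S₁ σ ∧
        HasDerivWithinAt R₂' (R₂'' σ) S₁ σ ∧
        ‖R₂ σ‖ ≤ C' ∧ ‖R₂' σ‖ ≤ C' * ‖σ‖ ^ (-ε) ∧ ‖R₂'' σ‖ ≤ C' * ‖σ‖ ^ (-1 - ε) := by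
  classical
  -- the inverse of `L₀`
  have hker : LinearMap.ker L₀.toLinearMap = ⊥ := LinearMap.ker_eq_bot.mpr hL₀.1
  have hrg : LinearMap.range L₀.toLinearMap = ⊤ := LinearMap.range_eq_top.mpr hL₀.2
  obtain ⟨M₀, hM₀l, hM₀r⟩ : ∃ M₀ : Y →L[ℂ] X,
      (∀ x, M₀ (L₀ x) = x) ∧ ∀ y, L₀ (M₀ y) = y := by
    set e := ContinuousLinearEquiv.ofBijective L₀ hker hrg with he_def
    have he : ∀ x, e x = L₀ x := fun x =>
      congrFun (ContinuousLinearEquiv.coeFn_ofBijective L₀ hker hrg) x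
    refine ⟨(e.symm : Y →L[ℂ] X), fun x => ?_, fun y => ?_⟩
    · rw [ContinuousLinearEquiv.coe_coe, ← he]; exact e.symm_apply_apply x
    · rw [ContinuousLinearEquiv.coe_coe, ← he]; exact e.apply_symm_apply y
  set D : ℝ := (C + 1) * (‖M₀‖ + 1) with hDdef
  have hK0 : (0:ℝ) ≤ ‖M₀‖ := norm_nonneg _
  have hD1 : 1 ≤ D := by nlinarith
  have hD0 : 0 < D := by linarith
  have hKD : ‖M₀‖ ≤ D := by nlinarith
  have hCKD : C * ‖M₀‖ ≤ D := by nlinarith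
  have hdp2 : D ≤ D ^ 2 := by nlinarith
  have hdp3 : D ^ 2 ≤ D ^ 3 := by nlinarith
  have hdp4 : D ^ 3 ≤ D ^ 4 := by nlinarith
  have hdp5 : D ^ 4 ≤ D ^ 5 := by nlinarith
  have hL₁Mb : ‖L₁.comp M₀‖ ≤ D := by
    calc ‖L₁.comp M₀‖ ≤ ‖L₁‖ * ‖M₀‖ := opNorm_comp_le _ _
      _ ≤ C * ‖M₀‖ := mul_le_mul_of_nonneg_right hL₁ hK0
      _ ≤ D := hCKD
  have hone : ‖(1 : Y →L[ℂ] Y)‖ ≤ 1 := by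
    rw [ContinuousLinearMap.one_def]; exact ContinuousLinearMap.norm_id_le
  set σ₁ : ℝ := min σ₀ (min 1 (1 / (4 * D))) with hσ₁def
  have hσ₁pos : 0 < σ₁ := lt_min hσ₀ (lt_min one_pos (div_pos one_pos (by linarith)))
  set S₁ : Set ℂ := {σ ∈ S | ‖σ‖ < σ₁} with hS₁def
  have hsub : S₁ ⊆ S := fun x hx => hx.1
  -- auxiliary operator families
  set T : ℂ → Y →L[ℂ] Y := fun σ => (L₂ σ).comp M₀ with hTdef
  set T' : ℂ → Y →L[ℂ] Y := fun σ => (L₂' σ).comp M₀ with hT'def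
  set T'' : ℂ → Y →L[ℂ] Y := fun σ => (L₂'' σ).comp M₀ with hT''def
  set F : ℂ → Y →L[ℂ] Y := fun σ => L₁.comp M₀ + σ • T σ with hFdef
  set F' : ℂ → Y →L[ℂ] Y := fun σ => σ • T' σ + T σ with hF'def
  set F'' : ℂ → Y →L[ℂ] Y := fun σ => σ • T'' σ + T' σ + T' σ with hF''def
  set E : ℂ → Y →L[ℂ] Y := fun σ => σ • F σ with hEdef
  set E' : ℂ → Y →L[ℂ] Y := fun σ => σ • F' σ + F σ with hE'def
  set E'' : ℂ → Y →L[ℂ] Y := fun σ => σ • F'' σ + F' σ + F' σ with hE''def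
  set Ninv : ℂ → Y →L[ℂ] Y := fun σ => Ring.inverse (1 + E σ) with hNinvdef
  set Ninv' : ℂ → Y →L[ℂ] Y := fun σ => -(Ninv σ * E' σ * Ninv σ) with hNinv'def
  set Ninv'' : ℂ → Y →L[ℂ] Y := fun σ =>
    -((Ninv' σ * E' σ + Ninv σ * E'' σ) * Ninv σ + Ninv σ * E' σ * Ninv' σ) with hNinv''def
  set Q : ℂ → Y →L[ℂ] Y := fun σ => F σ * F σ with hQdef
  set Q' : ℂ → Y →L[ℂ] Y := fun σ => F' σ * F σ + F σ * F' σ with hQ'def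
  set Q'' : ℂ → Y →L[ℂ] Y := fun σ =>
    F'' σ * F σ + F' σ * F' σ + (F' σ * F' σ + F σ * F'' σ) with hQ''def
  set W : ℂ → Y →L[ℂ] Y := fun σ => Q σ * Ninv σ - T σ with hWdef
  set W' : ℂ → Y →L[ℂ] Y := fun σ => Q' σ * Ninv σ + Q σ * Ninv' σ - T' σ with hW'def
  set W'' : ℂ → Y →L[ℂ] Y := fun σ =>
    Q'' σ * Ninv σ + Q' σ * Ninv' σ + (Q' σ * Ninv' σ + Q σ * Ninv'' σ) - T'' σ with hW''def
  set R₂ : ℂ → Y →L[ℂ] X := fun σ => M₀.comp (W σ) with hR₂def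
  set R₂' : ℂ → Y →L[ℂ] X := fun σ => M₀.comp (W' σ) with hR₂'def
  set R₂'' : ℂ → Y →L[ℂ] X := fun σ => M₀.comp (W'' σ) with hR₂''def
  refine ⟨M₀, hM₀l, hM₀r, σ₁, hσ₁pos, min_le_left _ _, 2000 * D ^ 5, by have := pow_pos hD0 5; linarith,
    S₁, hS₁def, R₂, R₂', R₂'', ?_⟩
  intro σ hσ1
  have hσS : σ ∈ S := hσ1.1
  have hσlt : ‖σ‖ < σ₁ := hσ1.2
  have hσSS := hσS
  rw [hS] at hσSS
  obtain ⟨ht0, htσ₀, him⟩ := hσSS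
  have ht1 : ‖σ‖ ≤ 1 :=
    le_of_lt (lt_of_lt_of_le hσlt ((min_le_right _ _).trans (min_le_left _ _)))
  have ht4D : ‖σ‖ ≤ 1 / (4 * D) :=
    le_of_lt (lt_of_lt_of_le hσlt ((min_le_right _ _).trans (min_le_right _ _)))
  -- rpow facts
  have hp1 : 1 ≤ ‖σ‖ ^ (-ε) :=
    Real.one_le_rpow_of_pos_of_le_one_of_nonpos ht0 ht1 (by linarith)
  have hp0 : (0:ℝ) ≤ ‖σ‖ ^ (-ε) := by positivity
  have hq0 : (0:ℝ) ≤ ‖σ‖ ^ (-1 - ε) := by positivity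
  have hpq : ‖σ‖ ^ (-ε) ≤ ‖σ‖ ^ (-1 - ε) :=
    Real.rpow_le_rpow_of_exponent_ge ht0 ht1 (by linarith)
  have htp : ‖σ‖ * ‖σ‖ ^ (-ε) ≤ 1 := by
    have h1 : ‖σ‖ * ‖σ‖ ^ (-ε) = ‖σ‖ ^ (1 + -ε) := by
      rw [Real.rpow_add ht0, Real.rpow_one]
    rw [h1]
    exact Real.rpow_le_one ht0.le ht1 (by linarith)
  have htq : ‖σ‖ * ‖σ‖ ^ (-1 - ε) = ‖σ‖ ^ (-ε) := by
    have h1 : ‖σ‖ ^ (1 + (-1 - ε)) = ‖σ‖ ^ (1:ℝ) * ‖σ‖ ^ (-1 - ε) := Real.rpow_add ht0 _ _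
    rw [Real.rpow_one] at h1
    rw [← h1]
    congr 1
    ring
  -- norm bounds
  have hTb : ‖T σ‖ ≤ D := by
    simp only [hTdef]
    calc ‖(L₂ σ).comp M₀‖ ≤ ‖L₂ σ‖ * ‖M₀‖ := opNorm_comp_le _ _
      _ ≤ C * ‖M₀‖ := mul_le_mul_of_nonneg_right (hL₂bd σ hσS) hK0
      _ ≤ D := hCKD
  have hT'b : ‖T' σ‖ ≤ D * ‖σ‖ ^ (-ε) := by
    simp only [hT'def]
    calc ‖(L₂' σ).comp M₀‖ ≤ ‖L₂' σ‖ * ‖M₀‖ := opNorm_comp_le _ _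
      _ ≤ (C * ‖σ‖ ^ (-ε)) * ‖M₀‖ := mul_le_mul_of_nonneg_right (hL₂bd1 σ hσS) hK0
      _ ≤ D * ‖σ‖ ^ (-ε) := by linarith [mul_le_mul_of_nonneg_right hCKD hp0]
  have hT''b : ‖T'' σ‖ ≤ D * ‖σ‖ ^ (-1 - ε) := by
    simp only [hT''def]
    calc ‖(L₂'' σ).comp M₀‖ ≤ ‖L₂'' σ‖ * ‖M₀‖ := opNorm_comp_le _ _
      _ ≤ (C * ‖σ‖ ^ (-1 - ε)) * ‖M₀‖ := mul_le_mul_of_nonneg_right (hL₂bd2 σ hσS) hK0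
      _ ≤ D * ‖σ‖ ^ (-1 - ε) := by linarith [mul_le_mul_of_nonneg_right hCKD hq0]
  have hFb : ‖F σ‖ ≤ 2 * D := by
    simp only [hFdef]
    calc ‖L₁.comp M₀ + σ • T σ‖ ≤ ‖L₁.comp M₀‖ + ‖σ‖ * ‖T σ‖ := by
          exact (norm_add_le _ _).trans (add_le_add le_rfl (ContinuousLinearMap.opNorm_smul_le _ _))
      _ ≤ 2 * D := by linarith [hL₁Mb, mul_le_mul ht1 hTb (norm_nonneg _) zero_le_one]
  have hF'b : ‖F' σ‖ ≤ 2 * D := by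
    simp only [hF'def]
    calc ‖σ • T' σ + T σ‖ ≤ ‖σ‖ * ‖T' σ‖ + ‖T σ‖ := by
          exact (norm_add_le _ _).trans (add_le_add (ContinuousLinearMap.opNorm_smul_le _ _) le_rfl)
      _ ≤ 2 * D := by
          have e1 : ‖σ‖ * ‖T' σ‖ ≤ ‖σ‖ * (D * ‖σ‖ ^ (-ε)) :=
            mul_le_mul_of_nonneg_left hT'b (norm_nonneg σ)
          have e2 : ‖σ‖ * (D * ‖σ‖ ^ (-ε)) = D * (‖σ‖ * ‖σ‖ ^ (-ε)) := by ring
          have e3 : D * (‖σ‖ * ‖σ‖ ^ (-ε)) ≤ D * 1 :=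
            mul_le_mul_of_nonneg_left htp hD0.le
          linarith [hTb]
  have hF''b : ‖F'' σ‖ ≤ 3 * D * ‖σ‖ ^ (-ε) := by
    simp only [hF''def]
    calc ‖σ • T'' σ + T' σ + T' σ‖ ≤ ‖σ‖ * ‖T'' σ‖ + ‖T' σ‖ + ‖T' σ‖ := by
          refine (norm_add_le _ _).trans ?_
          gcongr
          exact (norm_add_le _ _).trans (add_le_add (ContinuousLinearMap.opNorm_smul_le _ _) le_rfl)
      _ ≤ 3 * D * ‖σ‖ ^ (-ε) := by
          have e1 : ‖σ‖ * ‖T'' σ‖ ≤ ‖σ‖ * (D * ‖σ‖ ^ (-1 - ε)) :=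
            mul_le_mul_of_nonneg_left hT''b (norm_nonneg σ)
          have e2 : ‖σ‖ * (D * ‖σ‖ ^ (-1 - ε)) = D * (‖σ‖ * ‖σ‖ ^ (-1 - ε)) := by ring
          have e3 : D * (‖σ‖ * ‖σ‖ ^ (-1 - ε)) = D * ‖σ‖ ^ (-ε) := by rw [htq]
          linarith [hT'b]
  have hEb : ‖E σ‖ ≤ 1 / 2 := by
    simp only [hEdef]
    refine (ContinuousLinearMap.opNorm_smul_le _ _).trans ?_
    have h1 : ‖σ‖ * ‖F σ‖ ≤ (1 / (4 * D)) * (2 * D) :=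
      mul_le_mul ht4D hFb (norm_nonneg _) (le_of_lt (div_pos one_pos (by linarith)))
    have h2 : (1 / (4 * D)) * (2 * D) = 1 / 2 := by
      field_simp
      ring
    linarith
  have hE'b : ‖E' σ‖ ≤ 4 * D := by
    simp only [hE'def]
    calc ‖σ • F' σ + F σ‖ ≤ ‖σ‖ * ‖F' σ‖ + ‖F σ‖ := by
          exact (norm_add_le _ _).trans (add_le_add (ContinuousLinearMap.opNorm_smul_le _ _) le_rfl)
      _ ≤ 4 * D := by
          linarith [mul_le_mul ht1 hF'b (norm_nonneg _) zero_le_one, hFb]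
  have hE''b : ‖E'' σ‖ ≤ 7 * D := by
    simp only [hE''def]
    calc ‖σ • F'' σ + F' σ + F' σ‖ ≤ ‖σ‖ * ‖F'' σ‖ + ‖F' σ‖ + ‖F' σ‖ := by
          refine (norm_add_le _ _).trans ?_
          gcongr
          exact (norm_add_le _ _).trans (add_le_add (ContinuousLinearMap.opNorm_smul_le _ _) le_rfl)
      _ ≤ 7 * D := by
          have e1 : ‖σ‖ * ‖F'' σ‖ ≤ ‖σ‖ * (3 * D * ‖σ‖ ^ (-ε)) :=
            mul_le_mul_of_nonneg_left hF''b (norm_nonneg σ)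
          have e2 : ‖σ‖ * (3 * D * ‖σ‖ ^ (-ε)) = 3 * D * (‖σ‖ * ‖σ‖ ^ (-ε)) := by ring
          have e3 : 3 * D * (‖σ‖ * ‖σ‖ ^ (-ε)) ≤ 3 * D * 1 :=
            mul_le_mul_of_nonneg_left htp (by linarith)
          linarith [hF'b]
  -- the unit 1 + E σ
  have hE1 : ‖-(E σ)‖ < 1 := by rw [norm_neg]; linarith
  set u : (Y →L[ℂ] Y)ˣ := Units.oneSub (-(E σ)) hE1 with hudef
  have hval : (u : Y →L[ℂ] Y) = 1 + E σ := by
    rw [hudef, Units.val_oneSub, sub_neg_eq_add]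
  have hNueq : Ninv σ = ↑u⁻¹ := by
    rw [hNinvdef]
    simp only
    rw [← hval, Ring.inverse_unit]
  have h3 : (1 + E σ) * Ninv σ = 1 := by rw [hNueq, ← hval, u.mul_inv]
  have h3' : Ninv σ * (1 + E σ) = 1 := by rw [hNueq, ← hval, u.inv_mul]
  have h1rec : Ninv σ = 1 - Ninv σ * E σ := by
    rw [eq_sub_iff_add_eq]
    calc Ninv σ + Ninv σ * E σ = Ninv σ * (1 + E σ) := by noncomm_ring
      _ = 1 := h3'
  have hNb : ‖Ninv σ‖ ≤ 2 := by
    have h4 : ‖Ninv σ‖ ≤ ‖(1 : Y →L[ℂ] Y)‖ + ‖Ninv σ‖ * ‖E σ‖ := by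
      conv_lhs => rw [h1rec]
      exact (norm_sub_le _ _).trans (by gcongr; exact norm_mul_le _ _)
    linarith [hone, mul_le_mul_of_nonneg_left hEb (norm_nonneg (Ninv σ))]
  have hN'b : ‖Ninv' σ‖ ≤ 16 * D := by
    simp only [hNinv'def]
    rw [norm_neg]
    calc ‖Ninv σ * E' σ * Ninv σ‖ ≤ ‖Ninv σ‖ * ‖E' σ‖ * ‖Ninv σ‖ := by
          exact (norm_mul_le _ _).trans
            (mul_le_mul_of_nonneg_right (norm_mul_le _ _) (norm_nonneg _))
      _ ≤ 16 * D := by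
          have e1 : ‖Ninv σ‖ * ‖E' σ‖ ≤ 2 * (4 * D) :=
            mul_le_mul hNb hE'b (norm_nonneg _) (by norm_num)
          have e2 : ‖Ninv σ‖ * ‖E' σ‖ * ‖Ninv σ‖ ≤ 2 * (4 * D) * 2 :=
            mul_le_mul e1 hNb (norm_nonneg _) ((mul_nonneg (norm_nonneg _) (norm_nonneg _)).trans e1)
          linarith
  have hN''b : ‖Ninv'' σ‖ ≤ 284 * D ^ 2 := by
    simp only [hNinv''def]
    rw [norm_neg]
    have k1 : ‖Ninv' σ * E' σ + Ninv σ * E'' σ‖ ≤ 16 * D * (4 * D) + 2 * (7 * D) := by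
      refine (norm_add_le _ _).trans ?_
      gcongr
      · exact (norm_mul_le _ _).trans
          (mul_le_mul hN'b hE'b (norm_nonneg _) ((norm_nonneg _).trans hN'b))
      · exact (norm_mul_le _ _).trans
          (mul_le_mul hNb hE''b (norm_nonneg _) (by norm_num))
    have k2 : ‖(Ninv' σ * E' σ + Ninv σ * E'' σ) * Ninv σ‖ ≤
        (16 * D * (4 * D) + 2 * (7 * D)) * 2 := by
      refine (norm_mul_le _ _).trans ?_
      exact mul_le_mul k1 hNb (norm_nonneg _) ((norm_nonneg _).trans k1)
    have k3 : ‖Ninv σ * E' σ * Ninv' σ‖ ≤ 2 * (4 * D) * (16 * D) := by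
      refine (norm_mul_le _ _).trans ?_
      have e1 : ‖Ninv σ * E' σ‖ ≤ 2 * (4 * D) :=
        (norm_mul_le _ _).trans (mul_le_mul hNb hE'b (norm_nonneg _) (by norm_num))
      exact mul_le_mul e1 hN'b (norm_nonneg _) ((norm_nonneg _).trans e1)
    refine (norm_add_le _ _).trans ?_
    linarith [k2, k3, hdp2]
  have hQb : ‖Q σ‖ ≤ 4 * D ^ 2 := by
    simp only [hQdef]
    refine (norm_mul_le _ _).trans ?_
    have e1 : ‖F σ‖ * ‖F σ‖ ≤ 2 * D * (2 * D) :=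
      mul_le_mul hFb hFb (norm_nonneg _) ((norm_nonneg _).trans hFb)
    linarith [e1]
  have hQ'b : ‖Q' σ‖ ≤ 8 * D ^ 2 := by
    simp only [hQ'def]
    refine (norm_add_le _ _).trans ?_
    have k1 : ‖F' σ * F σ‖ ≤ 2 * D * (2 * D) :=
      (norm_mul_le _ _).trans (mul_le_mul hF'b hFb (norm_nonneg _) ((norm_nonneg _).trans hF'b))
    have k2 : ‖F σ * F' σ‖ ≤ 2 * D * (2 * D) :=
      (norm_mul_le _ _).trans (mul_le_mul hFb hF'b (norm_nonneg _) ((norm_nonneg _).trans hFb))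
    linarith
  have hQ''b : ‖Q'' σ‖ ≤ 20 * D ^ 2 * ‖σ‖ ^ (-ε) := by
    simp only [hQ''def]
    have k1 : ‖F'' σ * F σ‖ ≤ 3 * D * ‖σ‖ ^ (-ε) * (2 * D) :=
      (norm_mul_le _ _).trans
        (mul_le_mul hF''b hFb (norm_nonneg _) ((norm_nonneg _).trans hF''b))
    have k2 : ‖F' σ * F' σ‖ ≤ 2 * D * (2 * D) :=
      (norm_mul_le _ _).trans
        (mul_le_mul hF'b hF'b (norm_nonneg _) ((norm_nonneg _).trans hF'b))
    have k3 : ‖F σ * F'' σ‖ ≤ 2 * D * (3 * D * ‖σ‖ ^ (-ε)) :=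
      (norm_mul_le _ _).trans
        (mul_le_mul hFb hF''b (norm_nonneg _) ((norm_nonneg _).trans hFb))
    calc ‖F'' σ * F σ + F' σ * F' σ + (F' σ * F' σ + F σ * F'' σ)‖
        ≤ ‖F'' σ * F σ + F' σ * F' σ‖ + ‖F' σ * F' σ + F σ * F'' σ‖ := norm_add_le _ _
      _ ≤ (‖F'' σ * F σ‖ + ‖F' σ * F' σ‖) + (‖F' σ * F' σ‖ + ‖F σ * F'' σ‖) := by
          gcongr <;> exact norm_add_le _ _
      _ ≤ 20 * D ^ 2 * ‖σ‖ ^ (-ε) := by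
          have e1 : 8 * D ^ 2 * 1 ≤ 8 * D ^ 2 * ‖σ‖ ^ (-ε) :=
            mul_le_mul_of_nonneg_left hp1 (by positivity)
          linarith [k1, k2, k3, e1]
  have hWb : ‖W σ‖ ≤ 9 * D ^ 2 := by
    simp only [hWdef]
    refine (norm_sub_le _ _).trans ?_
    have k1 : ‖Q σ * Ninv σ‖ ≤ 4 * D ^ 2 * 2 :=
      (norm_mul_le _ _).trans (mul_le_mul hQb hNb (norm_nonneg _) ((norm_nonneg _).trans hQb))
    linarith [hTb, hdp2]
  have hW'b : ‖W' σ‖ ≤ 81 * D ^ 3 * ‖σ‖ ^ (-ε) := by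
    simp only [hW'def]
    refine (norm_sub_le _ _).trans ?_
    have k1 : ‖Q' σ * Ninv σ‖ ≤ 8 * D ^ 2 * 2 :=
      (norm_mul_le _ _).trans
        (mul_le_mul hQ'b hNb (norm_nonneg _) ((norm_nonneg _).trans hQ'b))
    have k2 : ‖Q σ * Ninv' σ‖ ≤ 4 * D ^ 2 * (16 * D) :=
      (norm_mul_le _ _).trans
        (mul_le_mul hQb hN'b (norm_nonneg _) ((norm_nonneg _).trans hQb))
    have k3 : ‖Q' σ * Ninv σ + Q σ * Ninv' σ‖ ≤ 8 * D ^ 2 * 2 + 4 * D ^ 2 * (16 * D) :=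
      (norm_add_le _ _).trans (by linarith)
    have hD3p : 0 ≤ D ^ 3 := pow_nonneg hD0.le 3
    have e1 : 16 * D ^ 2 ≤ 16 * D ^ 3 := by linarith [hdp3]
    have e2 : D ^ 3 * 1 ≤ D ^ 3 * ‖σ‖ ^ (-ε) := mul_le_mul_of_nonneg_left hp1 hD3p
    have e3 : D * ‖σ‖ ^ (-ε) ≤ D ^ 3 * ‖σ‖ ^ (-ε) :=
      mul_le_mul_of_nonneg_right (hdp2.trans hdp3) hp0
    linarith [k3, hT'b]
  have hW''b : ‖W'' σ‖ ≤ 1433 * D ^ 4 * ‖σ‖ ^ (-1 - ε) := by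
    simp only [hW''def]
    refine (norm_sub_le _ _).trans ?_
    have k1 : ‖Q'' σ * Ninv σ‖ ≤ 20 * D ^ 2 * ‖σ‖ ^ (-ε) * 2 :=
      (norm_mul_le _ _).trans
        (mul_le_mul hQ''b hNb (norm_nonneg _) ((norm_nonneg _).trans hQ''b))
    have k2 : ‖Q' σ * Ninv' σ‖ ≤ 8 * D ^ 2 * (16 * D) :=
      (norm_mul_le _ _).trans
        (mul_le_mul hQ'b hN'b (norm_nonneg _) ((norm_nonneg _).trans hQ'b))
    have k3 : ‖Q σ * Ninv'' σ‖ ≤ 4 * D ^ 2 * (284 * D ^ 2) :=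
      (norm_mul_le _ _).trans
        (mul_le_mul hQb hN''b (norm_nonneg _) ((norm_nonneg _).trans hQb))
    have k4 : ‖Q'' σ * Ninv σ + Q' σ * Ninv' σ + (Q' σ * Ninv' σ + Q σ * Ninv'' σ)‖
        ≤ (20 * D ^ 2 * ‖σ‖ ^ (-ε) * 2 + 8 * D ^ 2 * (16 * D))
          + (8 * D ^ 2 * (16 * D) + 4 * D ^ 2 * (284 * D ^ 2)) := by
      refine (norm_add_le _ _).trans ?_
      gcongr
      · exact (norm_add_le _ _).trans (by linarith)
      · exact (norm_add_le _ _).trans (by linarith)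
    have hD4p : (0:ℝ) ≤ D ^ 4 := by positivity
    have h1q : (1:ℝ) ≤ ‖σ‖ ^ (-1 - ε) := hp1.trans hpq
    have z1 : D ^ 2 * ‖σ‖ ^ (-ε) ≤ D ^ 4 * ‖σ‖ ^ (-1 - ε) :=
      mul_le_mul (hdp3.trans hdp4) hpq hp0 hD4p
    have z2 : D ^ 3 * 1 ≤ D ^ 4 * ‖σ‖ ^ (-1 - ε) :=
      mul_le_mul hdp4 h1q zero_le_one hD4p
    have z3 : D ^ 4 * 1 ≤ D ^ 4 * ‖σ‖ ^ (-1 - ε) :=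
      mul_le_mul_of_nonneg_left h1q hD4p
    have z4 : D * ‖σ‖ ^ (-1 - ε) ≤ D ^ 4 * ‖σ‖ ^ (-1 - ε) :=
      mul_le_mul_of_nonneg_right ((hdp2.trans hdp3).trans hdp4) hq0
    linarith [k4, hT''b, z1, z2, z3, z4]
  -- derivatives
  have hTd : HasDerivWithinAt T (T' σ) S₁ σ := by
    simpa using ((hL₂der σ hσS).mono hsub).clm_comp (hasDerivWithinAt_const σ S₁ M₀)
  have hT'd : HasDerivWithinAt T' (T'' σ) S₁ σ := by
    simpa using ((hL₂der2 σ hσS).mono hsub).clm_comp (hasDerivWithinAt_const σ S₁ M₀)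
  have hFd : HasDerivWithinAt F (F' σ) S₁ σ := by
    simpa [Pi.add_def, Pi.smul_def', hFdef, hF'def] using (hasDerivWithinAt_const σ S₁ (L₁.comp M₀)).add
      ((hasDerivWithinAt_id σ S₁).smul hTd)
  have hF'd : HasDerivWithinAt F' (F'' σ) S₁ σ := by
    simpa [Pi.add_def, Pi.smul_def'] using ((hasDerivWithinAt_id σ S₁).smul hT'd).add hTd
  have hEd : HasDerivWithinAt E (E' σ) S₁ σ := by
    simpa [Pi.smul_def'] using (hasDerivWithinAt_id σ S₁).smul hFd
  have hE'd : HasDerivWithinAt E' (E'' σ) S₁ σ := by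
    simpa [Pi.add_def, Pi.smul_def'] using ((hasDerivWithinAt_id σ S₁).smul hF'd).add hFd
  have hNd : HasDerivWithinAt (fun y => 1 + E y) (E' σ) S₁ σ := by
    simpa [Pi.add_def] using (hasDerivWithinAt_const σ S₁ (1 : Y →L[ℂ] Y)).add hEd
  have hNinvd : HasDerivWithinAt Ninv (Ninv' σ) S₁ σ := by
    have hfd := hasFDerivAt_ringInverse (𝕜 := ℂ) u
    rw [hval] at hfd
    have h := hfd.comp_hasDerivWithinAt σ hNd
    simpa [← hNueq, Function.comp_def] using h
  have hNinv'd : HasDerivWithinAt Ninv' (Ninv'' σ) S₁ σ :=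
    ((hNinvd.mul hE'd).mul hNinvd).neg
  have hQd : HasDerivWithinAt Q (Q' σ) S₁ σ := hFd.mul hFd
  have hQ'd : HasDerivWithinAt Q' (Q'' σ) S₁ σ := (hF'd.mul hFd).add (hFd.mul hF'd)
  have hWd : HasDerivWithinAt W (W' σ) S₁ σ := (hQd.mul hNinvd).sub hTd
  have hW'd : HasDerivWithinAt W' (W'' σ) S₁ σ :=
    ((hQ'd.mul hNinvd).add (hQd.mul hNinv'd)).sub hT'd
  have hR₂d : HasDerivWithinAt R₂ (R₂' σ) S₁ σ := by
    simpa using (hasDerivWithinAt_const σ S₁ M₀).clm_comp hWd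
  have hR₂'d : HasDerivWithinAt R₂' (R₂'' σ) S₁ σ := by
    simpa using (hasDerivWithinAt_const σ S₁ M₀).clm_comp hW'd
  -- the Neumann recursion
  have hcancel : ∀ a b : Y →L[ℂ] Y, (1 + E σ) * a = (1 + E σ) * b → a = b := by
    intro a b hab
    have := congrArg (fun z => Ninv σ * z) hab
    simpa [← mul_assoc, h3'] using this
  have hNrec : Ninv σ = 1 - E σ + E σ * E σ * Ninv σ := by
    apply hcancel
    have h4 : (1 + E σ) * (1 - E σ + E σ * E σ * Ninv σ)
        = 1 - E σ * E σ + E σ * E σ * ((1 + E σ) * Ninv σ) := by noncomm_ring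
    rw [h3, h4, h3, mul_one]
    noncomm_ring
  -- the inverse formula
  have hGeq : M₀ - σ • (M₀.comp (L₁.comp M₀)) + σ ^ 2 • R₂ σ = M₀.comp (Ninv σ) := by
    conv_rhs => rw [hNrec]
    simp only [hR₂def, hWdef, hQdef, hEdef, hFdef]
    simp only [ContinuousLinearMap.comp_add, ContinuousLinearMap.comp_sub,
      ContinuousLinearMap.comp_smul, ContinuousLinearMap.mul_def,
      smul_mul_assoc, mul_smul_comm, smul_smul, ContinuousLinearMap.comp_id,
      ContinuousLinearMap.one_def]
    module
  have hLM : (L σ).comp M₀ = 1 + E σ := by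
    ext y
    simp only [hL σ, hEdef, hFdef, hTdef, ContinuousLinearMap.comp_apply,
      ContinuousLinearMap.add_apply, ContinuousLinearMap.smul_apply,
      ContinuousLinearMap.one_apply, hM₀r y, smul_add, smul_smul, pow_two]
    abel
  have hLG : ∀ y, L σ ((M₀.comp (Ninv σ)) y) = y := by
    intro y
    calc L σ ((M₀.comp (Ninv σ)) y) = ((L σ).comp M₀) (Ninv σ y) := rfl
      _ = (1 + E σ) (Ninv σ y) := by rw [hLM]
      _ = ((1 + E σ) * Ninv σ) y := rfl
      _ = (1 : Y →L[ℂ] Y) y := by rw [h3]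
      _ = y := rfl
  have hGL : ∀ z, (M₀.comp (Ninv σ)) (L σ z) = z := by
    intro z
    have h5 : L σ z = (1 + E σ) (L₀ z) := by
      calc L σ z = ((L σ).comp M₀) (L₀ z) := by
            rw [ContinuousLinearMap.comp_apply, hM₀l]
        _ = (1 + E σ) (L₀ z) := by rw [hLM]
    calc (M₀.comp (Ninv σ)) (L σ z) = M₀ (Ninv σ ((1 + E σ) (L₀ z))) := by
          rw [ContinuousLinearMap.comp_apply, h5]
      _ = M₀ ((Ninv σ * (1 + E σ)) (L₀ z)) := rfl
      _ = M₀ ((1 : Y →L[ℂ] Y) (L₀ z)) := by rw [h3']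
      _ = z := hM₀l z
  refine ⟨⟨fun a b hab => ?_, fun y => ⟨(M₀.comp (Ninv σ)) y, hLG y⟩⟩, ?_, ?_, hR₂d, hR₂'d,
    ?_, ?_, ?_⟩
  · have := congrArg (M₀.comp (Ninv σ)) hab
    rwa [hGL, hGL] at this
  · intro y; rw [hGeq]; exact hLG y
  · intro z; rw [hGeq]; exact hGL z
  · -- ‖R₂ σ‖ ≤ C'
    simp only [hR₂def]
    refine (opNorm_comp_le _ _).trans ?_
    have e1 : ‖M₀‖ * ‖W σ‖ ≤ D * (9 * D ^ 2) :=
      mul_le_mul hKD hWb (norm_nonneg _) hD0.le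
    have e2 : D * (9 * D ^ 2) = 9 * D ^ 3 := by ring
    linarith [hdp4, hdp5, hdp3, e1, pow_nonneg hD0.le 3, pow_nonneg hD0.le 4,
      pow_nonneg hD0.le 5]
  · simp only [hR₂'def]
    refine (opNorm_comp_le _ _).trans ?_
    have e1 : ‖M₀‖ * ‖W' σ‖ ≤ D * (81 * D ^ 3 * ‖σ‖ ^ (-ε)) :=
      mul_le_mul hKD hW'b (norm_nonneg _) hD0.le
    have e2 : D * (81 * D ^ 3 * ‖σ‖ ^ (-ε)) = 81 * (D ^ 4 * ‖σ‖ ^ (-ε)) := by ring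
    have e3 : D ^ 4 * ‖σ‖ ^ (-ε) ≤ D ^ 5 * ‖σ‖ ^ (-ε) :=
      mul_le_mul_of_nonneg_right hdp5 hp0
    have e4 : 0 ≤ D ^ 5 * ‖σ‖ ^ (-ε) := mul_nonneg (pow_nonneg hD0.le 5) hp0
    linarith
  · simp only [hR₂''def]
    refine (opNorm_comp_le _ _).trans ?_
    have e1 : ‖M₀‖ * ‖W'' σ‖ ≤ D * (1433 * D ^ 4 * ‖σ‖ ^ (-1 - ε)) :=
      mul_le_mul hKD hW''b (norm_nonneg _) hD0.le
    have e2 : D * (1433 * D ^ 4 * ‖σ‖ ^ (-1 - ε)) = 1433 * (D ^ 5 * ‖σ‖ ^ (-1 - ε)) := by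
      ring
    have e4 : 0 ≤ D ^ 5 * ‖σ‖ ^ (-1 - ε) := mul_nonneg (pow_nonneg hD0.le 5) hq0
    linarith
end

section
/- Let X be a complex Hilbert space, and let Y and Y′ be complex Banach spaces with a bounded injective linear map j : Y → Y′. Let P and P_n (n ∈ ℕ) be bounded linear bijections from X to Y such that sup_n ‖P_n^{-1}‖ < ∞ and ‖j∘P_n − j∘P‖_{B(X,Y′)} → 0 as n → ∞. Then for every f ∈ Y and every sequence f_n → f in Y, the sequence P_n^{-1} f_n converges weakly in X to P^{-1} f; that is, ⟨P_n^{-1} f_n, x⟩ → ⟨P^{-1} f, x⟩ for every x ∈ X. -/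
open Filter
open scoped Topology

/-- Continuity of an inverse family in the weak operator topology: if the
bijections `Pn` have uniformly bounded inverses `Qn` and `j ∘ Pn → j ∘ P` in norm for an
injective bounded map `j`, then `Qn fn ⇀ Q f` weakly whenever `fn → f`. -/
theorem weak_continuity_of_inverse_family
    {X Y Y' : Type*}
    [NormedAddCommGroup X] [InnerProductSpace ℂ X] [CompleteSpace X]
    [NormedAddCommGroup Y] [NormedSpace ℂ Y] [CompleteSpace Y]
    [NormedAddCommGroup Y'] [NormedSpace ℂ Y'] [CompleteSpace Y']
    (j : Y →L[ℂ] Y') (hj : Function.Injective j)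
    (P : X →L[ℂ] Y) (Pn : ℕ → X →L[ℂ] Y)
    (Q : Y →L[ℂ] X) (Qn : ℕ → Y →L[ℂ] X)
    (hPQ : ∀ y : Y, P (Q y) = y) (hQP : ∀ x : X, Q (P x) = x)
    (hPnQn : ∀ (n : ℕ) (y : Y), Pn n (Qn n y) = y)
    (hQnPn : ∀ (n : ℕ) (x : X), Qn n (Pn n x) = x)
    (M : ℝ) (hM : ∀ n : ℕ, ‖Qn n‖ ≤ M)
    (hconv : Tendsto (fun n : ℕ => ‖j.comp (Pn n) - j.comp P‖) atTop (𝓝 0)) :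
    ∀ (f : Y) (fn : ℕ → Y), Tendsto fn atTop (𝓝 f) →
      ∀ x : X, Tendsto (fun n : ℕ => (inner ℂ (Qn n (fn n)) x : ℂ)) atTop
        (𝓝 (inner ℂ (Q f) x : ℂ)) := by
  intro f fn hfn x
  set u : X := Q f with hu
  set un : ℕ → X := fun n => Qn n (fn n) with hun
  set T : X →L[ℂ] Y' := j.comp P with hT
  -- boundedness of `fn`
  obtain ⟨C0, hC0⟩ : ∃ C0 : ℝ, ∀ n, ‖fn n‖ ≤ C0 := by
    obtain ⟨C0, hC0⟩ := (hfn.norm).bddAbove_range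
    exact ⟨C0, fun n => hC0 ⟨n, rfl⟩⟩
  have hC0' : (0 : ℝ) ≤ C0 := le_trans (norm_nonneg _) (hC0 0)
  have hMnn : (0 : ℝ) ≤ M := le_trans (norm_nonneg _) (hM 0)
  -- uniform bound on `un`
  have hub : ∀ n, ‖un n‖ ≤ M * C0 := by
    intro n
    calc ‖un n‖ ≤ ‖Qn n‖ * ‖fn n‖ := (Qn n).le_opNorm _
    _ ≤ M * C0 := mul_le_mul (hM n) (hC0 n) (norm_nonneg _) hMnn
  -- `T u = j f`
  have hTu : T u = j f := by simp [hT, hu, hPQ]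
  -- convergence `T (un n) → T u` in `Y'`
  have hTun : Tendsto (fun n => T (un n)) atTop (𝓝 (T u)) := by
    have hdecomp : ∀ n, T (un n) = (T - j.comp (Pn n)) (un n) + j (fn n) := by
      intro n
      simp [ContinuousLinearMap.sub_apply, hPnQn, un]
    have h1 : Tendsto (fun n => (T - j.comp (Pn n)) (un n)) atTop (𝓝 0) := by
      have hb : ∀ n, ‖(T - j.comp (Pn n)) (un n)‖ ≤ ‖j.comp (Pn n) - j.comp P‖ * (M * C0) := by
        intro n
        calc ‖(T - j.comp (Pn n)) (un n)‖ ≤ ‖T - j.comp (Pn n)‖ * ‖un n‖ :=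
              (T - j.comp (Pn n)).le_opNorm _
        _ = ‖j.comp (Pn n) - j.comp P‖ * ‖un n‖ := by
              rw [show T - j.comp (Pn n) = -(j.comp (Pn n) - j.comp P) from by rw [hT]; abel,
                norm_neg]
        _ ≤ ‖j.comp (Pn n) - j.comp P‖ * (M * C0) :=
              mul_le_mul_of_nonneg_left (hub n) (norm_nonneg _)
      have hlim : Tendsto (fun n => ‖j.comp (Pn n) - j.comp P‖ * (M * C0)) atTop (𝓝 0) := by
        simpa using hconv.mul_const (M * C0)
      have := squeeze_zero (fun n => norm_nonneg _) hb hlim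
      exact tendsto_zero_iff_norm_tendsto_zero.2 this
    have h2 : Tendsto (fun n => j (fn n)) atTop (𝓝 (j f)) :=
      (j.continuous.tendsto f).comp hfn
    have := h1.add h2
    rw [zero_add] at this
    simpa only [← hdecomp, hTu] using this
  -- the dense submodule of "adjoint" vectors
  set g : StrongDual ℂ Y' → X :=
    fun ℓ => (InnerProductSpace.toDual ℂ X).symm (ℓ.comp T) with hg
  set K : Submodule ℂ X := Submodule.span ℂ (Set.range g) with hK
  have hginner : ∀ (ℓ : StrongDual ℂ Y') (w : X), (inner ℂ (g ℓ) w : ℂ) = ℓ (T w) := by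
    intro ℓ w
    simpa [hg] using (InnerProductSpace.toDual_symm_apply (𝕜 := ℂ) (E := X)
      (x := w) (y := ℓ.comp T))
  -- density of K
  have hdense : (K : Set X) ⊆ closure (K : Set X) := subset_closure
  have hKtop : K.topologicalClosure = ⊤ := by
    have horth : Kᗮ = ⊥ := by
      rw [Submodule.eq_bot_iff]
      intro w hw
      have hTw : T w = 0 := by
        apply NormedSpace.eq_zero_of_forall_dual_eq_zero ℂ
        intro ℓ
        have : (inner ℂ (g ℓ) w : ℂ) = 0 :=
          (Submodule.mem_orthogonal K w).1 hw (g ℓ) (Submodule.subset_span ⟨ℓ, rfl⟩)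
        rwa [hginner] at this
      have hPw : P w = 0 := hj (by simpa [hT] using hTw)
      have := hQP w
      rw [hPw] at this
      simpa using this.symm
    have := K.orthogonal_orthogonal_eq_closure (𝕜 := ℂ)
    rw [horth, Submodule.bot_orthogonal_eq_top] at this
    exact this.symm
  -- convergence of inner ℂ products against elements of K
  have hKconv : ∀ v ∈ K, Tendsto (fun n => (inner ℂ (un n) v : ℂ)) atTop (𝓝 (inner ℂ u v)) := by
    intro v hv
    induction hv using Submodule.span_induction with
    | mem v hv =>
        obtain ⟨ℓ, rfl⟩ := hv
        have h1 : ∀ w : X, (inner ℂ w (g ℓ) : ℂ) = (starRingEnd ℂ) (ℓ (T w)) := by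
          intro w
          rw [← inner_conj_symm, hginner]
        have h2 : Tendsto (fun n => (starRingEnd ℂ) (ℓ (T (un n)))) atTop
            (𝓝 ((starRingEnd ℂ) (ℓ (T u)))) := by
          exact (Complex.continuous_conj.tendsto _).comp ((ℓ.continuous.tendsto _).comp hTun)
        simpa only [h1] using h2
    | zero => simp
    | add v w _ _ hv hw => simpa only [inner_add_right] using hv.add hw
    | smul c v _ hv => simpa only [inner_smul_right] using hv.const_mul c
  -- final epsilon argument
  rw [Metric.tendsto_atTop]
  intro ε hε
  set D : ℝ := M * C0 + ‖u‖ + 1 with hD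
  have hD1 : (1 : ℝ) ≤ D := by
    have h0 : (0:ℝ) ≤ M * C0 := mul_nonneg hMnn hC0'
    rw [hD]; linarith [norm_nonneg u]
  have hD0 : (0 : ℝ) < D := lt_of_lt_of_le one_pos hD1
  -- choose v ∈ K close to x
  have hxcl : x ∈ closure (K : Set X) := by
    have : x ∈ K.topologicalClosure := by rw [hKtop]; trivial
    exact this
  obtain ⟨v, hvK, hvx⟩ := Metric.mem_closure_iff.1 hxcl (ε / (2 * D)) (by positivity)
  obtain ⟨N, hN⟩ := Metric.tendsto_atTop.1 (hKconv v hvK) (ε / 2) (by positivity)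
  refine ⟨N, fun n hn => ?_⟩
  have hnear := hN n hn
  have key : (inner ℂ (un n) x : ℂ) - inner ℂ u x
      = inner ℂ (un n - u) (x - v) + ((inner ℂ (un n) v : ℂ) - inner ℂ u v) := by
    simp only [inner_sub_left, inner_sub_right]
    ring
  rw [dist_eq_norm, key]
  have hb1 : ‖(inner ℂ (un n - u) (x - v) : ℂ)‖ < ε / 2 := by
    have h1 : ‖(inner ℂ (un n - u) (x - v) : ℂ)‖ ≤ ‖un n - u‖ * ‖x - v‖ := norm_inner_le_norm _ _
    have h2 : ‖un n - u‖ ≤ D := by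
      calc ‖un n - u‖ ≤ ‖un n‖ + ‖u‖ := norm_sub_le _ _
      _ ≤ M * C0 + ‖u‖ := by linarith [hub n]
      _ ≤ D := by rw [hD]; linarith
    have h3 : ‖x - v‖ < ε / (2 * D) := by rw [← dist_eq_norm]; exact hvx
    calc ‖(inner ℂ (un n - u) (x - v) : ℂ)‖ ≤ ‖un n - u‖ * ‖x - v‖ := h1
    _ ≤ D * ‖x - v‖ := mul_le_mul_of_nonneg_right h2 (norm_nonneg _)
    _ < D * (ε / (2 * D)) := by
        exact mul_lt_mul_of_pos_left h3 hD0
    _ = ε / 2 := by field_simp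
  have hb2 : ‖(inner ℂ (un n) v : ℂ) - inner ℂ u v‖ < ε / 2 := by
    simpa [dist_eq_norm] using hnear
  calc ‖(inner ℂ (un n - u) (x - v) : ℂ) + ((inner ℂ (un n) v : ℂ) - inner ℂ u v)‖
      ≤ ‖(inner ℂ (un n - u) (x - v) : ℂ)‖ + ‖(inner ℂ (un n) v : ℂ) - inner ℂ u v‖ := norm_add_le _ _
  _ < ε / 2 + ε / 2 := add_lt_add hb1 hb2
  _ = ε := by ring
end

section
/- Let X be a complex Hilbert space and let Y and Z be complex normed spaces. Let ι : X → Z be a compact bounded linear operator. Let P and P_n (n ∈ ℕ) be bounded linear operators from X to Y with ‖P_n − P‖ → 0, and suppose there is a constant C > 0 such that ‖u‖_X ≤ C(‖P_n u‖_Y + ‖ι u‖_Z) for all n ∈ ℕ and all u ∈ X. If P is injective, then there exist N ∈ ℕ and C′ > 0 such that ‖u‖_X ≤ C′·‖P_n u‖_Y for all n ≥ N and all u ∈ X; in particular P_n is injective for all n ≥ N, and the same estimate ‖u‖_X ≤ C′‖P u‖_Y holds for P itself. -/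
theorem key_absorption
    {X Y Z : Type*}
    [NormedAddCommGroup X] [NormedSpace ℂ X] [CompleteSpace X]
    [NormedAddCommGroup Y] [NormedSpace ℂ Y]
    [NormedAddCommGroup Z] [NormedSpace ℂ Z]
    (ι : X →L[ℂ] Z) (hι : IsCompactOperator fun u : X => ι u)
    (P : X →L[ℂ] Y) (C : ℝ) (hC : 0 < C)
    (hest : ∀ u : X, ‖u‖ ≤ C * (‖P u‖ + ‖ι u‖))
    (hinj : Function.Injective P) :
    ∃ D : ℝ, 0 < D ∧ ∀ u : X, ‖u‖ ≤ D * ‖P u‖ := by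
  by_contra h
  push_neg at h
  have hsel : ∀ k : ℕ, ∃ v : X, ‖v‖ = 1 ∧ ‖P v‖ ≤ 1 / (k + 1) := by
    intro k
    obtain ⟨u, hu⟩ := h ((k:ℝ) + 1) (by positivity)
    have hu0 : 0 < ‖u‖ := lt_of_le_of_lt (by positivity) hu
    have hk : (0:ℝ) < (k:ℝ) + 1 := by positivity
    refine ⟨‖u‖⁻¹ • u, ?_, ?_⟩
    · simp [norm_smul, abs_of_pos hu0, inv_mul_cancel₀ hu0.ne']
    · have hP : P (‖u‖⁻¹ • u) = ‖u‖⁻¹ • P u := P.map_smul_of_tower _ _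
      rw [hP, norm_smul, Real.norm_eq_abs, abs_of_pos (inv_pos.2 hu0), le_div_iff₀ hk]
      calc ‖u‖⁻¹ * ‖P u‖ * ((k:ℝ) + 1) = ‖u‖⁻¹ * (((k:ℝ) + 1) * ‖P u‖) := by ring
        _ ≤ ‖u‖⁻¹ * ‖u‖ := mul_le_mul_of_nonneg_left hu.le (by positivity)
        _ = 1 := inv_mul_cancel₀ hu0.ne'
  choose v hv1 hvP using hsel
  -- compactness: extract a subsequence with ι ∘ v convergent
  obtain ⟨K, hK, hKsub⟩ := hι.image_closedBall_subset_compact (𝕜₁ := ℂ)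
    (f := (ι : X →ₗ[ℂ] Z)) 1
  have hmem : ∀ k, ι (v k) ∈ K := by
    intro k
    apply hKsub
    exact ⟨v k, by simp [Metric.mem_closedBall, dist_eq_norm, (hv1 k).le], rfl⟩
  obtain ⟨z, _, φ, hφ, hz⟩ := hK.tendsto_subseq hmem
  -- the subsequence v ∘ φ is Cauchy
  have hcauchy : CauchySeq (v ∘ φ) := by
    rw [Metric.cauchySeq_iff]
    intro ε hε
    have hcz : CauchySeq ((fun k => ι (v k)) ∘ φ) := hz.cauchySeq
    rw [Metric.cauchySeq_iff] at hcz
    obtain ⟨N₁, hN₁⟩ := hcz (ε / (4 * C)) (by positivity)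
    obtain ⟨N₂, hN₂⟩ := exists_nat_gt (4 * C / ε)
    refine ⟨max N₁ N₂, fun m hm n hn => ?_⟩
    have h1 : dist (ι (v (φ m))) (ι (v (φ n))) < ε / (4 * C) :=
      hN₁ m (le_trans (le_max_left _ _) hm) n (le_trans (le_max_left _ _) hn)
    have hφm : N₂ ≤ φ m := le_trans (le_trans (le_max_right _ _) hm) (hφ.le_apply)
    have hφn : N₂ ≤ φ n := le_trans (le_trans (le_max_right _ _) hn) (hφ.le_apply)
    have hPb : ∀ j : ℕ, N₂ ≤ j → ‖P (v j)‖ < ε / (4 * C) := by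
      intro j hj
      refine lt_of_le_of_lt (hvP j) ?_
      rw [div_lt_div_iff₀ (by positivity) (by positivity)]
      have : 4 * C / ε < (j:ℝ) + 1 := by
        refine lt_of_lt_of_le hN₂ ?_
        have : (N₂:ℝ) ≤ (j:ℝ) := Nat.cast_le.2 hj
        linarith
      rw [div_lt_iff₀ hε] at this
      linarith
    have key : ‖v (φ m) - v (φ n)‖ ≤
        C * (‖P (v (φ m) - v (φ n))‖ + ‖ι (v (φ m) - v (φ n))‖) := hest _
    have hPd : ‖P (v (φ m) - v (φ n))‖ ≤ ‖P (v (φ m))‖ + ‖P (v (φ n))‖ := by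
      rw [map_sub]; exact norm_sub_le _ _
    have hιd : ‖ι (v (φ m) - v (φ n))‖ = dist (ι (v (φ m))) (ι (v (φ n))) := by
      rw [map_sub, dist_eq_norm]
    rw [dist_eq_norm]
    have e1 := hPb (φ m) hφm
    have e2 := hPb (φ n) hφn
    calc ‖v (φ m) - v (φ n)‖
        ≤ C * (‖P (v (φ m) - v (φ n))‖ + ‖ι (v (φ m) - v (φ n))‖) := key
      _ ≤ C * ((ε / (4 * C) + ε / (4 * C)) + ε / (4 * C)) := by
          apply mul_le_mul_of_nonneg_left _ hC.le
          rw [hιd]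
          have := h1.le
          have h2 : ‖P (v (φ m) - v (φ n))‖ ≤ ε / (4 * C) + ε / (4 * C) :=
            le_trans hPd (by linarith)
          linarith
      _ = 3 / 4 * ε := by field_simp; ring
      _ < ε := by linarith
  obtain ⟨w, hw⟩ := cauchySeq_tendsto_of_complete hcauchy
  have hwnorm : ‖w‖ = 1 := by
    have h1 : Filter.Tendsto (fun k => ‖v (φ k)‖) Filter.atTop (nhds ‖w‖) :=
      (continuous_norm.tendsto w).comp hw
    have h2 : (fun k => ‖v (φ k)‖) = fun _ => (1:ℝ) := funext fun k => hv1 _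
    rw [h2] at h1
    exact tendsto_nhds_unique h1 tendsto_const_nhds
  have hPw : P w = 0 := by
    have h1 : Filter.Tendsto (fun k => P (v (φ k))) Filter.atTop (nhds (P w)) :=
      (P.continuous.tendsto w).comp hw
    have h2 : Filter.Tendsto (fun k => P (v (φ k))) Filter.atTop (nhds 0) := by
      rw [tendsto_zero_iff_norm_tendsto_zero]
      apply squeeze_zero (fun k => norm_nonneg _) (fun k => hvP (φ k))
      have : Filter.Tendsto (fun k : ℕ => 1 / ((k:ℝ) + 1)) Filter.atTop (nhds 0) :=
        tendsto_one_div_add_atTop_nhds_zero_nat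
      exact this.comp hφ.tendsto_atTop
    exact tendsto_nhds_unique h1 h2
  have : w = 0 := hinj (by rw [hPw, map_zero])
  rw [this, norm_zero] at hwnorm
  norm_num at hwnorm

/-- Compactness absorption: uniform estimates
`‖u‖ ≤ C (‖Pn u‖ + ‖ι u‖)` with `ι` compact, `Pn → P` in norm, and `P` injective yield a
uniform estimate `‖u‖ ≤ C' ‖Pn u‖` for large `n` (hence injectivity of `Pn`), and the same
estimate for `P`. -/
theorem compactness_absorption
    {X Y Z : Type*}
    [NormedAddCommGroup X] [InnerProductSpace ℂ X] [CompleteSpace X]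
    [NormedAddCommGroup Y] [NormedSpace ℂ Y]
    [NormedAddCommGroup Z] [NormedSpace ℂ Z]
    (ι : X →L[ℂ] Z) (hι : IsCompactOperator fun u : X => ι u)
    (P : X →L[ℂ] Y) (Pn : ℕ → X →L[ℂ] Y)
    (hconv : Filter.Tendsto (fun n : ℕ => ‖Pn n - P‖) Filter.atTop (nhds 0))
    (C : ℝ) (hC : 0 < C)
    (hest : ∀ (n : ℕ) (u : X), ‖u‖ ≤ C * (‖Pn n u‖ + ‖ι u‖))
    (hinj : Function.Injective P) :
    ∃ (N : ℕ) (C' : ℝ), 0 < C' ∧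
      (∀ n ≥ N, ∀ u : X, ‖u‖ ≤ C' * ‖Pn n u‖) ∧
      (∀ n ≥ N, Function.Injective (Pn n)) ∧
      (∀ u : X, ‖u‖ ≤ C' * ‖P u‖) := by
  -- first, pass to the limit to get the estimate for P
  have hestP : ∀ u : X, ‖u‖ ≤ C * (‖P u‖ + ‖ι u‖) := by
    intro u
    have h1 : Filter.Tendsto (fun n => C * (‖Pn n u‖ + ‖ι u‖)) Filter.atTop
        (nhds (C * (‖P u‖ + ‖ι u‖))) := by
      have hPnu : Filter.Tendsto (fun n => ‖Pn n u‖) Filter.atTop (nhds ‖P u‖) := by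
        have hdiff : Filter.Tendsto (fun n => ‖Pn n u - P u‖) Filter.atTop (nhds 0) := by
          apply squeeze_zero (fun n => norm_nonneg _) (fun n => ?_)
            (by simpa using hconv.mul_const ‖u‖)
          calc ‖Pn n u - P u‖ = ‖(Pn n - P) u‖ := by simp
            _ ≤ ‖Pn n - P‖ * ‖u‖ := (Pn n - P).le_opNorm u
        have htend : Filter.Tendsto (fun n => Pn n u) Filter.atTop (nhds (P u)) :=
          tendsto_iff_norm_sub_tendsto_zero.2 hdiff
        exact (continuous_norm.tendsto _).comp htend
      exact (hPnu.add tendsto_const_nhds).const_mul C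
    exact le_of_tendsto_of_tendsto tendsto_const_nhds h1
      (Filter.Eventually.of_forall fun n => hest n u)
  obtain ⟨D, hD, hDest⟩ := key_absorption ι hι P C hC hestP hinj
  -- choose N with ‖Pn n - P‖ ≤ 1/(2D) for n ≥ N
  have hhalf : ∀ᶠ n in Filter.atTop, ‖Pn n - P‖ < 1 / (2 * D) := by
    have := hconv
    rw [Metric.tendsto_nhds] at this
    filter_upwards [this (1 / (2 * D)) (by positivity)] with n hn
    rw [Real.dist_eq, sub_zero] at hn
    exact lt_of_le_of_lt (le_abs_self _) hn
  obtain ⟨N, hN⟩ := hhalf.exists_forall_of_atTop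
  have hPn : ∀ n ≥ N, ∀ u : X, ‖u‖ ≤ max (2 * D) D * ‖Pn n u‖ := by
    intro n hn u
    have h1 : ‖u‖ ≤ D * ‖P u‖ := hDest u
    have h2 : ‖P u‖ ≤ ‖Pn n u‖ + ‖Pn n u - P u‖ := by
      have h := norm_sub_norm_le (P u) (Pn n u)
      rw [norm_sub_rev] at h
      linarith
    have h3 : ‖Pn n u - P u‖ ≤ (1 / (2 * D)) * ‖u‖ := by
      calc ‖Pn n u - P u‖ = ‖(Pn n - P) u‖ := by simp
        _ ≤ ‖Pn n - P‖ * ‖u‖ := (Pn n - P).le_opNorm u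
        _ ≤ (1 / (2 * D)) * ‖u‖ := by
            exact mul_le_mul_of_nonneg_right (hN n hn).le (norm_nonneg _)
    have h4 : ‖u‖ ≤ D * ‖Pn n u‖ + (1/2) * ‖u‖ := by
      calc ‖u‖ ≤ D * ‖P u‖ := h1
        _ ≤ D * (‖Pn n u‖ + (1 / (2 * D)) * ‖u‖) := by
            apply mul_le_mul_of_nonneg_left _ hD.le
            exact h2.trans (by linarith)
        _ = D * ‖Pn n u‖ + (1/2) * ‖u‖ := by field_simp
    have h5 : ‖u‖ ≤ 2 * D * ‖Pn n u‖ := by linarith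
    exact h5.trans (mul_le_mul_of_nonneg_right (le_max_left _ _) (norm_nonneg _))
  refine ⟨N, max (2 * D) D, lt_of_lt_of_le hD (le_max_right _ _), hPn, ?_, ?_⟩
  · intro n hn u1 u2 huv
    have h0 : ‖u1 - u2‖ ≤ max (2 * D) D * ‖Pn n (u1 - u2)‖ := hPn n hn _
    rw [map_sub, huv, sub_self, norm_zero, mul_zero] at h0
    have : u1 - u2 = 0 := norm_le_zero_iff.1 h0
    exact sub_eq_zero.1 this
  · intro u
    exact (hDest u).trans (mul_le_mul_of_nonneg_right (le_max_right _ _) (norm_nonneg _))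
end

section
/- Let X and Y be complex Banach spaces, let T, S : X → Y be bounded linear operators, let h ∈ X with h ≠ 0 and T h = 0, and suppose there is c > 0 such that ‖T x‖ ≥ c·inf_{t ∈ ℂ} ‖x − t·h‖ for all x ∈ X. Let h* ∈ Y* be a bounded linear functional with h* ∘ T = 0 and h*(S h) ≠ 0. Then there is γ₀ > 0 such that for every γ ∈ ℂ with 0 < |γ| < γ₀ the operator T + γ·S is injective. -/
/-- Abstract constraint damping: if `T` has closed range with kernel
exactly `ℂ h` (encoded by `‖T x‖ ≥ c · dist(x, ℂ h)`), the functional `h*` annihilates the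
range of `T`, and the pairing `h*(S h)` is nonzero, then `T + γ S` is injective for all
sufficiently small nonzero `γ`. -/
theorem abstract_constraint_damping_injectivity
    {X Y : Type*} [NormedAddCommGroup X] [NormedSpace ℂ X] [CompleteSpace X]
    [NormedAddCommGroup Y] [NormedSpace ℂ Y] [CompleteSpace Y]
    (T S : X →L[ℂ] Y) (h : X) (hh : h ≠ 0) (hTh : T h = 0)
    (c : ℝ) (hc : 0 < c)
    (hT : ∀ x : X, c * (⨅ t : ℂ, ‖x - t • h‖) ≤ ‖T x‖)
    (hstar : Y →L[ℂ] ℂ)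
    (hsT : ∀ x : X, hstar (T x) = 0)
    (hsS : hstar (S h) ≠ 0) :
    ∃ γ₀ : ℝ, 0 < γ₀ ∧ ∀ γ : ℂ, 0 < ‖γ‖ → ‖γ‖ < γ₀ →
      Function.Injective (T + γ • S) := by
  set a := ‖hstar (S h)‖ with ha_def
  have ha : 0 < a := norm_pos_iff.mpr hsS
  set N := ‖hstar‖ * ‖S‖ with hN_def
  have hN0 : 0 ≤ N := mul_nonneg (norm_nonneg _) (norm_nonneg _)
  set M := N * ‖h‖ / a + 1 with hM_def
  have hM1 : (1 : ℝ) ≤ M :=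
    le_add_of_nonneg_left (div_nonneg (mul_nonneg hN0 (norm_nonneg _)) ha.le)
  have hM0 : (0 : ℝ) < M := lt_of_lt_of_le one_pos hM1
  have hden : (0 : ℝ) < ‖S‖ * M + 1 := by positivity
  refine ⟨c / (‖S‖ * M + 1), div_pos hc hden, ?_⟩
  intro γ hγ0 hγ1
  have hγne : γ ≠ 0 := norm_pos_iff.mp hγ0
  intro x y hxy
  rw [← sub_eq_zero]
  set z := x - y with hz_def
  have hz' : T z + γ • S z = 0 := by
    have : (T + γ • S) z = 0 := by rw [map_sub, hxy, sub_self]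
    simpa [ContinuousLinearMap.add_apply] using this
  have hTz : T z = -(γ • S z) := eq_neg_of_add_eq_zero_left hz'
  have hSz : hstar (S z) = 0 := by
    have h1 : hstar (T z) + γ * hstar (S z) = 0 := by
      have := congrArg hstar hz'
      simpa [map_add, map_smul, smul_eq_mul] using this
    rw [hsT z, zero_add] at h1
    exact (mul_eq_zero.mp h1).resolve_left hγne
  set d := ⨅ t : ℂ, ‖z - t • h‖ with hd_def
  have hd0 : 0 ≤ d := Real.iInf_nonneg fun t => norm_nonneg _
  have hdle : c * d ≤ ‖γ‖ * (‖S‖ * ‖z‖) := by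
    calc c * d ≤ ‖T z‖ := hT z
      _ = ‖γ • S z‖ := by rw [hTz, norm_neg]
      _ = ‖γ‖ * ‖S z‖ := norm_smul _ _
      _ ≤ ‖γ‖ * (‖S‖ * ‖z‖) := by gcongr; exact S.le_opNorm z
  have key : ∀ ε > (0 : ℝ), ‖z‖ ≤ M * (d + ε) := by
    intro ε hε
    obtain ⟨t, ht⟩ : ∃ t : ℂ, ‖z - t • h‖ < d + ε := by
      apply exists_lt_of_ciInf_lt
      linarith
    have htle : ‖t‖ * a ≤ N * (d + ε) := by
      have h2 : hstar (S (z - t • h)) = -(t * hstar (S h)) := by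
        simp [map_sub, map_smul, hSz, smul_eq_mul]
      calc ‖t‖ * a = ‖hstar (S (z - t • h))‖ := by
            rw [h2, norm_neg, norm_mul]
        _ ≤ ‖hstar‖ * ‖S (z - t • h)‖ := hstar.le_opNorm _
        _ ≤ ‖hstar‖ * (‖S‖ * ‖z - t • h‖) := by gcongr; exact S.le_opNorm _
        _ = N * ‖z - t • h‖ := by rw [hN_def, mul_assoc]
        _ ≤ N * (d + ε) := by gcongr
    have htb : ‖t‖ ≤ N * (d + ε) / a := (le_div_iff₀ ha).mpr htle
    have hzle : ‖z‖ ≤ ‖t‖ * ‖h‖ + (d + ε) := by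
      calc ‖z‖ = ‖t • h + (z - t • h)‖ := by rw [add_sub_cancel]
        _ ≤ ‖t • h‖ + ‖z - t • h‖ := norm_add_le _ _
        _ = ‖t‖ * ‖h‖ + ‖z - t • h‖ := by rw [norm_smul]
        _ ≤ ‖t‖ * ‖h‖ + (d + ε) := by linarith
    have hth : ‖t‖ * ‖h‖ ≤ N * ‖h‖ / a * (d + ε) := by
      have : ‖t‖ * ‖h‖ ≤ N * (d + ε) / a * ‖h‖ := by
        gcongr
      calc ‖t‖ * ‖h‖ ≤ N * (d + ε) / a * ‖h‖ := this
        _ = N * ‖h‖ / a * (d + ε) := by ring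
    calc ‖z‖ ≤ ‖t‖ * ‖h‖ + (d + ε) := hzle
      _ ≤ N * ‖h‖ / a * (d + ε) + (d + ε) := by linarith
      _ = M * (d + ε) := by rw [hM_def]; ring
  have hd' : d ≤ ‖γ‖ * ‖S‖ / c * ‖z‖ := by
    rw [div_mul_eq_mul_div, le_div_iff₀ hc]
    nlinarith [hdle]
  have hzK : ∀ ε > (0 : ℝ), ‖z‖ ≤ M * (‖γ‖ * ‖S‖ / c * ‖z‖ + ε) := by
    intro ε hε
    calc ‖z‖ ≤ M * (d + ε) := key ε hε
      _ ≤ M * (‖γ‖ * ‖S‖ / c * ‖z‖ + ε) := by gcongr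
  have hK : M * (‖γ‖ * ‖S‖ / c) < 1 := by
    rw [mul_div_assoc', div_lt_one hc]
    have h3 : ‖γ‖ * (‖S‖ * M + 1) < c := (lt_div_iff₀ hden).mp hγ1
    nlinarith [hγ0]
  have hKnn : 0 ≤ M * (‖γ‖ * ‖S‖ / c) := by positivity
  by_contra hne
  have hzpos : 0 < ‖z‖ := norm_pos_iff.mpr hne
  set K := M * (‖γ‖ * ‖S‖ / c) with hK_def
  have hεpos : 0 < (1 - K) * ‖z‖ / (2 * M) := by
    have : 0 < 1 - K := by linarith
    positivity
  have hfin := hzK ((1 - K) * ‖z‖ / (2 * M)) hεpos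
  have hexp : M * (‖γ‖ * ‖S‖ / c * ‖z‖ + (1 - K) * ‖z‖ / (2 * M)) =
      K * ‖z‖ + (1 - K) * ‖z‖ / 2 := by
    rw [hK_def]
    field_simp
  rw [hexp] at hfin
  nlinarith
end

section
/- Let N ≥ 1 and let L be a function from an open disc around 0 in ℂ to the N×N complex matrices which is analytic at 0. Suppose there are nonzero vectors h, h* ∈ ℂ^N such that the kernel of L(0) is ℂ·h and the kernel of L(0)^H is ℂ·h*, where ^H denotes the conjugate transpose, and suppose that c := (h*)^H · (L′(0)·h) ≠ 0, where L′(0) is the derivative of L at 0. Then there is ε > 0 such that L(σ) is invertible for all σ with 0 < |σ| < ε, and σ·L(σ)^{-1} converges, as σ → 0, to c^{-1}·h·(h*)^H. In particular, L(σ)^{-1} has a simple (first-order) pole at σ = 0 with nonzero residue. -/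
open Filter Matrix
open scoped Topology ComplexConjugate


private lemma det_differentiableAt {n : ℕ} {M : ℂ → Matrix (Fin n) (Fin n) ℂ}
    (hM : ∀ i j, DifferentiableAt ℂ (fun σ => M σ i j) 0) :
    DifferentiableAt ℂ (fun σ => (M σ).det) 0 := by
  simp only [Matrix.det_apply']
  refine DifferentiableAt.fun_sum fun p _ => DifferentiableAt.const_mul ?_ _
  exact DifferentiableAt.fun_finsetProd fun i _ => hM (p i) i

private lemma sum_conj_mul_self_ne_zero {n : ℕ} {v : Fin n → ℂ} (hv : v ≠ 0) :
    (∑ i, conj (v i) * v i) ≠ 0 := by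
  have h1 : (∑ i, conj (v i) * v i) = ((∑ i, Complex.normSq (v i) : ℝ) : ℂ) := by
    push_cast
    exact Finset.sum_congr rfl fun i _ => (Complex.normSq_eq_conj_mul_self (z := v i)).symm
  rw [h1, Complex.ofReal_ne_zero]
  obtain ⟨i, hi⟩ := Function.ne_iff.mp hv
  have : 0 < ∑ i, Complex.normSq (v i) :=
    Finset.sum_pos' (fun j _ => Complex.normSq_nonneg _)
      ⟨i, Finset.mem_univ i, by simpa [Complex.normSq_pos] using hi⟩
  exact ne_of_gt this

private lemma rank_one_mul_mul {n : ℕ} (u v : Fin n → ℂ) (B : Matrix (Fin n) (Fin n) ℂ) :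
    (Matrix.of fun i j => u i * v j) * B * (Matrix.of fun i j => u i * v j)
      = (∑ k, v k * (B.mulVec u) k) • (Matrix.of fun i j => u i * v j) := by
  ext i j
  simp only [Matrix.mul_apply, Matrix.smul_apply, Matrix.of_apply, Matrix.mulVec,
    dotProduct, smul_eq_mul, Finset.sum_mul, Finset.mul_sum]
  rw [Finset.sum_comm]
  refine Finset.sum_congr rfl fun k _ => Finset.sum_congr rfl fun l _ => by ring

/-- Finite-dimensional model for the simple pole of the resolvent at zero
energy: a matrix family `L(σ)`, analytic at `0`, with one-dimensional kernel `ℂ h` and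
cokernel `ℂ h*` at `σ = 0` and nondegenerate pairing `c = (h*)ᴴ L'(0) h ≠ 0`, is invertible
for small `σ ≠ 0` and `σ L(σ)⁻¹ → c⁻¹ h (h*)ᴴ ≠ 0`. -/
theorem matrix_family_simple_pole
    (N : ℕ) (hN : 1 ≤ N)
    (L : ℂ → Matrix (Fin N) (Fin N) ℂ)
    (hL : ∀ i j : Fin N, AnalyticAt ℂ (fun σ => L σ i j) 0)
    (h hstar : Fin N → ℂ) (hh : h ≠ 0) (hhstar : hstar ≠ 0)
    (hker : ∀ v : Fin N → ℂ, (L 0).mulVec v = 0 ↔ ∃ t : ℂ, v = t • h)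
    (hcoker : ∀ v : Fin N → ℂ, (L 0)ᴴ.mulVec v = 0 ↔ ∃ t : ℂ, v = t • hstar)
    (c : ℂ)
    (hc : c = ∑ i : Fin N, conj (hstar i) *
      ∑ j : Fin N, deriv (fun σ => L σ i j) 0 * h j)
    (hc0 : c ≠ 0) :
    ∃ ε > (0 : ℝ),
      (∀ σ : ℂ, σ ≠ 0 → ‖σ‖ < ε → IsUnit (L σ)) ∧
      Tendsto (fun σ : ℂ => σ • (L σ)⁻¹) (𝓝[≠] (0 : ℂ))
        (𝓝 (c⁻¹ • Matrix.of fun i j : Fin N => h i * conj (hstar j))) ∧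
      c⁻¹ • Matrix.of (fun i j : Fin N => h i * conj (hstar j)) ≠ 0 := by
  -- setup
  set K : Matrix (Fin N) (Fin N) ℂ := Matrix.of (fun i j => hstar i * conj (h j)) with hKdef
  set M : ℂ → Matrix (Fin N) (Fin N) ℂ := fun σ => L σ + K with hMdef
  set a : ℂ := ∑ i, conj (h i) * h i with hadef
  set b : ℂ := ∑ i, conj (hstar i) * hstar i with hbdef
  have ha : a ≠ 0 := hadef ▸ sum_conj_mul_self_ne_zero hh
  have hb : b ≠ 0 := hbdef ▸ sum_conj_mul_self_ne_zero hhstar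
  -- kernel facts
  have hL0h : (L 0).mulVec h = 0 := (hker h).mpr ⟨1, (one_smul _ _).symm⟩
  have hL0star : (L 0)ᴴ.mulVec hstar = 0 := (hcoker hstar).mpr ⟨1, (one_smul _ _).symm⟩
  have hrow : ∀ j, ∑ i, conj (hstar i) * L 0 i j = 0 := by
    intro j
    have := congrFun hL0star j
    simp only [Matrix.mulVec, dotProduct, Matrix.conjTranspose_apply, Pi.zero_apply] at this
    have e2 := congrArg conj this
    rw [map_sum] at e2
    simpa [mul_comm] using e2
  -- K acting on h
  have hKh : K.mulVec h = a • hstar := by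
    funext i
    simp only [Matrix.mulVec, dotProduct, hKdef, Matrix.of_apply, Pi.smul_apply,
      smul_eq_mul, hadef, Finset.mul_sum, Finset.sum_mul]
    exact Finset.sum_congr rfl fun k _ => by ring
  have hM0h : (M 0).mulVec h = a • hstar := by
    rw [hMdef]
    simp only [Matrix.add_mulVec, hL0h, hKh, zero_add]
  -- M 0 is invertible
  have hdetM0 : (M 0).det ≠ 0 := by
    intro hdet
    obtain ⟨v, hv0, hvm⟩ := (Matrix.exists_mulVec_eq_zero_iff).mpr hdet
    set s : ℂ := ∑ j, conj (h j) * v j with hsdef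
    have hKv : K.mulVec v = s • hstar := by
      funext i
      simp only [Matrix.mulVec, dotProduct, hKdef, Matrix.of_apply, Pi.smul_apply,
        smul_eq_mul, hsdef, Finset.sum_mul]
      exact Finset.sum_congr rfl fun k _ => by ring
    have hLv : (L 0).mulVec v = -(s • hstar) := by
      have h2 : (L 0).mulVec v + K.mulVec v = 0 := by
        rw [← Matrix.add_mulVec]; exact hvm
      rw [hKv] at h2
      exact eq_neg_of_add_eq_zero_left h2
    have hpair : ∑ i, conj (hstar i) * ((L 0).mulVec v) i = 0 := by
      calc ∑ i, conj (hstar i) * ((L 0).mulVec v) i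
          = ∑ j, (∑ i, conj (hstar i) * L 0 i j) * v j := by
            simp only [Matrix.mulVec, dotProduct, Finset.mul_sum, Finset.sum_mul]
            rw [Finset.sum_comm]
            exact Finset.sum_congr rfl fun j _ => Finset.sum_congr rfl fun i _ => by ring
        _ = 0 := by simp [hrow]
    rw [hLv] at hpair
    have hsb : s * b = 0 := by
      have e : s * b = -∑ i, conj (hstar i) * (-(s • hstar)) i := by
        rw [hbdef, Finset.mul_sum, ← Finset.sum_neg_distrib]
        exact Finset.sum_congr rfl fun i _ => by
          simp only [Pi.neg_apply, Pi.smul_apply, smul_eq_mul]; ring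
      rw [hpair, neg_zero] at e
      exact e
    have hs0 : s = 0 := by
      rcases mul_eq_zero.mp hsb with h' | h'
      · exact h'
      · exact absurd h' hb
    rw [hs0, zero_smul, neg_zero] at hLv
    obtain ⟨t, rfl⟩ := (hker v).mp hLv
    have : s = t * a := by
      rw [hsdef, hadef, Finset.mul_sum]
      exact Finset.sum_congr rfl fun i _ => by simp [Pi.smul_apply, smul_eq_mul]; ring
    rw [hs0] at this
    have ht : t = 0 := by
      rcases mul_eq_zero.mp this.symm with h' | h'
      · exact h'
      · exact absurd h' ha
    rw [ht, zero_smul] at hv0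
    exact hv0 rfl
  have hM0unit : IsUnit (M 0).det := isUnit_iff_ne_zero.mpr hdetM0
  -- differentiability
  have hMdiff : ∀ i j, DifferentiableAt ℂ (fun σ => M σ i j) 0 := by
    intro i j
    have e : (fun σ => M σ i j) = fun σ => L σ i j + K i j := rfl
    rw [e]; exact ((hL i j).differentiableAt).add_const _
  have hdetdiff : DifferentiableAt ℂ (fun σ => (M σ).det) 0 := det_differentiableAt hMdiff
  have hadjdiff : ∀ i j, DifferentiableAt ℂ (fun σ => (M σ).adjugate i j) 0 := by
    intro i j
    simp only [Matrix.adjugate_apply]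
    apply det_differentiableAt
    intro p q
    rcases eq_or_ne p j with rfl | hpj
    · simpa [Matrix.updateRow_apply] using differentiableAt_const (Pi.single i (1:ℂ) q)
    · have e : (fun σ => (M σ).updateRow j (Pi.single i 1) p q) = fun σ => M σ p q := by
        funext σ; simp [Matrix.updateRow_apply, hpj]
      rw [e]; exact hMdiff p q
  have hinvdiff : ∀ i j, DifferentiableAt ℂ (fun σ => (M σ)⁻¹ i j) 0 := by
    intro i j
    have e : (fun σ => (M σ)⁻¹ i j) = fun σ => ((M σ).det)⁻¹ * (M σ).adjugate i j := by
      funext σ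
      rw [Matrix.inv_def, Ring.inverse_eq_inv]
      simp [Matrix.smul_apply]
    rw [e]
    exact (hdetdiff.inv hdetM0).mul (hadjdiff i j)
  -- the vector w and the scalar function g
  set w : ℂ → Fin N → ℂ := fun σ => (M σ)⁻¹.mulVec hstar with hwdef
  set g : ℂ → ℂ := fun σ => 1 - ∑ i, conj (h i) * w σ i with hgdef
  have hwapp : ∀ σ i, w σ i = ∑ j, (M σ)⁻¹ i j * hstar j := by
    intro σ i; rfl
  have hwdiff : ∀ i, DifferentiableAt ℂ (fun σ => w σ i) 0 := by
    intro i
    have e : (fun σ => w σ i) = fun σ => ∑ j, (M σ)⁻¹ i j * hstar j := by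
      funext σ; exact hwapp σ i
    rw [e]
    exact DifferentiableAt.fun_sum fun j _ => (hinvdiff i j).mul_const _
  have hgdiff : DifferentiableAt ℂ g 0 := by
    rw [hgdef]
    exact (differentiableAt_const _).sub
      (DifferentiableAt.fun_sum fun i _ => (differentiableAt_const _).mul (hwdiff i))
  -- value of w at 0
  have hw0 : w 0 = a⁻¹ • h := by
    have h1 : (M 0).mulVec (a⁻¹ • h) = hstar := by
      rw [Matrix.mulVec_smul, hM0h, smul_smul, inv_mul_cancel₀ ha, one_smul]
    have h2 : (M 0)⁻¹.mulVec ((M 0).mulVec (a⁻¹ • h)) = a⁻¹ • h := by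
      rw [Matrix.mulVec_mulVec, Matrix.nonsing_inv_mul _ hM0unit, Matrix.one_mulVec]
    rw [h1] at h2
    exact h2
  have hg0 : g 0 = 0 := by
    rw [hgdef]
    simp only [hw0, Pi.smul_apply, smul_eq_mul]
    have e : ∑ i, conj (h i) * (a⁻¹ * h i) = a⁻¹ * a := by
      rw [hadef, Finset.mul_sum]
      exact Finset.sum_congr rfl fun i _ => by ring
    rw [e, inv_mul_cancel₀ ha, sub_self]
  -- row identities at 0
  have hrow0 : ∀ j, ∑ i, conj (hstar i) * M 0 i j = b * conj (h j) := by
    intro j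
    have e : ∀ i, conj (hstar i) * M 0 i j
        = conj (hstar i) * L 0 i j + conj (hstar i) * hstar i * conj (h j) := by
      intro i
      rw [hMdef]
      simp only [Matrix.add_apply, hKdef, Matrix.of_apply]
      ring
    simp only [e, Finset.sum_add_distrib, hrow j, zero_add, hbdef, Finset.sum_mul]
  have hM0M0inv : M 0 * (M 0)⁻¹ = 1 := Matrix.mul_nonsing_inv _ hM0unit
  have hrowinv : ∀ j, ∑ i, conj (h i) * (M 0)⁻¹ i j = b⁻¹ * conj (hstar j) := by
    intro j
    have e1 : ∑ i, (b * conj (h i)) * (M 0)⁻¹ i j = conj (hstar j) := by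
      calc ∑ i, (b * conj (h i)) * (M 0)⁻¹ i j
          = ∑ i, (∑ k, conj (hstar k) * M 0 k i) * (M 0)⁻¹ i j :=
            Finset.sum_congr rfl fun i _ => by rw [hrow0 i]
        _ = ∑ k, conj (hstar k) * ∑ i, M 0 k i * (M 0)⁻¹ i j := by
            simp only [Finset.sum_mul, Finset.mul_sum]
            rw [Finset.sum_comm]
            exact Finset.sum_congr rfl fun k _ => Finset.sum_congr rfl fun i _ => by ring
        _ = ∑ k, conj (hstar k) * (1 : Matrix (Fin N) (Fin N) ℂ) k j :=
            Finset.sum_congr rfl fun k _ => by rw [← Matrix.mul_apply, hM0M0inv]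
        _ = conj (hstar j) := by
            simp [Matrix.one_apply, Finset.sum_ite_eq]
    have e2 : b * ∑ i, conj (h i) * (M 0)⁻¹ i j = conj (hstar j) := by
      rw [Finset.mul_sum, ← e1]
      exact Finset.sum_congr rfl fun i _ => by ring
    rw [← e2, ← mul_assoc, inv_mul_cancel₀ hb, one_mul]
  -- derivatives
  set L' : Matrix (Fin N) (Fin N) ℂ := Matrix.of (fun i j => deriv (fun σ => L σ i j) 0) with hL'def
  set w' : Fin N → ℂ := fun i => deriv (fun σ => w σ i) 0 with hw'def
  have hMderiv : ∀ i j, HasDerivAt (fun σ => M σ i j) (L' i j) 0 := by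
    intro i j
    have e : (fun σ => M σ i j) = fun σ => L σ i j + K i j := rfl
    rw [e, hL'def]
    simpa using ((hL i j).differentiableAt.hasDerivAt).add_const (K i j)
  have hdetcont : ContinuousAt (fun σ => (M σ).det) 0 := hdetdiff.continuousAt
  have hev_det : ∀ᶠ σ in 𝓝 (0:ℂ), (M σ).det ≠ 0 := hdetcont.eventually_ne hdetM0
  have hev_inv : ∀ᶠ σ in 𝓝 (0:ℂ), M σ * (M σ)⁻¹ = 1 ∧ (M σ)⁻¹ * M σ = 1 :=
    hev_det.mono fun σ hσ =>
      ⟨Matrix.mul_nonsing_inv _ (isUnit_iff_ne_zero.mpr hσ),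
       Matrix.nonsing_inv_mul _ (isUnit_iff_ne_zero.mpr hσ)⟩
  have hcomp : ∀ i, ∀ᶠ σ in 𝓝 (0:ℂ), ∑ j, M σ i j * w σ j = hstar i := by
    intro i
    refine hev_inv.mono fun σ hσ => ?_
    have e : (M σ).mulVec ((M σ)⁻¹.mulVec hstar) = hstar := by
      rw [Matrix.mulVec_mulVec, hσ.1, Matrix.one_mulVec]
    simpa [Matrix.mulVec, dotProduct, hwapp] using congrFun e i
  have hkey : ∀ i, ∑ j, (L' i j * w 0 j + M 0 i j * w' j) = 0 := by
    intro i
    have hF : HasDerivAt (fun σ => ∑ j, M σ i j * w σ j)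
        (∑ j, (L' i j * w 0 j + M 0 i j * w' j)) 0 := by
      refine HasDerivAt.fun_sum fun j _ => ?_
      exact (hMderiv i j).mul ((hwdiff j).hasDerivAt)
    have hG : HasDerivAt (fun σ => ∑ j, M σ i j * w σ j) 0 0 :=
      (hasDerivAt_const (0:ℂ) (hstar i)).congr_of_eventuallyEq (hcomp i)
    exact hF.unique hG
  have hgderiv : HasDerivAt g (-∑ i, conj (h i) * w' i) 0 := by
    have hs : HasDerivAt (fun σ => ∑ i, conj (h i) * w σ i) (∑ i, conj (h i) * w' i) 0 :=
      HasDerivAt.fun_sum fun i _ => ((hwdiff i).hasDerivAt).const_mul _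
    have := hs.const_sub 1
    rw [hgdef]
    exact this
  have hsum0 : ∑ i, conj (hstar i) * (∑ j, (L' i j * w 0 j + M 0 i j * w' j)) = 0 := by
    simp [hkey]
  have hTerm1 : ∑ i, conj (hstar i) * ∑ j, L' i j * w 0 j = a⁻¹ * c := by
    rw [hc, Finset.mul_sum]
    refine Finset.sum_congr rfl fun i _ => ?_
    simp only [hw0, Pi.smul_apply, smul_eq_mul, hL'def, Matrix.of_apply, Finset.mul_sum]
    exact Finset.sum_congr rfl fun j _ => by ring
  have hTerm2 : ∑ i, conj (hstar i) * ∑ j, M 0 i j * w' j = b * ∑ j, conj (h j) * w' j := by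
    calc ∑ i, conj (hstar i) * ∑ j, M 0 i j * w' j
        = ∑ j, (∑ i, conj (hstar i) * M 0 i j) * w' j := by
          simp only [Finset.mul_sum, Finset.sum_mul]
          rw [Finset.sum_comm]
          exact Finset.sum_congr rfl fun j _ => Finset.sum_congr rfl fun i _ => by ring
      _ = b * ∑ j, conj (h j) * w' j := by
          rw [Finset.mul_sum]
          exact Finset.sum_congr rfl fun j _ => by rw [hrow0 j]; ring
  have hgval : HasDerivAt g (a⁻¹ * b⁻¹ * c) 0 := by
    have esplit : ∑ i, conj (hstar i) * (∑ j, (L' i j * w 0 j + M 0 i j * w' j))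
        = (∑ i, conj (hstar i) * ∑ j, L' i j * w 0 j)
          + ∑ i, conj (hstar i) * ∑ j, M 0 i j * w' j := by
      rw [← Finset.sum_add_distrib]
      exact Finset.sum_congr rfl fun i _ => by rw [Finset.sum_add_distrib, mul_add]
    have e0 : a⁻¹ * c + b * ∑ j, conj (h j) * w' j = 0 := by
      rw [← hTerm1, ← hTerm2, ← esplit, hsum0]
    have e : -∑ i, conj (h i) * w' i = a⁻¹ * b⁻¹ * c := by
      have hb' : (∑ j, conj (h j) * w' j) = -(a⁻¹ * b⁻¹ * c) := by
        field_simp at e0 ⊢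
        linear_combination e0
      rw [hb', neg_neg]
    exact e ▸ hgderiv
  have hg'0 : a⁻¹ * b⁻¹ * c ≠ 0 := mul_ne_zero (mul_ne_zero (inv_ne_zero ha) (inv_ne_zero hb)) hc0
  -- slope limits
  have hslope : Tendsto (fun σ => g σ / σ) (𝓝[≠] (0:ℂ)) (𝓝 (a⁻¹ * b⁻¹ * c)) := by
    have ht := hasDerivAt_iff_tendsto_slope.mp hgval
    refine ht.congr fun σ => ?_
    rw [slope_def_field, hg0]
    ring
  have hinvslope : Tendsto (fun σ => σ / g σ) (𝓝[≠] (0:ℂ)) (𝓝 (a⁻¹ * b⁻¹ * c)⁻¹) := by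
    have ht := hslope.inv₀ hg'0
    refine ht.congr fun σ => ?_
    rw [inv_div]
  have hev_g : ∀ᶠ σ in 𝓝[≠] (0:ℂ), g σ ≠ 0 := by
    have h1 : ∀ᶠ σ in 𝓝[≠] (0:ℂ), g σ / σ ≠ 0 := hslope.eventually_ne hg'0
    exact h1.mono fun σ hσ hg' => hσ (by rw [hg', zero_div])
  -- Sherman-Morrison formula
  have hKBK : ∀ σ : ℂ, K * (M σ)⁻¹ * K = (∑ k, conj (h k) * w σ k) • K := by
    intro σ
    rw [hKdef]
    exact rank_one_mul_mul hstar (fun j => conj (h j)) (M σ)⁻¹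
  have hformula : ∀ σ : ℂ, M σ * (M σ)⁻¹ = 1 → g σ ≠ 0 →
      L σ * ((M σ)⁻¹ + (g σ)⁻¹ • ((M σ)⁻¹ * K * (M σ)⁻¹)) = 1 := by
    intro σ h1 hgσ
    have hLM : L σ = M σ - K := by rw [hMdef]; exact (add_sub_cancel_right _ _).symm
    have hsum : (∑ k, conj (h k) * w σ k) = 1 - g σ := by
      rw [hgdef]; ring
    have e1 : M σ * ((g σ)⁻¹ • ((M σ)⁻¹ * K * (M σ)⁻¹)) = (g σ)⁻¹ • (K * (M σ)⁻¹) := by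
      rw [mul_smul_comm, ← mul_assoc, ← mul_assoc, h1, one_mul]
    have e2 : K * ((g σ)⁻¹ • ((M σ)⁻¹ * K * (M σ)⁻¹))
        = ((g σ)⁻¹ * (1 - g σ)) • (K * (M σ)⁻¹) := by
      rw [mul_smul_comm, ← mul_assoc, ← mul_assoc, hKBK σ, hsum, smul_mul_assoc, smul_smul]
    have expand : L σ * ((M σ)⁻¹ + (g σ)⁻¹ • ((M σ)⁻¹ * K * (M σ)⁻¹))
        = 1 + (g σ)⁻¹ • (K * (M σ)⁻¹) - (K * (M σ)⁻¹)
          - ((g σ)⁻¹ * (1 - g σ)) • (K * (M σ)⁻¹) := by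
      rw [hLM, sub_mul, mul_add, mul_add, h1, e1, e2]
      abel
    rw [expand]
    have hsc : (g σ)⁻¹ * (1 - g σ) = (g σ)⁻¹ - 1 := by field_simp
    rw [hsc, sub_smul, one_smul]
    abel
  have hev_unit : ∀ᶠ σ in 𝓝[≠] (0:ℂ), IsUnit (L σ) ∧
      (L σ)⁻¹ = (M σ)⁻¹ + (g σ)⁻¹ • ((M σ)⁻¹ * K * (M σ)⁻¹) := by
    have h1 : ∀ᶠ σ in 𝓝[≠] (0:ℂ), M σ * (M σ)⁻¹ = 1 :=
      (hev_inv.mono fun σ hσ => hσ.1).filter_mono nhdsWithin_le_nhds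
    filter_upwards [h1, hev_g] with σ hMσ hgσ
    have hf := hformula σ hMσ hgσ
    constructor
    · rw [Matrix.isUnit_iff_isUnit_det]
      have hdet1 : (L σ).det * ((M σ)⁻¹ + (g σ)⁻¹ • ((M σ)⁻¹ * K * (M σ)⁻¹)).det = 1 := by
        rw [← Matrix.det_mul, hf, Matrix.det_one]
      exact IsUnit.of_mul_eq_one _ hdet1
    · exact Matrix.inv_eq_right_inv hf
  -- limit value of M⁻¹ K M⁻¹ at 0
  have hMKM0 : (M 0)⁻¹ * K * (M 0)⁻¹
      = (a⁻¹ * b⁻¹) • Matrix.of (fun i j => h i * conj (hstar j)) := by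
    ext i j
    have e1 : ∀ l, ((M 0)⁻¹ * K) i l = a⁻¹ * h i * conj (h l) := by
      intro l
      rw [Matrix.mul_apply]
      have e : ∑ k, (M 0)⁻¹ i k * K k l
          = (∑ k, (M 0)⁻¹ i k * hstar k) * conj (h l) := by
        rw [Finset.sum_mul]
        refine Finset.sum_congr rfl fun k _ => ?_
        simp only [hKdef, Matrix.of_apply]
        ring
      rw [e]
      have e2 : ∑ k, (M 0)⁻¹ i k * hstar k = a⁻¹ * h i := by
        rw [← hwapp 0 i, hw0]
        simp [Pi.smul_apply, smul_eq_mul]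
      rw [e2]
    rw [Matrix.mul_apply]
    calc ∑ l, ((M 0)⁻¹ * K) i l * (M 0)⁻¹ l j
        = (a⁻¹ * h i) * ∑ l, conj (h l) * (M 0)⁻¹ l j := by
          rw [Finset.mul_sum]
          exact Finset.sum_congr rfl fun l _ => by rw [e1 l]; ring
      _ = (a⁻¹ * h i) * (b⁻¹ * conj (hstar j)) := by rw [hrowinv j]
      _ = ((a⁻¹ * b⁻¹) • Matrix.of (fun i j => h i * conj (hstar j))) i j := by
          simp only [Matrix.smul_apply, Matrix.of_apply, smul_eq_mul]
          ring
  have hTarget : (a⁻¹ * b⁻¹ * c)⁻¹ • ((M 0)⁻¹ * K * (M 0)⁻¹)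
      = c⁻¹ • Matrix.of (fun i j : Fin N => h i * conj (hstar j)) := by
    rw [hMKM0, smul_smul]
    congr 1
    field_simp
  -- tendsto assembly
  have tendMat : ∀ (X : ℂ → Matrix (Fin N) (Fin N) ℂ) (X0 : Matrix (Fin N) (Fin N) ℂ),
      (∀ i j, Tendsto (fun σ => X σ i j) (𝓝[≠] (0:ℂ)) (𝓝 (X0 i j))) →
      Tendsto X (𝓝[≠] (0:ℂ)) (𝓝 X0) := by
    intro X X0 hX
    refine tendsto_pi_nhds.mpr ?_
    intro i
    rw [tendsto_pi_nhds]
    exact hX i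
  have hMinvT : Tendsto (fun σ => (M σ)⁻¹) (𝓝[≠] (0:ℂ)) (𝓝 ((M 0)⁻¹)) :=
    tendMat _ _ fun i j => ((hinvdiff i j).continuousAt.tendsto).mono_left nhdsWithin_le_nhds
  have hMKMT : Tendsto (fun σ => (M σ)⁻¹ * K * (M σ)⁻¹) (𝓝[≠] (0:ℂ))
      (𝓝 ((M 0)⁻¹ * K * (M 0)⁻¹)) :=
    (hMinvT.mul tendsto_const_nhds).mul hMinvT
  have hidT : Tendsto (fun σ : ℂ => σ) (𝓝[≠] (0:ℂ)) (𝓝 0) :=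
    tendsto_id.mono_left nhdsWithin_le_nhds
  have hT1 : Tendsto (fun σ : ℂ => σ • (M σ)⁻¹) (𝓝[≠] (0:ℂ)) (𝓝 ((0:ℂ) • (M 0)⁻¹)) :=
    hidT.smul hMinvT
  have hT2 : Tendsto (fun σ : ℂ => (σ / g σ) • ((M σ)⁻¹ * K * (M σ)⁻¹)) (𝓝[≠] (0:ℂ))
      (𝓝 ((a⁻¹ * b⁻¹ * c)⁻¹ • ((M 0)⁻¹ * K * (M 0)⁻¹))) :=
    hinvslope.smul hMKMT
  have hTendsto : Tendsto (fun σ : ℂ => σ • (L σ)⁻¹) (𝓝[≠] (0:ℂ))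
      (𝓝 (c⁻¹ • Matrix.of (fun i j : Fin N => h i * conj (hstar j)))) := by
    have hsum := hT1.add hT2
    rw [zero_smul, zero_add, hTarget] at hsum
    refine Tendsto.congr' ?_ hsum
    filter_upwards [hev_unit] with σ hσ
    rw [hσ.2, smul_add, smul_smul, div_eq_mul_inv]
  -- extract ε
  have hevIsUnit : ∀ᶠ σ in 𝓝[≠] (0:ℂ), IsUnit (L σ) := hev_unit.mono fun σ hσ => hσ.1
  rw [eventually_nhdsWithin_iff, Metric.eventually_nhds_iff] at hevIsUnit
  obtain ⟨ε, hε, hball⟩ := hevIsUnit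
  refine ⟨ε, hε, fun σ hσ hσε => ?_, hTendsto, ?_⟩
  · refine hball ?_ hσ
    rwa [dist_zero_right]
  · obtain ⟨i0, hi0⟩ := Function.ne_iff.mp hh
    obtain ⟨j0, hj0⟩ := Function.ne_iff.mp hhstar
    intro hzero
    have hz : c⁻¹ * (h i0 * conj (hstar j0)) = 0 := by
      simpa using congrFun (congrFun hzero i0) j0
    rcases mul_eq_zero.mp hz with h' | h'
    · exact inv_ne_zero hc0 h'
    · rcases mul_eq_zero.mp h' with h'' | h''
      · exact hi0 h''
      · simp only [map_eq_zero] at h''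
        exact hj0 h''
end
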